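/- arXiv:1903.08525 — 6 statements merged into one kernel-verified Lean document; each statement's English description precedes it below -/
import Mathlib

section
/- Let u : ℝ → ℝ be Lebesgue measurable and locally integrable with finite H^{1/2}(ℝ) seminorm, ‖u‖_{H^{1/2}(ℝ)} < ∞. Then for every a ∈ ℝ, ∫_{[a,∞)} e^{u(x)} dx = ∞ and ∫_{(−∞,a]} e^{u(x)} dx = ∞; in other words, the measure e^{u} dx assigns infinite mass to every unbounded interval. -/
open MeasureTheory
open scoped ENNReal

/-- The squared `H^{1/2}(ℝ)` seminorm
`‖u‖²_{H^{1/2}} = (1/2π²) ∫∫ (u(x)−u(y))²/(x−y)² dx dy`, as a value in `[0,∞]`. -/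
noncomputable def hHalfSeminormSq (u : ℝ → ℝ) : ℝ≥0∞ :=
  ENNReal.ofReal (1 / (2 * Real.pi ^ 2)) *
    ∫⁻ x, ∫⁻ y, ENNReal.ofReal ((u x - u y) ^ 2 / (x - y) ^ 2)

section Aux

open Set Filter

lemma jensen_lintegral (I : Set ℝ) (h0 : volume I ≠ 0) (hfin : volume I ≠ ⊤)
    (f g : ℝ → ℝ) (hf : AEMeasurable f (volume.restrict I)) (hfi : IntegrableOn f I)
    (hg : ConvexOn ℝ Set.univ g) (hgc : Continuous g) (hg0 : ∀ x, 0 ≤ g x) :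
    ENNReal.ofReal (g (⨍ x in I, f x)) * volume I ≤ ∫⁻ x in I, ENNReal.ofReal (g (f x)) := by
  set μ := volume.restrict I with hμ
  have hμu : μ Set.univ = volume I := by simp [hμ]
  haveI : IsFiniteMeasure μ := ⟨by rw [hμu]; exact hfin.lt_top⟩
  haveI : NeZero μ := ⟨fun h => h0 (by rw [← hμu, h]; simp)⟩
  set R := ∫⁻ x in I, ENNReal.ofReal (g (f x)) with hR
  rcases eq_or_ne R ⊤ with hRt | hRt
  · rw [hRt]; exact le_top
  have hgm : AEMeasurable (fun x => g (f x)) μ := hgc.measurable.comp_aemeasurable hf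
  have hgi : Integrable (fun x => g (f x)) μ := by
    refine ⟨hgm.aestronglyMeasurable, ?_⟩
    rw [hasFiniteIntegral_iff_ofReal (ae_of_all _ fun x => hg0 _)]
    exact hRt.lt_top
  have hJ : g (⨍ x, f x ∂μ) ≤ ⨍ x, g (f x) ∂μ :=
    hg.map_average_le hgc.continuousOn isClosed_univ (ae_of_all _ fun x => Set.mem_univ _)
      hfi hgi
  have hint : ∫ x, g (f x) ∂μ = R.toReal := by
    rw [integral_eq_lintegral_of_nonneg_ae (ae_of_all _ fun x => hg0 _) hgm.aestronglyMeasurable]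
  have havg : ⨍ x, g (f x) ∂μ = (volume I).toReal⁻¹ * R.toReal := by
    rw [average_eq, measureReal_def, hμu, hint, smul_eq_mul]
  calc ENNReal.ofReal (g (⨍ x in I, f x)) * volume I
      ≤ ENNReal.ofReal ((volume I).toReal⁻¹ * R.toReal) * volume I := by
        gcongr
        exact hJ.trans_eq havg
    _ = (volume I)⁻¹ * R * volume I := by
        rw [ENNReal.ofReal_mul (by positivity), ENNReal.ofReal_inv_of_pos
          (ENNReal.toReal_pos h0 hfin), ENNReal.ofReal_toReal hfin, ENNReal.ofReal_toReal hRt]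
    _ = R := by
        rw [mul_comm _ R, mul_assoc, ENNReal.inv_mul_cancel h0 hfin, mul_one]

-- average of (c - u) over I'
lemma avg_const_sub (u : ℝ → ℝ) (I' : Set ℝ) (h0 : volume I' ≠ 0) (hfin : volume I' ≠ ⊤)
    (hu' : IntegrableOn u I') (c : ℝ) :
    ⨍ y in I', (c - u y) = c - ⨍ y in I', u y := by
  have hti : (volume I').toReal ≠ 0 := ENNReal.toReal_ne_zero.2 ⟨h0, hfin⟩
  have hconst : IntegrableOn (fun _ : ℝ => c) I' := integrableOn_const hfin
  rw [setAverage_eq, setAverage_eq, integral_sub hconst hu', setIntegral_const]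
  field_simp
  simp only [smul_eq_mul]
  rw [mul_sub, ← mul_assoc, one_div, inv_mul_cancel₀ (show volume.real I' ≠ 0 from hti), one_mul]

lemma meanDiff_sq_le (u : ℝ → ℝ) (hmeas : Measurable u) (I I' : Set ℝ)
    (h0 : volume I ≠ 0) (hfin : volume I ≠ ⊤) (h0' : volume I' ≠ 0) (hfin' : volume I' ≠ ⊤)
    (hu : IntegrableOn u I) (hu' : IntegrableOn u I') :
    ENNReal.ofReal (((⨍ x in I, u x) - ⨍ y in I', u y) ^ 2) * volume I * volume I'
      ≤ ∫⁻ x in I, ∫⁻ y in I', ENNReal.ofReal ((u x - u y) ^ 2) := by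
  set m' := ⨍ y in I', u y with hm'
  have hsq : ConvexOn ℝ Set.univ (fun x : ℝ => x ^ 2) := Even.convexOn_pow even_two
  have hsqc : Continuous (fun x : ℝ => x ^ 2) := by continuity
  have hsq0 : ∀ x : ℝ, 0 ≤ x ^ 2 := fun x => sq_nonneg x
  -- step 1 : outer Jensen
  have havg : ⨍ x in I, (u x - m') = (⨍ x in I, u x) - m' := by
    have h := avg_const_sub (fun x => -u x) I h0 hfin hu.neg (-m')
    simp only [sub_neg_eq_add] at h
    calc ⨍ x in I, (u x - m') = ⨍ x in I, (-m' + u x) := by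
          congr 1; ext x; ring
      _ = -m' - ⨍ y in I, -u y := h
      _ = (⨍ x in I, u x) - m' := by rw [average_neg]; ring
  have step1 : ENNReal.ofReal (((⨍ x in I, u x) - m') ^ 2) * volume I
      ≤ ∫⁻ x in I, ENNReal.ofReal ((u x - m') ^ 2) := by
    have := jensen_lintegral I h0 hfin (fun x => u x - m') (fun x => x ^ 2)
      ((hmeas.sub measurable_const).aemeasurable)
      (hu.sub (integrableOn_const hfin)) hsq hsqc hsq0
    rwa [havg] at this
  -- step 2 : inner Jensen, for every x
  have step2 : ∀ x : ℝ, ENNReal.ofReal ((u x - m') ^ 2) * volume I'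
      ≤ ∫⁻ y in I', ENNReal.ofReal ((u x - u y) ^ 2) := by
    intro x
    have havg' : ⨍ y in I', (u x - u y) = u x - m' :=
      avg_const_sub u I' h0' hfin' hu' (u x)
    have := jensen_lintegral I' h0' hfin' (fun y => u x - u y) (fun z => z ^ 2)
      ((measurable_const.sub hmeas).aemeasurable)
      ((integrableOn_const hfin').sub hu') hsq hsqc hsq0
    rwa [havg'] at this
  calc ENNReal.ofReal (((⨍ x in I, u x) - m') ^ 2) * volume I * volume I'
      ≤ (∫⁻ x in I, ENNReal.ofReal ((u x - m') ^ 2)) * volume I' := by gcongr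
    _ = ∫⁻ x in I, ENNReal.ofReal ((u x - m') ^ 2) * volume I' :=
        (lintegral_mul_const' _ _ hfin').symm
    _ ≤ ∫⁻ x in I, ∫⁻ y in I', ENNReal.ofReal ((u x - u y) ^ 2) :=
        lintegral_mono fun x => step2 x

lemma key (u : ℝ → ℝ) (hmeas : Measurable u)
    (hu : ∀ p q : ℝ, IntegrableOn u (Set.Ico p q))
    (hL : (∫⁻ x, ∫⁻ y, ENNReal.ofReal ((u x - u y) ^ 2 / (x - y) ^ 2)) ≠ ⊤) (a : ℝ) :
    (∫⁻ x in Set.Ici a, ENNReal.ofReal (Real.exp (u x))) = ⊤ := by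
  set L := ∫⁻ x, ∫⁻ y, ENNReal.ofReal ((u x - u y) ^ 2 / (x - y) ^ 2) with hLdef
  set J : ℕ → Set ℝ := fun k => Set.Ico (a + 2 ^ k) (a + 2 ^ (k + 1)) with hJ
  have hvol : ∀ k, volume (J k) = ENNReal.ofReal (2 ^ k) := by
    intro k
    rw [hJ]
    simp only [Real.volume_Ico]
    congr 1
    ring
  have hvol0 : ∀ k, volume (J k) ≠ 0 := by
    intro k
    rw [hvol k]
    exact (ENNReal.ofReal_pos.2 (by positivity)).ne'
  have hvolt : ∀ k, volume (J k) ≠ ⊤ := fun k => by rw [hvol k]; exact ENNReal.ofReal_ne_top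
  have huJ : ∀ k, IntegrableOn u (J k) := fun k => hu _ _
  set m : ℕ → ℝ := fun k => ⨍ x in J k, u x with hm
  set g : ℝ → ℝ≥0∞ := fun x => ∫⁻ y, ENNReal.ofReal ((u x - u y) ^ 2 / (x - y) ^ 2) with hg
  have hgmeas : Measurable g := by
    apply Measurable.lintegral_prod_right
    apply ENNReal.measurable_ofReal.comp
    exact ((hmeas.comp measurable_fst).sub (hmeas.comp measurable_snd)).pow_const 2 |>.div
      (((measurable_fst).sub measurable_snd).pow_const 2)
  set E : ℕ → ℝ≥0∞ := fun k => ∫⁻ x in J k, g x with hE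
  -- claim 1
  have claim1 : ∀ k, ENNReal.ofReal ((m k - m (k + 1)) ^ 2) ≤ ENNReal.ofReal (9 / 2) * E k := by
    intro k
    have h4 : (4 : ℝ) ^ k = 2 ^ k * 2 ^ k := by rw [← mul_pow]; norm_num
    have hD := meanDiff_sq_le u hmeas (J k) (J (k + 1)) (hvol0 k) (hvolt k) (hvol0 (k + 1))
      (hvolt (k + 1)) (huJ k) (huJ (k + 1))
    have hbound : ∀ x ∈ J k, (∫⁻ y in J (k + 1), ENNReal.ofReal ((u x - u y) ^ 2))
        ≤ ENNReal.ofReal (9 * 4 ^ k) * g x := by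
      intro x hx
      rw [hJ] at hx
      have hmono : (∫⁻ y in J (k + 1), ENNReal.ofReal ((u x - u y) ^ 2))
          ≤ ∫⁻ y in J (k + 1),
              ENNReal.ofReal (9 * 4 ^ k) * ENNReal.ofReal ((u x - u y) ^ 2 / (x - y) ^ 2) := by
        have hker : Measurable fun y => ENNReal.ofReal (9 * 4 ^ k) *
            ENNReal.ofReal ((u x - u y) ^ 2 / (x - y) ^ 2) :=
          measurable_const.mul (ENNReal.measurable_ofReal.comp
            (((measurable_const.sub hmeas).pow_const 2).div
              ((measurable_const.sub measurable_id).pow_const 2)))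
        refine setLIntegral_mono hker ?_
        intro y hy
        rw [hJ] at hy
        have h2k : (0:ℝ) < 2 ^ k := by positivity
        have hxy : x < y := lt_of_lt_of_le hx.2 hy.1
        have hyx : y - x < 3 * 2 ^ k := by
          have := hy.2
          have h1 : (2:ℝ) ^ (k + 2) = 4 * 2 ^ k := by ring
          have h2 : (2:ℝ) ^ (k + 1) = 2 * 2 ^ k := by ring
          rw [h1] at this
          linarith [hx.1]
        have hsq : (x - y) ^ 2 ≤ 9 * 4 ^ k := by
          have : (x - y) ^ 2 = (y - x) ^ 2 := by ring
          rw [this, h4]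
          nlinarith [sub_pos.2 hxy]
        have hne : (x - y) ^ 2 ≠ 0 := pow_ne_zero 2 (sub_ne_zero.2 hxy.ne)
        rw [← ENNReal.ofReal_mul (by positivity)]
        apply ENNReal.ofReal_le_ofReal
        calc (u x - u y) ^ 2 = (u x - u y) ^ 2 / (x - y) ^ 2 * (x - y) ^ 2 :=
              (div_mul_cancel₀ _ hne).symm
          _ ≤ (u x - u y) ^ 2 / (x - y) ^ 2 * (9 * 4 ^ k) := by
              apply mul_le_mul_of_nonneg_left hsq (by positivity)
          _ = 9 * 4 ^ k * ((u x - u y) ^ 2 / (x - y) ^ 2) := by ring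
      refine hmono.trans ?_
      rw [lintegral_const_mul' _ _ ENNReal.ofReal_ne_top]
      gcongr
      rw [hg]
      exact setLIntegral_le_lintegral _ _
    have hDE : (∫⁻ x in J k, ∫⁻ y in J (k + 1), ENNReal.ofReal ((u x - u y) ^ 2))
        ≤ ENNReal.ofReal (9 * 4 ^ k) * E k := by
      calc (∫⁻ x in J k, ∫⁻ y in J (k + 1), ENNReal.ofReal ((u x - u y) ^ 2))
          ≤ ∫⁻ x in J k, ENNReal.ofReal (9 * 4 ^ k) * g x :=
            setLIntegral_mono (measurable_const.mul hgmeas) hbound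
        _ = ENNReal.ofReal (9 * 4 ^ k) * E k := by
            rw [hE, lintegral_const_mul' _ _ ENNReal.ofReal_ne_top]
    have hfinal := hD.trans hDE
    have hc : ENNReal.ofReal (2 ^ k * 2 ^ (k + 1)) ≠ 0 := by
      refine (ENNReal.ofReal_pos.2 (by positivity)).ne'
    have hct : ENNReal.ofReal ((2:ℝ) ^ k * 2 ^ (k + 1)) ≠ ⊤ := ENNReal.ofReal_ne_top
    rw [← ENNReal.mul_le_mul_iff_left hc hct]
    calc ENNReal.ofReal ((m k - m (k + 1)) ^ 2) * ENNReal.ofReal (2 ^ k * 2 ^ (k + 1))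
        = ENNReal.ofReal ((m k - m (k + 1)) ^ 2) * volume (J k) * volume (J (k + 1)) := by
          rw [hvol, hvol, mul_assoc, ENNReal.ofReal_mul (by positivity : (0:ℝ) ≤ (2:ℝ) ^ k)]
      _ ≤ ENNReal.ofReal (9 * 4 ^ k) * E k := by rw [hm] at *; exact hfinal
      _ = ENNReal.ofReal (9 / 2) * E k * ENNReal.ofReal (2 ^ k * 2 ^ (k + 1)) := by
          rw [mul_right_comm, ← ENNReal.ofReal_mul (by norm_num)]
          congr 2
          have h2 : (2:ℝ) ^ (k + 1) = 2 * 2 ^ k := by ring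
          rw [h2, h4]; ring
  -- claim 2 : sum of E is at most L
  have claim2 : (∑' k, E k) ≤ L := by
    have hdisj : Pairwise (Function.onFun Disjoint J) := by
      have hlt : ∀ i j : ℕ, i < j → Disjoint (J i) (J j) := by
        intro i j hij
        rw [hJ, Set.Ico_disjoint_Ico]
        have h1 : (2:ℝ) ^ (i + 1) ≤ 2 ^ j := by
          apply pow_le_pow_right₀ one_le_two hij
        exact min_le_of_left_le (le_max_of_le_right (by linarith))
      intro i j hij
      rcases hij.lt_or_gt with h | h
      · exact hlt i j h
      · exact (hlt j i h).symm
    rw [hE, hLdef, hg]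
    rw [← lintegral_iUnion (fun k => by rw [hJ]; exact measurableSet_Ico) hdisj]
    exact setLIntegral_le_lintegral _ _
  set C : ℝ := (ENNReal.ofReal (9 / 2) * L).toReal with hC
  have hC0 : 0 ≤ C := ENNReal.toReal_nonneg
  have hpartial : ∀ k : ℕ, (∑ j ∈ Finset.range k, (m j - m (j + 1)) ^ 2) ≤ C := by
    intro k
    have hRt : ENNReal.ofReal (9 / 2) * L ≠ ⊤ := ENNReal.mul_ne_top ENNReal.ofReal_ne_top hL
    have hS : (∑ j ∈ Finset.range k, ENNReal.ofReal ((m j - m (j + 1)) ^ 2))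
        ≤ ENNReal.ofReal (9 / 2) * L := by
      calc (∑ j ∈ Finset.range k, ENNReal.ofReal ((m j - m (j + 1)) ^ 2))
          ≤ ∑' j, ENNReal.ofReal ((m j - m (j + 1)) ^ 2) := ENNReal.sum_le_tsum _
        _ ≤ ∑' j, ENNReal.ofReal (9 / 2) * E j := ENNReal.tsum_le_tsum claim1
        _ = ENNReal.ofReal (9 / 2) * ∑' j, E j := ENNReal.tsum_mul_left
        _ ≤ ENNReal.ofReal (9 / 2) * L := by gcongr
    have heq : ENNReal.ofReal (∑ j ∈ Finset.range k, (m j - m (j + 1)) ^ 2)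
        = ∑ j ∈ Finset.range k, ENNReal.ofReal ((m j - m (j + 1)) ^ 2) :=
      ENNReal.ofReal_sum_of_nonneg fun j _ => sq_nonneg _
    have hmono := ENNReal.toReal_mono hRt (heq ▸ hS)
    rwa [ENNReal.toReal_ofReal (Finset.sum_nonneg fun j _ => sq_nonneg _)] at hmono
  have hmk : ∀ k : ℕ, m 0 - Real.sqrt (k * C) ≤ m k := by
    intro k
    have htel : m 0 - m k = ∑ j ∈ Finset.range k, (m j - m (j + 1)) :=
      (Finset.sum_range_sub' m k).symm
    have h1 : m 0 - m k ≤ ∑ j ∈ Finset.range k, |m j - m (j + 1)| := by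
      rw [htel]; exact Finset.sum_le_sum fun j _ => le_abs_self _
    have hcs := Finset.sum_mul_sq_le_sq_mul_sq (Finset.range k) (fun _ => (1:ℝ))
      (fun j => |m j - m (j + 1)|)
    simp only [one_pow, one_mul, sq_abs, Finset.sum_const, Finset.card_range, nsmul_eq_mul,
      mul_one] at hcs
    have h2 : (∑ j ∈ Finset.range k, |m j - m (j + 1)|) ^ 2 ≤ k * C := by
      calc (∑ j ∈ Finset.range k, |m j - m (j + 1)|) ^ 2
          ≤ (k : ℝ) * ∑ j ∈ Finset.range k, (m j - m (j + 1)) ^ 2 := hcs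
        _ ≤ k * C := by
            apply mul_le_mul_of_nonneg_left (hpartial k) (Nat.cast_nonneg k)
    have h3 : (∑ j ∈ Finset.range k, |m j - m (j + 1)|) ≤ Real.sqrt (k * C) := by
      rw [Real.le_sqrt (Finset.sum_nonneg fun j _ => abs_nonneg _)
        (by positivity : (0:ℝ) ≤ k * C)]
      exact h2
    linarith
  -- Jensen for exp
  have hexp : ∀ k : ℕ, ENNReal.ofReal (2 ^ k * Real.exp (m 0 - Real.sqrt (k * C)))
      ≤ ∫⁻ x in Set.Ici a, ENNReal.ofReal (Real.exp (u x)) := by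
    intro k
    have hJen := jensen_lintegral (J k) (hvol0 k) (hvolt k) u Real.exp hmeas.aemeasurable
      (huJ k) convexOn_exp Real.continuous_exp (fun x => (Real.exp_pos x).le)
    have hsub : J k ⊆ Set.Ici a := by
      rw [hJ]
      intro x hx
      have hp : (0:ℝ) < 2 ^ k := by positivity
      exact le_trans (by linarith) hx.1
    calc ENNReal.ofReal (2 ^ k * Real.exp (m 0 - Real.sqrt (k * C)))
        = ENNReal.ofReal (Real.exp (m 0 - Real.sqrt (k * C))) * ENNReal.ofReal (2 ^ k) := by
          rw [← ENNReal.ofReal_mul (by positivity)]; ring_nf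
      _ ≤ ENNReal.ofReal (Real.exp (m k)) * volume (J k) := by
          rw [hvol]
          gcongr
          exact hmk k
      _ ≤ ∫⁻ x in J k, ENNReal.ofReal (Real.exp (u x)) := hJen
      _ ≤ ∫⁻ x in Set.Ici a, ENNReal.ofReal (Real.exp (u x)) := lintegral_mono_set hsub
  -- conclusion
  by_contra hT
  set T := ∫⁻ x in Set.Ici a, ENNReal.ofReal (Real.exp (u x)) with hTdef
  have hTlt : T < ⊤ := lt_top_iff_ne_top.2 hT
  have hgrow : ∃ k : ℕ, T.toReal + 1 ≤ 2 ^ k * Real.exp (m 0 - Real.sqrt (k * C)) := by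
    set c := Real.log 2 with hc
    have hcpos : 0 < c := Real.log_pos one_lt_two
    set r' := max (T.toReal + 1) 1 with hr'
    have hr'pos : 0 < r' := lt_of_lt_of_le one_pos (le_max_right _ _)
    obtain ⟨k, hk⟩ := exists_nat_ge (max (4 * C / c ^ 2) (2 * (Real.log r' - m 0) / c))
    have hk1 : 4 * C / c ^ 2 ≤ k := le_trans (le_max_left _ _) hk
    have hk2 : 2 * (Real.log r' - m 0) / c ≤ k := le_trans (le_max_right _ _) hk
    have hkC : Real.sqrt (k * C) ≤ k * c / 2 := by
      have h1 : (k:ℝ) * C ≤ (k * c / 2) ^ 2 := by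
        have h2 : 4 * C ≤ k * c ^ 2 := by
          rw [div_le_iff₀ (by positivity)] at hk1; linarith
        nlinarith [(Nat.cast_nonneg k : (0:ℝ) ≤ k)]
      calc Real.sqrt (k * C) ≤ Real.sqrt ((k * c / 2) ^ 2) := Real.sqrt_le_sqrt h1
        _ = k * c / 2 := Real.sqrt_sq (by positivity)
    have h2k : (2:ℝ) ^ k = Real.exp (k * c) := by
      rw [hc, Real.exp_nat_mul, Real.exp_log two_pos]
    have hlog : Real.log r' ≤ k * c / 2 + m 0 := by
      rw [div_le_iff₀ hcpos] at hk2; linarith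
    refine ⟨k, ?_⟩
    calc T.toReal + 1 ≤ r' := le_max_left _ _
      _ = Real.exp (Real.log r') := (Real.exp_log hr'pos).symm
      _ ≤ Real.exp (k * c / 2 + m 0) := Real.exp_le_exp.2 hlog
      _ ≤ Real.exp (k * c + (m 0 - Real.sqrt (k * C))) := Real.exp_le_exp.2 (by linarith)
      _ = 2 ^ k * Real.exp (m 0 - Real.sqrt (k * C)) := by rw [Real.exp_add, h2k]
  obtain ⟨k, hk⟩ := hgrow
  have : ENNReal.ofReal (T.toReal + 1) ≤ T := le_trans (ENNReal.ofReal_le_ofReal hk) (hexp k)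
  have h2 : T < ENNReal.ofReal (T.toReal + 1) := by
    conv_lhs => rw [← ENNReal.ofReal_toReal hT]
    exact ENNReal.ofReal_lt_ofReal_iff_of_nonneg ENNReal.toReal_nonneg |>.2 (by linarith)
  exact absurd (h2.trans_le this) (lt_irrefl T)

end Aux

section Main
open Set Filter

/-- If `u : ℝ → ℝ` is measurable, locally integrable, and has finite `H^{1/2}(ℝ)` seminorm,
then the measure `e^u dx` gives infinite mass to every unbounded interval. -/
theorem exp_of_hHalf_infinite_mass_on_unbounded_intervals
    (u : ℝ → ℝ) (hmeas : Measurable u) (hloc : LocallyIntegrable u volume)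
    (hfin : hHalfSeminormSq u < ⊤) (a : ℝ) :
    (∫⁻ x in Set.Ici a, ENNReal.ofReal (Real.exp (u x))) = ⊤ ∧
    (∫⁻ x in Set.Iic a, ENNReal.ofReal (Real.exp (u x))) = ⊤ := by
  have hu : ∀ p q : ℝ, IntegrableOn u (Set.Ico p q) := fun p q =>
    (hloc.integrableOn_isCompact isCompact_Icc).mono_set Set.Ico_subset_Icc_self
  have hL : (∫⁻ x, ∫⁻ y, ENNReal.ofReal ((u x - u y) ^ 2 / (x - y) ^ 2)) ≠ ⊤ := by
    intro h
    rw [hHalfSeminormSq, h, ENNReal.mul_top] at hfin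
    · exact absurd hfin (lt_irrefl _)
    · exact (ENNReal.ofReal_pos.2 (by positivity)).ne'
  refine ⟨key u hmeas hu hL a, ?_⟩
  -- reflection
  set v : ℝ → ℝ := fun x => u (-x) with hv
  have hmeas_v : Measurable v := hmeas.comp measurable_neg
  have hmp : MeasurePreserving (fun x : ℝ => -x) volume volume :=
    Measure.measurePreserving_neg _
  have hemb : MeasurableEmbedding (fun x : ℝ => -x) := (Homeomorph.neg ℝ).measurableEmbedding
  have hu_v : ∀ p q : ℝ, IntegrableOn v (Set.Ico p q) := by
    intro p q
    have hpre : (fun x : ℝ => -x) ⁻¹' (Set.Ioc (-q) (-p)) = Set.Ico p q := by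
      ext x
      simp only [Set.mem_preimage, Set.mem_Ioc, Set.mem_Ico]
      constructor
      · rintro ⟨h1, h2⟩; constructor <;> linarith
      · rintro ⟨h1, h2⟩; constructor <;> linarith
    have hIoc : IntegrableOn u (Set.Ioc (-q) (-p)) :=
      (hu (-q) (-p + 1)).mono_set
        (fun x hx => ⟨hx.1.le, lt_of_le_of_lt hx.2 (by linarith)⟩)
    have := (hmp.integrableOn_comp_preimage hemb).2 hIoc
    rwa [hpre] at this
  have hkernel_meas : Measurable fun p : ℝ × ℝ =>
      ENNReal.ofReal ((u p.1 - u p.2) ^ 2 / (p.1 - p.2) ^ 2) :=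
    ENNReal.measurable_ofReal.comp
      (((hmeas.comp measurable_fst).sub (hmeas.comp measurable_snd)).pow_const 2 |>.div
        ((measurable_fst.sub measurable_snd).pow_const 2))
  have hL_v : (∫⁻ x, ∫⁻ y, ENNReal.ofReal ((v x - v y) ^ 2 / (x - y) ^ 2)) ≠ ⊤ := by
    have hinner : ∀ x : ℝ, (∫⁻ y, ENNReal.ofReal ((v x - v y) ^ 2 / (x - y) ^ 2))
        = ∫⁻ y, ENNReal.ofReal ((u (-x) - u y) ^ 2 / (-x - y) ^ 2) := by
      intro x
      have := hmp.lintegral_comp (f := fun y => ENNReal.ofReal ((u (-x) - u y) ^ 2 / (-x - y) ^ 2))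
        (ENNReal.measurable_ofReal.comp (((measurable_const.sub hmeas).pow_const 2).div
          ((measurable_const.sub measurable_id).pow_const 2)))
      rw [← this]
      congr 1
      ext y
      congr 2
      ring_nf
    have houter : (∫⁻ x, ∫⁻ y, ENNReal.ofReal ((v x - v y) ^ 2 / (x - y) ^ 2))
        = ∫⁻ x, ∫⁻ y, ENNReal.ofReal ((u x - u y) ^ 2 / (x - y) ^ 2) := by
      simp_rw [hinner]
      have hg2 : Measurable fun x : ℝ => ∫⁻ y,
          ENNReal.ofReal ((u x - u y) ^ 2 / (x - y) ^ 2) :=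
        hkernel_meas.lintegral_prod_right'
      exact hmp.lintegral_comp hg2
    rw [houter]
    exact hL
  have hset : (∫⁻ x in Set.Ici (-a), ENNReal.ofReal (Real.exp (v x)))
      = ∫⁻ x in Set.Iic a, ENNReal.ofReal (Real.exp (u x)) := by
    have hpre : (fun x : ℝ => -x) ⁻¹' (Set.Iic a) = Set.Ici (-a) := by
      ext x; simp only [Set.mem_preimage, Set.mem_Iic, Set.mem_Ici]; constructor <;> intro h <;> linarith
    have := hmp.setLIntegral_comp_preimage_emb hemb
      (fun x => ENNReal.ofReal (Real.exp (u x)))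
      (Set.Iic a)
    rw [hpre] at this
    exact this
  rw [← hset]
  exact key v hmeas_v hu_v hL_v (-a)

end Main
end

section
/- Let u : ℝ → ℝ be integrable on (0,1] and have vanishing mean oscillation on (0,1], in the sense that for every ε > 0 there exists δ > 0 such that every interval I ⊆ (0,1] with 0 < |I| ≤ δ satisfies (1/|I|)∫_I |u − u_I| dx ≤ ε. Then for every δ ∈ (0,1], ∫_0^δ e^{u(x)} x^{−2} dx = ∞. -/
open MeasureTheory
open scoped ENNReal

open Set in
lemma jensen_exp (u : ℝ → ℝ) (hmeas : Measurable u) {a b : ℝ} (hab : a < b)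
    (hu : IntegrableOn u (Ioc a b)) :
    ENNReal.ofReal ((b - a) * Real.exp ((1/(b-a)) * ∫ x in Ioc a b, u x)) ≤
      ∫⁻ x in Ioc a b, ENNReal.ofReal (Real.exp (u x)) := by
  have hba : (0:ℝ) < b - a := sub_pos.2 hab
  set μ := volume.restrict (Ioc a b) with hμ
  have hμuniv : μ Set.univ = ENNReal.ofReal (b - a) := by
    simp [hμ, Real.volume_Ioc]
  haveI : IsFiniteMeasure μ := ⟨by rw [hμuniv]; exact ENNReal.ofReal_lt_top⟩
  haveI : NeZero μ := ⟨by
    intro h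
    rw [h] at hμuniv
    simp only [Measure.coe_zero, Pi.zero_apply] at hμuniv
    exact (ENNReal.ofReal_pos.2 hba).ne' hμuniv.symm⟩
  by_cases hE : Integrable (fun x => Real.exp (u x)) μ
  · have hJ := convexOn_exp.map_average_le Real.continuous_exp.continuousOn isClosed_univ
      (Filter.Eventually.of_forall fun x => Set.mem_univ _) hu hE
    rw [average_eq, average_eq, measureReal_def, ← hμ, hμuniv, ENNReal.toReal_ofReal hba.le] at hJ
    simp only [smul_eq_mul, Function.comp] at hJ
    rw [← ofReal_integral_eq_lintegral_ofReal hE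
      (Filter.Eventually.of_forall fun x => (Real.exp_pos _).le)]
    apply ENNReal.ofReal_le_ofReal
    rw [one_div]
    calc (b - a) * Real.exp ((b-a)⁻¹ * ∫ x, u x ∂μ) ≤ (b-a) * ((b-a)⁻¹ * ∫ x, Real.exp (u x) ∂μ) := by
          exact mul_le_mul_of_nonneg_left hJ hba.le
      _ = ∫ x, Real.exp (u x) ∂μ := by field_simp
  · have hmE : Measurable fun x => Real.exp (u x) := Real.measurable_exp.comp hmeas
    have : ¬ HasFiniteIntegral (fun x => Real.exp (u x)) μ := by
      intro h
      exact hE ⟨hmE.aestronglyMeasurable, h⟩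
    rw [hasFiniteIntegral_iff_ofReal (Filter.Eventually.of_forall fun x => (Real.exp_pos _).le)]
      at this
    rw [not_lt, top_le_iff] at this
    rw [this]
    exact le_top

open Set in
lemma avg_sub_avg (u : ℝ → ℝ) {a b c d : ℝ} (hac : a ≤ c) (hcd : c < d) (hdb : d ≤ b)
    (hu : IntegrableOn u (Ioc a b)) :
    |(1/(d-c)) * (∫ x in Ioc c d, u x) - (1/(b-a)) * ∫ x in Ioc a b, u x| ≤
      ((b-a)/(d-c)) * ((1/(b-a)) * ∫ x in Ioc a b, |u x - (1/(b-a)) * ∫ y in Ioc a b, u y|) := by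
  have hab : a < b := lt_of_le_of_lt hac (lt_of_lt_of_le hcd hdb)
  have hba : (0:ℝ) < b - a := sub_pos.2 hab
  have hdc : (0:ℝ) < d - c := sub_pos.2 hcd
  set m : ℝ := (1/(b-a)) * ∫ x in Ioc a b, u x with hm
  have hsub : Ioc c d ⊆ Ioc a b := Ioc_subset_Ioc hac hdb
  have huI : IntegrableOn u (Ioc c d) := hu.mono_set hsub
  have hmint : IntegrableOn (fun _ => m) (Ioc c d) := by
    refine integrableOn_const ?_
    rw [Real.volume_Ioc]; exact ENNReal.ofReal_ne_top
  have hconst : ∫ _x in Ioc c d, m = (d - c) * m := by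
    rw [setIntegral_const, measureReal_def, Real.volume_Ioc, ENNReal.toReal_ofReal hdc.le, smul_eq_mul]
  have habs_int : IntegrableOn (fun x => |u x - m|) (Ioc a b) := by
    apply Integrable.abs
    apply hu.sub
    refine integrableOn_const ?_
    rw [Real.volume_Ioc]; exact ENNReal.ofReal_ne_top
  have key : (1/(d-c)) * (∫ x in Ioc c d, u x) - m
      = (1/(d-c)) * ∫ x in Ioc c d, (u x - m) := by
    rw [integral_sub huI hmint, hconst]
    field_simp
  rw [key, abs_mul, abs_of_pos (by positivity : (0:ℝ) < 1/(d-c))]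
  have h1 : |∫ x in Ioc c d, (u x - m)| ≤ ∫ x in Ioc c d, |u x - m| := by
    simpa [Real.norm_eq_abs] using
      norm_integral_le_integral_norm (μ := volume.restrict (Ioc c d)) (fun x => u x - m)
  have h2 : ∫ x in Ioc c d, |u x - m| ≤ ∫ x in Ioc a b, |u x - m| :=
    setIntegral_mono_set habs_int (Filter.Eventually.of_forall fun x => abs_nonneg _)
      (HasSubset.Subset.eventuallyLE hsub)
  have hRHS : ((b-a)/(d-c)) * ((1/(b-a)) * ∫ x in Ioc a b, |u x - m|) =
      (1/(d-c)) * ∫ x in Ioc a b, |u x - m| := by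
    field_simp
  rw [hRHS]
  exact mul_le_mul_of_nonneg_left (h1.trans h2) (by positivity)

/-- If `u` is integrable on `(0,1]` and has vanishing mean oscillation on `(0,1]`,
then `∫_0^δ e^{u(x)} x^{−2} dx = ∞` for every `δ ∈ (0,1]`. -/
theorem exp_vmo_div_sq_not_integrable
    (u : ℝ → ℝ) (hmeas : Measurable u)
    (hint : IntegrableOn u (Set.Ioc 0 1) volume)
    (hvmo : ∀ ε > (0:ℝ), ∃ δ > (0:ℝ), ∀ a b : ℝ, 0 ≤ a → a < b → b ≤ 1 → b - a ≤ δ →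
      (1 / (b - a)) * ∫ x in Set.Ioc a b,
          |u x - (1 / (b - a)) * ∫ y in Set.Ioc a b, u y| ≤ ε) :
    ∀ δ : ℝ, 0 < δ → δ ≤ 1 →
      (∫⁻ x in Set.Ioc (0:ℝ) δ, ENNReal.ofReal (Real.exp (u x) / x ^ 2)) = ⊤ := by
  intro δ hδ0 hδ1
  have hpow : ∀ k : ℕ, (0:ℝ) < 2^k := fun k => pow_pos two_pos k
  set m : ℕ → ℝ := fun k =>
    (1/(δ/2^k - δ/2^(k+1))) * ∫ x in Set.Ioc (δ/2^(k+1)) (δ/2^k), u x with hmdef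
  have hlt : ∀ k : ℕ, δ/2^(k+1) < δ/2^k := by
    intro k
    apply div_lt_div_of_pos_left hδ0 (hpow k)
    exact pow_lt_pow_right₀ one_lt_two (Nat.lt_succ_self k)
  have h2le : ∀ j k : ℕ, j ≤ k → δ/2^k ≤ δ/2^j := by
    intro j k hjk
    exact div_le_div_of_nonneg_left hδ0.le (hpow j) (pow_le_pow_right₀ one_le_two hjk)
  have hle1 : ∀ k : ℕ, δ/2^k ≤ 1 := by
    intro k
    calc δ/2^k ≤ δ/2^0 := h2le 0 k (Nat.zero_le k)
      _ = δ := by norm_num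
      _ ≤ 1 := hδ1
  have hsub01 : ∀ j k : ℕ, Set.Ioc (δ/2^k) (δ/2^j) ⊆ Set.Ioc 0 1 := by
    intro j k
    exact Set.Ioc_subset_Ioc (by positivity) (hle1 j)
  have hu_k : ∀ k : ℕ, IntegrableOn u (Set.Ioc (δ/2^(k+1)) (δ/2^k)) :=
    fun k => hint.mono_set (hsub01 k (k+1))
  -- lower bound via Jensen
  have hlow : ∀ k : ℕ, ENNReal.ofReal (2^k/(2*δ) * Real.exp (m k)) ≤
      ∫⁻ x in Set.Ioc (0:ℝ) δ, ENNReal.ofReal (Real.exp (u x) / x ^ 2) := by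
    intro k
    have hsubδ : Set.Ioc (δ/2^(k+1)) (δ/2^k) ⊆ Set.Ioc 0 δ :=
      Set.Ioc_subset_Ioc (by positivity) (div_le_self hδ0.le (one_le_pow₀ one_le_two))
    refine le_trans ?_ (lintegral_mono_set hsubδ)
    have hpt : ∀ x ∈ Set.Ioc (δ/2^(k+1)) (δ/2^k),
        ENNReal.ofReal ((2^k)^2/δ^2) * ENNReal.ofReal (Real.exp (u x)) ≤
          ENNReal.ofReal (Real.exp (u x) / x^2) := by
      intro x hx
      have hx0 : (0:ℝ) < x := lt_trans (by positivity) hx.1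
      have hxd : (2:ℝ)^k * x ≤ δ := by
        rw [← le_div_iff₀' (hpow k)]
        exact hx.2
      rw [← ENNReal.ofReal_mul (by positivity)]
      apply ENNReal.ofReal_le_ofReal
      have h1 : ((2:ℝ)^k)^2/δ^2 ≤ 1/x^2 := by
        rw [div_le_div_iff₀ (by positivity) (by positivity)]
        nlinarith [mul_self_le_mul_self (by positivity : (0:ℝ) ≤ 2^k * x) hxd]
      calc ((2:ℝ)^k)^2/δ^2 * Real.exp (u x) ≤ (1/x^2) * Real.exp (u x) :=
            mul_le_mul_of_nonneg_right h1 (Real.exp_pos _).le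
        _ = Real.exp (u x)/x^2 := by ring
    calc ENNReal.ofReal (2^k/(2*δ) * Real.exp (m k))
        = ENNReal.ofReal ((2^k)^2/δ^2) *
            ENNReal.ofReal ((δ/2^k - δ/2^(k+1)) * Real.exp (m k)) := by
          rw [← ENNReal.ofReal_mul (by positivity)]
          congr 1
          rw [pow_succ]
          field_simp
          ring
      _ ≤ ENNReal.ofReal ((2^k)^2/δ^2) *
            ∫⁻ x in Set.Ioc (δ/2^(k+1)) (δ/2^k), ENNReal.ofReal (Real.exp (u x)) := by
          exact mul_le_mul_right (jensen_exp u hmeas (hlt k) (hu_k k)) _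
      _ = ∫⁻ x in Set.Ioc (δ/2^(k+1)) (δ/2^k),
            ENNReal.ofReal ((2^k)^2/δ^2) * ENNReal.ofReal (Real.exp (u x)) := by
          have hmexp : Measurable fun x : ℝ => ENNReal.ofReal (Real.exp (u x)) := by
            exact (Real.measurable_exp.comp hmeas).ennreal_ofReal
          rw [lintegral_const_mul _ hmexp]
      _ ≤ ∫⁻ x in Set.Ioc (δ/2^(k+1)) (δ/2^k), ENNReal.ofReal (Real.exp (u x) / x^2) :=
          setLIntegral_mono' measurableSet_Ioc hpt
  -- VMO step
  obtain ⟨δ₀, hδ₀pos, hδ₀⟩ := hvmo (Real.log 2 / 9)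
    (div_pos (Real.log_pos one_lt_two) (by norm_num))
  obtain ⟨K, hK⟩ := pow_unbounded_of_one_lt (δ/δ₀) (one_lt_two : (1:ℝ) < 2)
  have hKδ : δ/2^K ≤ δ₀ := by
    rw [div_lt_iff₀ hδ₀pos] at hK
    rw [div_le_iff₀ (hpow K)]
    nlinarith
  have hstep : ∀ k, K ≤ k → |m (k+1) - m k| ≤ Real.log 2 / 2 := by
    intro k hk
    have hne : δ/2^k - δ/2^(k+1) ≠ 0 := (sub_pos.2 (hlt k)).ne'
    have hne2 : δ/2^(k+1) - δ/2^(k+2) ≠ 0 := (sub_pos.2 (hlt (k+1))).ne'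
    have hmono1 : δ/2^(k+2) < δ/2^k := lt_trans (hlt (k+1)) (hlt k)
    have huJ : IntegrableOn u (Set.Ioc (δ/2^(k+2)) (δ/2^k)) := hint.mono_set (hsub01 k (k+2))
    have hosc := hδ₀ (δ/2^(k+2)) (δ/2^k) (by positivity) hmono1 (hle1 k)
      (by
        have h1 : δ/2^k - δ/2^(k+2) ≤ δ/2^k := by
          have : (0:ℝ) ≤ δ/2^(k+2) := by positivity
          linarith
        exact h1.trans ((h2le K k hk).trans hKδ))
    set oscB : ℝ := (1 / (δ/2^k - δ/2^(k+2))) * ∫ x in Set.Ioc (δ/2^(k+2)) (δ/2^k),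
        |u x - (1 / (δ/2^k - δ/2^(k+2))) * ∫ y in Set.Ioc (δ/2^(k+2)) (δ/2^k), u y| with hoscdef
    have hoscnn : 0 ≤ oscB := by
      apply mul_nonneg (le_of_lt (one_div_pos.2 (sub_pos.2 hmono1)))
      exact setIntegral_nonneg measurableSet_Ioc (fun x _ => abs_nonneg _)
    have h1 := avg_sub_avg u (le_of_lt (hlt (k+1))) (hlt k) (le_refl (δ/2^k)) huJ
    have h2 := avg_sub_avg u (le_refl (δ/2^(k+2))) (hlt (k+1)) (le_of_lt (hlt k)) huJ
    have hrat1 : (δ/2^k - δ/2^(k+2))/(δ/2^k - δ/2^(k+1)) = 3/2 := by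
      rw [div_eq_iff hne, pow_succ, pow_succ]
      field_simp
      ring
    have hrat2 : (δ/2^k - δ/2^(k+2))/(δ/2^(k+1) - δ/2^(k+2)) = 3 := by
      rw [div_eq_iff hne2, pow_succ, pow_succ]
      field_simp
      ring
    rw [hrat1] at h1
    rw [hrat2] at h2
    have htri : |m (k+1) - m k| ≤ |m (k+1) - (1/(δ/2^k - δ/2^(k+2))) *
        ∫ x in Set.Ioc (δ/2^(k+2)) (δ/2^k), u x| + |(1/(δ/2^k - δ/2^(k+2))) *
        (∫ x in Set.Ioc (δ/2^(k+2)) (δ/2^k), u x) - m k| := by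
      have := abs_sub_le (m (k+1)) ((1/(δ/2^k - δ/2^(k+2))) *
        ∫ x in Set.Ioc (δ/2^(k+2)) (δ/2^k), u x) (m k)
      simpa using this
    have hmk : m k = (1/(δ/2^k - δ/2^(k+1))) * ∫ x in Set.Ioc (δ/2^(k+1)) (δ/2^k), u x := rfl
    have hmk1 : m (k+1) = (1/(δ/2^(k+1) - δ/2^(k+2))) *
        ∫ x in Set.Ioc (δ/2^(k+2)) (δ/2^(k+1)), u x := rfl
    rw [hmk, hmk1]
    have e2 : |(1/(δ/2^(k+1) - δ/2^(k+2))) * (∫ x in Set.Ioc (δ/2^(k+2)) (δ/2^(k+1)), u x) -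
        (1/(δ/2^k - δ/2^(k+2))) * ∫ x in Set.Ioc (δ/2^(k+2)) (δ/2^k), u x| ≤ 3 * oscB := h2
    have e1 : |(1/(δ/2^k - δ/2^(k+1))) * (∫ x in Set.Ioc (δ/2^(k+1)) (δ/2^k), u x) -
        (1/(δ/2^k - δ/2^(k+2))) * ∫ x in Set.Ioc (δ/2^(k+2)) (δ/2^k), u x| ≤ (3/2) * oscB := h1
    rw [abs_sub_comm] at e1
    rw [hmk, hmk1] at htri
    have hosc' : oscB ≤ Real.log 2 / 9 := hosc
    calc |_ - _| ≤ _ := htri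
      _ ≤ 3 * oscB + (3/2) * oscB := add_le_add e2 e1
      _ ≤ Real.log 2 / 2 := by linarith
  -- chain
  have hchain : ∀ n : ℕ, m K - n * (Real.log 2 / 2) ≤ m (K + n) := by
    intro n
    induction n with
    | zero => simp
    | succ n ih =>
      have hs := (abs_le.1 (hstep (K+n) (Nat.le_add_right K n))).1
      have : m (K+n) - Real.log 2 / 2 ≤ m (K+n+1) := by linarith
      have hKn : K + (n+1) = (K+n)+1 := rfl
      rw [hKn]
      push_cast
      linarith
  -- conclusion
  apply ENNReal.eq_top_of_forall_nnreal_le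
  intro r
  set C : ℝ := 2^K/(2*δ) * Real.exp (m K) * (Real.log 2 / 2) with hC
  have hCpos : 0 < C := by
    apply mul_pos (mul_pos (by positivity) (Real.exp_pos _))
    exact div_pos (Real.log_pos one_lt_two) (by norm_num)
  obtain ⟨n, hn⟩ := exists_nat_ge ((r:ℝ)/C)
  have hrn : (r:ℝ) ≤ C * n := by
    rw [div_le_iff₀ hCpos] at hn
    linarith
  have hval : C * n ≤ 2^(K+n)/(2*δ) * Real.exp (m (K+n)) := by
    have e1 : Real.exp (m K - n*(Real.log 2/2)) ≤ Real.exp (m (K+n)) :=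
      Real.exp_le_exp.2 (by linarith [hchain n])
    have e2 : (n:ℝ)*(Real.log 2/2) + 1 ≤ Real.exp ((n:ℝ)*(Real.log 2/2)) :=
      Real.add_one_le_exp _
    have e3 : (2:ℝ)^n * Real.exp (-((n:ℝ)*(Real.log 2/2))) =
        Real.exp ((n:ℝ)*(Real.log 2/2)) := by
      rw [show ((2:ℝ)^n) = Real.exp ((n:ℝ) * Real.log 2) from by
        rw [Real.exp_nat_mul, Real.exp_log two_pos], ← Real.exp_add]
      congr 1
      ring
    calc C * n = (2^K/(2*δ) * Real.exp (m K)) * ((n:ℝ)*(Real.log 2/2)) := by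
          rw [hC]; ring
      _ ≤ (2^K/(2*δ) * Real.exp (m K)) * Real.exp ((n:ℝ)*(Real.log 2/2)) := by
          apply mul_le_mul_of_nonneg_left (by linarith) (by positivity)
      _ = 2^(K+n)/(2*δ) * Real.exp (m K - (n:ℝ)*(Real.log 2/2)) := by
          rw [← e3, sub_eq_add_neg, Real.exp_add, pow_add]
          ring
      _ ≤ 2^(K+n)/(2*δ) * Real.exp (m (K+n)) :=
          mul_le_mul_of_nonneg_left e1 (by positivity)
  calc (r : ℝ≥0∞) = ENNReal.ofReal r := ENNReal.ofReal_coe_nnreal.symm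
    _ ≤ ENNReal.ofReal (2^(K+n)/(2*δ) * Real.exp (m (K+n))) :=
        ENNReal.ofReal_le_ofReal (hrn.trans hval)
    _ ≤ _ := hlow (K+n)
end

section
/- Let u : ℝ → ℝ be Lebesgue measurable and locally integrable with finite H^{1/2}(ℝ) seminorm. Then: (a) for every bounded interval I of positive length, (1/|I|)∫_I |u − u_I| dx ≤ (∫_I∫_I (u(x) − u(y))²/(x − y)² dx dy)^{1/2}; and (b) u has vanishing mean oscillation: sup over intervals I with 0 < |I| ≤ δ of (1/|I|)∫_I |u − u_I| dx tends to 0 as δ → 0+. -/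
open MeasureTheory
open scoped ENNReal

private lemma measF {u : ℝ → ℝ} (hmeas : Measurable u) :
    Measurable (fun p : ℝ × ℝ => ENNReal.ofReal ((u p.1 - u p.2) ^ 2 / (p.1 - p.2) ^ 2)) := by
  apply ENNReal.measurable_ofReal.comp
  exact (((hmeas.comp measurable_fst).sub (hmeas.comp measurable_snd)).pow_const 2).div
    ((measurable_fst.sub measurable_snd).pow_const 2)

private lemma total_fin {u : ℝ → ℝ} (hmeas : Measurable u) (hfin : hHalfSeminormSq u < ⊤) :
    ∫⁻ p : ℝ × ℝ, ENNReal.ofReal ((u p.1 - u p.2) ^ 2 / (p.1 - p.2) ^ 2)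
      ∂((volume : Measure ℝ).prod volume) ≠ ⊤ := by
  rw [lintegral_prod _ (measF hmeas).aemeasurable]
  unfold hHalfSeminormSq at hfin
  have hc : ENNReal.ofReal (1 / (2 * Real.pi ^ 2)) ≠ 0 := by
    apply ne_of_gt; rw [ENNReal.ofReal_pos]
    positivity
  intro h
  rw [h, ENNReal.mul_top hc] at hfin
  exact lt_irrefl _ hfin

private lemma D_eq {u : ℝ → ℝ} (hmeas : Measurable u) (a b : ℝ) :
    (∫⁻ x in Set.Ioc a b, ∫⁻ y in Set.Ioc a b,
        ENNReal.ofReal ((u x - u y) ^ 2 / (x - y) ^ 2))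
      = ∫⁻ p in (Set.Ioc a b) ×ˢ (Set.Ioc a b),
          ENNReal.ofReal ((u p.1 - u p.2) ^ 2 / (p.1 - p.2) ^ 2)
          ∂((volume : Measure ℝ).prod volume) := by
  rw [← Measure.prod_restrict, lintegral_prod _ (measF hmeas).aemeasurable]


-- Cauchy–Schwarz bound in ℝ≥0∞ on the rectangle
private lemma CS {u : ℝ → ℝ} (hmeas : Measurable u) {a b : ℝ} (hab : a < b) :
    (∫⁻ p, ENNReal.ofReal |u p.1 - u p.2|
        ∂((volume.restrict (Set.Ioc a b)).prod (volume.restrict (Set.Ioc a b))))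
      ≤ (∫⁻ p, ENNReal.ofReal ((u p.1 - u p.2) ^ 2 / (p.1 - p.2) ^ 2)
          ∂((volume.restrict (Set.Ioc a b)).prod (volume.restrict (Set.Ioc a b)))) ^ ((1:ℝ)/2)
        * ENNReal.ofReal ((b - a) ^ 2) := by
  set I := Set.Ioc a b with hI
  set ν := (volume.restrict I).prod (volume.restrict I) with hν
  set f : ℝ × ℝ → ℝ≥0∞ := fun p =>
    (ENNReal.ofReal ((u p.1 - u p.2) ^ 2 / (p.1 - p.2) ^ 2)) ^ ((1:ℝ)/2) with hf
  set g : ℝ × ℝ → ℝ≥0∞ := fun p => (ENNReal.ofReal ((p.1 - p.2) ^ 2)) ^ ((1:ℝ)/2) with hg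
  have hfm : Measurable f := (measF hmeas).pow_const _
  have hgm : Measurable g := by
    apply Measurable.pow_const
    exact ENNReal.measurable_ofReal.comp ((measurable_fst.sub measurable_snd).pow_const 2)
  have hpt : ∀ p : ℝ × ℝ, ENNReal.ofReal |u p.1 - u p.2| ≤ (f * g) p := by
    intro p
    rcases eq_or_ne p.1 p.2 with h | h
    · simp [h]
    · have hxy : (p.1 - p.2) ^ 2 ≠ 0 := pow_ne_zero _ (sub_ne_zero.mpr h)
      have hFnn : (0:ℝ) ≤ (u p.1 - u p.2) ^ 2 / (p.1 - p.2) ^ 2 :=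
        div_nonneg (sq_nonneg _) (sq_nonneg _)
      apply le_of_eq
      simp only [hf, hg, Pi.mul_apply]
      rw [ENNReal.ofReal_rpow_of_nonneg hFnn (by norm_num),
          ENNReal.ofReal_rpow_of_nonneg (sq_nonneg _) (by norm_num),
          ← ENNReal.ofReal_mul (by positivity)]
      congr 1
      rw [← Real.mul_rpow hFnn (sq_nonneg _), div_mul_cancel₀ _ hxy,
          ← Real.sqrt_eq_rpow, Real.sqrt_sq_eq_abs]
  have hCS := ENNReal.lintegral_mul_le_Lp_mul_Lq ν
    Real.HolderConjugate.two_two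
    hfm.aemeasurable hgm.aemeasurable
  have hsq : ∀ x : ℝ≥0∞, (x ^ ((1:ℝ)/2)) ^ (2:ℝ) = x := by
    intro x
    rw [← ENNReal.rpow_mul]
    norm_num
  have hC : (∫⁻ p, g p ^ (2:ℝ) ∂ν) ≤ ENNReal.ofReal ((b - a) ^ 2) * ENNReal.ofReal ((b - a) ^ 2) := by
    simp only [hg, hsq]
    calc (∫⁻ p, ENNReal.ofReal ((p.1 - p.2) ^ 2) ∂ν)
        = ∫⁻ p in I ×ˢ I, ENNReal.ofReal ((p.1 - p.2) ^ 2)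
            ∂((volume : Measure ℝ).prod volume) := by rw [hν, Measure.prod_restrict]
      _ ≤ ∫⁻ _ in I ×ˢ I, ENNReal.ofReal ((b - a) ^ 2)
            ∂((volume : Measure ℝ).prod volume) := by
          apply setLIntegral_mono
            (by exact measurable_const)
          rintro ⟨x, y⟩ hp
          obtain ⟨hx, hy⟩ := hp
          apply ENNReal.ofReal_le_ofReal
          apply sq_le_sq'
          · simp only [hI, Set.mem_Ioc] at hx hy; nlinarith [hx.1, hx.2, hy.1, hy.2]
          · simp only [hI, Set.mem_Ioc] at hx hy; nlinarith [hx.1, hx.2, hy.1, hy.2]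
      _ = ENNReal.ofReal ((b - a) ^ 2) * (((volume : Measure ℝ).prod volume) (I ×ˢ I)) := by
          rw [setLIntegral_const]
      _ = ENNReal.ofReal ((b - a) ^ 2) * ENNReal.ofReal ((b - a) ^ 2) := by
          rw [Measure.prod_prod, hI, Real.volume_Ioc, ← ENNReal.ofReal_mul (by linarith), ← sq]
  calc (∫⁻ p, ENNReal.ofReal |u p.1 - u p.2| ∂ν)
      ≤ ∫⁻ p, (f * g) p ∂ν := lintegral_mono hpt
    _ ≤ (∫⁻ p, f p ^ (2:ℝ) ∂ν) ^ ((1:ℝ)/2) * (∫⁻ p, g p ^ (2:ℝ) ∂ν) ^ ((1:ℝ)/2) := hCS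
    _ ≤ (∫⁻ p, f p ^ (2:ℝ) ∂ν) ^ ((1:ℝ)/2)
        * (ENNReal.ofReal ((b - a) ^ 2) * ENNReal.ofReal ((b - a) ^ 2)) ^ ((1:ℝ)/2) := by
        gcongr
    _ = (∫⁻ p, ENNReal.ofReal ((u p.1 - u p.2) ^ 2 / (p.1 - p.2) ^ 2) ∂ν) ^ ((1:ℝ)/2)
        * ENNReal.ofReal ((b - a) ^ 2) := by
        have h1 : (∫⁻ p, f p ^ (2:ℝ) ∂ν) = ∫⁻ p, ENNReal.ofReal ((u p.1 - u p.2) ^ 2 / (p.1 - p.2) ^ 2) ∂ν :=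
          lintegral_congr fun p => hsq _
        rw [h1, ← sq, ← ENNReal.rpow_natCast (ENNReal.ofReal ((b-a)^2)) 2, ← ENNReal.rpow_mul]
        norm_num

private lemma main_bound {u : ℝ → ℝ} (hmeas : Measurable u) (hloc : LocallyIntegrable u volume)
    {a b : ℝ} (hab : a < b)
    (hD : (∫⁻ x in Set.Ioc a b, ∫⁻ y in Set.Ioc a b,
        ENNReal.ofReal ((u x - u y) ^ 2 / (x - y) ^ 2)) ≠ ⊤) :
    (1 / (b - a)) * ∫ x in Set.Ioc a b,
        |u x - (1 / (b - a)) * ∫ y in Set.Ioc a b, u y|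
      ≤ Real.sqrt ((∫⁻ x in Set.Ioc a b, ∫⁻ y in Set.Ioc a b,
          ENNReal.ofReal ((u x - u y) ^ 2 / (x - y) ^ 2)).toReal) := by
  set I := Set.Ioc a b with hI
  have hL : (0:ℝ) < b - a := sub_pos.mpr hab
  set L := b - a with hLdef
  set ν := (volume.restrict I).prod (volume.restrict I) with hν
  set D := (∫⁻ x in I, ∫⁻ y in I, ENNReal.ofReal ((u x - u y) ^ 2 / (x - y) ^ 2)) with hDdef
  have hD' : (∫⁻ p, ENNReal.ofReal ((u p.1 - u p.2) ^ 2 / (p.1 - p.2) ^ 2) ∂ν) = D := by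
    rw [hν, lintegral_prod _ (measF hmeas).aemeasurable]
  set A := (∫⁻ p, ENNReal.ofReal |u p.1 - u p.2| ∂ν) with hAdef
  have hCS : A ≤ D ^ ((1:ℝ)/2) * ENNReal.ofReal (L ^ 2) := by
    rw [← hD']; exact CS hmeas hab
  have hDhalf_ne : D ^ ((1:ℝ)/2) ≠ ⊤ := ENNReal.rpow_ne_top_of_nonneg (by norm_num) hD
  have hRfin : D ^ ((1:ℝ)/2) * ENNReal.ofReal (L ^ 2) ≠ ⊤ :=
    ENNReal.mul_ne_top hDhalf_ne ENNReal.ofReal_ne_top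
  have hAfin : A ≠ ⊤ := by
    intro h; rw [h] at hCS; exact hRfin (top_le_iff.mp hCS)
  -- integrability of u on I
  have hu : IntegrableOn u I volume :=
    (hloc.integrableOn_isCompact isCompact_Icc).mono_set Set.Ioc_subset_Icc_self
  have hmeasI : volume I = ENNReal.ofReal L := by rw [hI, Real.volume_Ioc]
  -- integrability of |u x - u y| on the product
  have hGm : Measurable (fun p : ℝ × ℝ => |u p.1 - u p.2|) :=
    ((hmeas.comp measurable_fst).sub (hmeas.comp measurable_snd)).abs
  have hGint : Integrable (fun p : ℝ × ℝ => |u p.1 - u p.2|) ν := by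
    refine ⟨hGm.aestronglyMeasurable, ?_⟩
    rw [hasFiniteIntegral_iff_norm]
    have : ∀ p : ℝ × ℝ, ENNReal.ofReal ‖|u p.1 - u p.2|‖ = ENNReal.ofReal |u p.1 - u p.2| := by
      intro p; rw [Real.norm_eq_abs, abs_abs]
    simp only [this]
    exact lt_of_le_of_ne (le_top) hAfin
  set c := (1 / L) * ∫ y in I, u y with hc
  -- pointwise bound
  have hpt : ∀ x : ℝ, |u x - c| ≤ (1/L) * ∫ y in I, |u x - u y| := by
    intro x
    have hconst : IntegrableOn (fun _ : ℝ => u x) I volume := by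
      apply (integrableOn_const_iff (C := u x)).mpr
      right
      rw [hmeasI]; exact ENNReal.ofReal_lt_top
    have h1 : (∫ y in I, (u x - u y)) = L * (u x - c) := by
      rw [integral_sub hconst hu, setIntegral_const, measureReal_def, hmeasI,
          ENNReal.toReal_ofReal hL.le, smul_eq_mul, hc]
      field_simp
    have h2 : |u x - c| = (1/L) * |∫ y in I, (u x - u y)| := by
      rw [h1, abs_mul, abs_of_pos hL]
      field_simp
    rw [h2]
    have h3 : |∫ y in I, (u x - u y)| ≤ ∫ y in I, |u x - u y| := by
      simpa [Real.norm_eq_abs] using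
        norm_integral_le_integral_norm (μ := volume.restrict I) (fun y => u x - u y)
    have : (0:ℝ) ≤ 1/L := by positivity
    nlinarith [h3]
  -- integrability of the inner integral in x
  have hInner : Integrable (fun x => ∫ y in I, |u x - u y| ∂volume) (volume.restrict I) :=
    hGint.integral_prod_left
  have hstep : (∫ x in I, |u x - c|) ≤ (1/L) * ∫ x in I, ∫ y in I, |u x - u y| := by
    have := integral_mono_of_nonneg
      (f := fun x => |u x - c|) (g := fun x => (1/L) * ∫ y in I, |u x - u y|)
      (μ := volume.restrict I)
      (Filter.Eventually.of_forall fun x => abs_nonneg _)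
      (hInner.const_mul _)
      (Filter.Eventually.of_forall hpt)
    rwa [integral_const_mul] at this
  -- Fubini + lintegral conversion
  have hFub : (∫ x in I, ∫ y in I, |u x - u y|) = A.toReal := by
    rw [MeasureTheory.integral_integral (f := fun x y => |u x - u y|) hGint]
    rw [integral_eq_lintegral_of_nonneg_ae (Filter.Eventually.of_forall fun p => abs_nonneg _)
      hGm.aestronglyMeasurable]
  -- convert to real
  have hAle : A.toReal ≤ Real.sqrt (D.toReal) * L ^ 2 := by
    have := ENNReal.toReal_mono hRfin hCS
    rwa [ENNReal.toReal_mul, ENNReal.toReal_ofReal (sq_nonneg L),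
      ← ENNReal.toReal_rpow, ← Real.sqrt_eq_rpow] at this
  have hsqrt_nn : 0 ≤ Real.sqrt (D.toReal) := Real.sqrt_nonneg _
  calc (1/L) * ∫ x in I, |u x - c|
      ≤ (1/L) * ((1/L) * ∫ x in I, ∫ y in I, |u x - u y|) := by
        apply mul_le_mul_of_nonneg_left hstep (by positivity)
    _ = (1/L)^2 * A.toReal := by rw [hFub]; ring
    _ ≤ (1/L)^2 * (Real.sqrt (D.toReal) * L^2) := by
        apply mul_le_mul_of_nonneg_left hAle (by positivity)
    _ = Real.sqrt (D.toReal) := by field_simp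

private lemma eqD {u : ℝ → ℝ} (hmeas : Measurable u) {a b : ℝ}
    (hD : (∫⁻ x in Set.Ioc a b, ∫⁻ y in Set.Ioc a b,
        ENNReal.ofReal ((u x - u y) ^ 2 / (x - y) ^ 2)) ≠ ⊤) :
    (∫ x in Set.Ioc a b, ∫ y in Set.Ioc a b, (u x - u y) ^ 2 / (x - y) ^ 2)
      = (∫⁻ x in Set.Ioc a b, ∫⁻ y in Set.Ioc a b,
          ENNReal.ofReal ((u x - u y) ^ 2 / (x - y) ^ 2)).toReal := by
  set I := Set.Ioc a b with hI
  have hFnn : ∀ x y : ℝ, (0:ℝ) ≤ (u x - u y) ^ 2 / (x - y) ^ 2 := fun x y =>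
    div_nonneg (sq_nonneg _) (sq_nonneg _)
  have hFm : ∀ x : ℝ, Measurable fun y => (u x - u y) ^ 2 / (x - y) ^ 2 := fun x =>
    (((measurable_const.sub hmeas).pow_const 2).div ((measurable_const.sub measurable_id).pow_const 2))
  set g : ℝ → ℝ≥0∞ := fun x => ∫⁻ y in I, ENNReal.ofReal ((u x - u y) ^ 2 / (x - y) ^ 2) with hg
  have hgm : Measurable g := by
    apply Measurable.lintegral_prod_right' (f := fun p : ℝ × ℝ =>
      ENNReal.ofReal ((u p.1 - u p.2) ^ 2 / (p.1 - p.2) ^ 2))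
    exact measF hmeas
  have hinner : ∀ x : ℝ, (∫ y in I, (u x - u y) ^ 2 / (x - y) ^ 2) = (g x).toReal := by
    intro x
    rw [integral_eq_lintegral_of_nonneg_ae (Filter.Eventually.of_forall fun y => hFnn x y)
      (hFm x).aestronglyMeasurable]
  simp only [hinner]
  rw [integral_eq_lintegral_of_nonneg_ae
      (Filter.Eventually.of_forall fun x => ENNReal.toReal_nonneg)
      hgm.ennreal_toReal.aestronglyMeasurable]
  congr 1
  have hae : ∀ᵐ x ∂(volume.restrict I), g x < ⊤ := ae_lt_top hgm hD
  apply lintegral_congr_ae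
  filter_upwards [hae] with x hx
  rw [ENNReal.ofReal_toReal hx.ne]


/-- If `u : ℝ → ℝ` is measurable, locally integrable, with finite `H^{1/2}(ℝ)` seminorm,
then (a) for every bounded interval `I = (a,b]`, the mean oscillation of `u` over `I` is
bounded by `(∫_I∫_I (u(x)−u(y))²/(x−y)² dx dy)^{1/2}`; and (b) `u` has vanishing mean
oscillation. -/
theorem hHalf_mean_oscillation_bound_and_vmo
    (u : ℝ → ℝ) (hmeas : Measurable u) (hloc : LocallyIntegrable u volume)
    (hfin : hHalfSeminormSq u < ⊤) :
    (∀ a b : ℝ, a < b →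
      (1 / (b - a)) * ∫ x in Set.Ioc a b,
          |u x - (1 / (b - a)) * ∫ y in Set.Ioc a b, u y|
        ≤ Real.sqrt (∫ x in Set.Ioc a b, ∫ y in Set.Ioc a b,
            (u x - u y) ^ 2 / (x - y) ^ 2))
    ∧ (∀ ε > (0:ℝ), ∃ δ > (0:ℝ), ∀ a b : ℝ, a < b → b - a ≤ δ →
      (1 / (b - a)) * ∫ x in Set.Ioc a b,
          |u x - (1 / (b - a)) * ∫ y in Set.Ioc a b, u y| ≤ ε) := by
  have htot := total_fin hmeas hfin
  have hDfin : ∀ a b : ℝ, (∫⁻ x in Set.Ioc a b, ∫⁻ y in Set.Ioc a b,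
      ENNReal.ofReal ((u x - u y) ^ 2 / (x - y) ^ 2)) ≠ ⊤ := by
    intro a b
    rw [D_eq hmeas]
    exact ne_top_of_le_ne_top htot (setLIntegral_le_lintegral _ _)
  constructor
  · intro a b hab
    rw [eqD hmeas (hDfin a b)]
    exact main_bound hmeas hloc hab (hDfin a b)
  · intro ε hε
    obtain ⟨δ', hδ'pos, hδ'⟩ := exists_pos_setLIntegral_lt_of_measure_lt htot
      (ε := ENNReal.ofReal (ε ^ 2)) (ne_of_gt (ENNReal.ofReal_pos.mpr (by positivity)))
    set δ₀ := min δ' 1 with hδ₀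
    have hδ₀pos : 0 < δ₀ := lt_min hδ'pos one_pos
    have hδ₀top : δ₀ ≠ ⊤ := ne_top_of_le_ne_top ENNReal.one_ne_top (min_le_right _ _)
    have hδ₀tr : 0 < δ₀.toReal := ENNReal.toReal_pos hδ₀pos.ne' hδ₀top
    refine ⟨δ₀.toReal / 2, by positivity, ?_⟩
    intro a b hab hba
    have hL : 0 < b - a := sub_pos.mpr hab
    have hL1 : b - a ≤ 1 := by
      have h1 : δ₀.toReal ≤ 1 := by
        have := min_le_right δ' 1
        calc δ₀.toReal ≤ (1:ℝ≥0∞).toReal := ENNReal.toReal_mono ENNReal.one_ne_top this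
          _ = 1 := by simp
      linarith
    have hmeaslt : ((volume : Measure ℝ).prod volume) ((Set.Ioc a b) ×ˢ (Set.Ioc a b)) < δ' := by
      rw [Measure.prod_prod, Real.volume_Ioc]
      calc ENNReal.ofReal (b - a) * ENNReal.ofReal (b - a)
          ≤ ENNReal.ofReal (b - a) * 1 := by
            gcongr
            exact ENNReal.ofReal_le_one.mpr hL1
        _ = ENNReal.ofReal (b - a) := mul_one _
        _ ≤ ENNReal.ofReal (δ₀.toReal / 2) := ENNReal.ofReal_le_ofReal hba
        _ < ENNReal.ofReal (δ₀.toReal) := by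
            rw [ENNReal.ofReal_lt_ofReal_iff hδ₀tr]
            linarith
        _ = δ₀ := ENNReal.ofReal_toReal hδ₀top
        _ ≤ δ' := min_le_left _ _
    have hDlt : (∫⁻ x in Set.Ioc a b, ∫⁻ y in Set.Ioc a b,
        ENNReal.ofReal ((u x - u y) ^ 2 / (x - y) ^ 2)) < ENNReal.ofReal (ε ^ 2) := by
      rw [D_eq hmeas]
      exact hδ' _ hmeaslt
    have hsqrt : Real.sqrt ((∫⁻ x in Set.Ioc a b, ∫⁻ y in Set.Ioc a b,
        ENNReal.ofReal ((u x - u y) ^ 2 / (x - y) ^ 2)).toReal) ≤ ε := by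
      have h1 : (∫⁻ x in Set.Ioc a b, ∫⁻ y in Set.Ioc a b,
          ENNReal.ofReal ((u x - u y) ^ 2 / (x - y) ^ 2)).toReal ≤ ε ^ 2 :=
        ENNReal.toReal_le_of_le_ofReal (by positivity) hDlt.le
      calc Real.sqrt _ ≤ Real.sqrt (ε ^ 2) := Real.sqrt_le_sqrt h1
        _ = ε := Real.sqrt_sq hε.le
    exact le_trans (main_bound hmeas hloc hab (hDfin a b)) hsqrt
end

section
/- Let u : ℝ → ℝ be Lebesgue measurable and locally integrable with finite H^{1/2}(ℝ) seminorm. Then e^{u} is locally integrable on ℝ: for every bounded interval I, ∫_I e^{u(x)} dx < ∞. -/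
open MeasureTheory
open scoped ENNReal

open Set
open scoped Topology

namespace HHalfJN

variable (s h : ℝ)

/-- Left endpoint of the `j`-th dyadic subinterval at scale `n` of `[s, s+h)`. -/
noncomputable def dc (n j : ℕ) : ℝ := s + h * j / 2 ^ n

/-- Dyadic subinterval. -/
noncomputable def dI (n j : ℕ) : Set ℝ := Set.Ico (dc s h n j) (dc s h n (j + 1))

lemma dc_mono (hh : 0 ≤ h) {m n i j : ℕ} (H : i * 2 ^ n ≤ j * 2 ^ m) :
    dc s h m i ≤ dc s h n j := by
  unfold dc
  have h2m : (0:ℝ) < 2 ^ m := by positivity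
  have h2n : (0:ℝ) < 2 ^ n := by positivity
  have : (i:ℝ) * 2 ^ n ≤ (j:ℝ) * 2 ^ m := by exact_mod_cast H
  have := mul_le_mul_of_nonneg_left this hh
  have key : h * ↑i / 2 ^ m ≤ h * ↑j / 2 ^ n := by
    rw [div_le_div_iff₀ h2m h2n]; nlinarith
  linarith

lemma volume_dI (hh : 0 ≤ h) (n j : ℕ) :
    volume (dI s h n j) = ENNReal.ofReal (h / 2 ^ n) := by
  unfold dI
  rw [Real.volume_Ico]
  congr 1
  unfold dc
  have h2n : (0:ℝ) < 2 ^ n := by positivity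
  push_cast
  field_simp
  ring

lemma dI_succ_subset (hh : 0 ≤ h) (n j : ℕ) :
    dI s h (n + 1) j ⊆ dI s h n (j / 2) := by
  apply Set.Ico_subset_Ico
  · apply dc_mono _ _ hh
    calc j / 2 * 2 ^ (n + 1) = (j / 2 * 2) * 2 ^ n := by ring
    _ ≤ j * 2 ^ n := Nat.mul_le_mul_right _ (Nat.div_mul_le_self j 2)
  · apply dc_mono _ _ hh
    calc (j + 1) * 2 ^ n ≤ ((j / 2 + 1) * 2) * 2 ^ n := by
          have : j + 1 ≤ (j / 2 + 1) * 2 := by omega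
          exact Nat.mul_le_mul_right _ this
    _ = (j / 2 + 1) * 2 ^ (n + 1) := by ring

lemma dI_anc_subset (hh : 0 ≤ h) (m k j : ℕ) :
    dI s h (m + k) j ⊆ dI s h m (j / 2 ^ k) := by
  induction k generalizing j with
  | zero => simp
  | succ k ih =>
    have h1 : dI s h (m + (k+1)) j ⊆ dI s h (m + k) (j / 2) := dI_succ_subset s h hh _ j
    refine h1.trans ?_
    have := ih (j / 2)
    rwa [Nat.div_div_eq_div_mul, ← pow_succ'] at this

lemma dI_subset_of_le (hh : 0 ≤ h) {m n : ℕ} (hmn : m ≤ n) (j : ℕ) :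
    dI s h n j ⊆ dI s h m (j / 2 ^ (n - m)) := by
  have := dI_anc_subset s h hh m (n - m) j
  rwa [Nat.add_sub_cancel' hmn] at this

lemma dI_disjoint (hh : 0 ≤ h) {n i j : ℕ} (hij : i ≠ j) :
    Disjoint (dI s h n i) (dI s h n j) := by
  rcases Nat.lt_or_ge i j with hlt | hge
  · apply Set.Ico_disjoint_Ico.2
    have : dc s h n (i + 1) ≤ dc s h n j :=
      dc_mono s h hh (Nat.mul_le_mul_right _ (by omega))
    exact (min_le_left _ _).trans (this.trans (le_max_right _ _))
  · have hlt : j < i := by omega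
    apply Set.Ico_disjoint_Ico.2
    have : dc s h n (j + 1) ≤ dc s h n i :=
      dc_mono s h hh (Nat.mul_le_mul_right _ (by omega))
    exact (min_le_right _ _).trans (this.trans (le_max_left _ _))



/-- index of the scale-`n` dyadic interval containing `x`. -/
noncomputable def jx (x : ℝ) (n : ℕ) : ℕ := ⌊(x - s) / h * 2 ^ n⌋₊

lemma dI_zero : dI s h 0 0 = Set.Ico s (s + h) := by
  unfold dI dc; norm_num

lemma mem_dI_jx (hh : 0 < h) {x : ℝ} (hx : x ∈ Set.Ico s (s + h)) (n : ℕ) :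
    x ∈ dI s h n (jx s h x n) := by
  obtain ⟨hx1, hx2⟩ := hx
  set θ := (x - s) / h with hθ
  have hθ0 : 0 ≤ θ := div_nonneg (by linarith) hh.le
  have hxθ : h * θ = x - s := by rw [hθ]; field_simp
  have h2n : (0:ℝ) < 2 ^ n := by positivity
  have hfl : (↑(jx s h x n) : ℝ) ≤ θ * 2 ^ n := Nat.floor_le (by positivity)
  have hfu : θ * 2 ^ n < ↑(jx s h x n) + 1 := Nat.lt_floor_add_one _
  constructor
  · show s + h * ↑(jx s h x n) / 2 ^ n ≤ x
    have : h * ↑(jx s h x n) / 2 ^ n ≤ h * θ := by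
      rw [div_le_iff₀ h2n]; nlinarith
    linarith
  · show x < s + h * ↑(jx s h x n + 1) / 2 ^ n
    have : h * θ < h * ↑(jx s h x n + 1) / 2 ^ n := by
      rw [lt_div_iff₀ h2n]; push_cast; nlinarith
    linarith

lemma jx_lt (hh : 0 < h) {x : ℝ} (hx : x ∈ Set.Ico s (s + h)) (n : ℕ) :
    jx s h x n < 2 ^ n := by
  obtain ⟨hx1, hx2⟩ := hx
  have hθ0 : 0 ≤ (x - s) / h := div_nonneg (by linarith) hh.le
  have hθ1 : (x - s) / h < 1 := (div_lt_one hh).2 (by linarith)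
  unfold jx
  rw [Nat.floor_lt (by positivity)]
  push_cast
  nlinarith [pow_pos (zero_lt_two (α := ℝ)) n]

lemma jx_div (x : ℝ) {m n : ℕ} (hmn : m ≤ n) :
    jx s h x n / 2 ^ (n - m) = jx s h x m := by
  unfold jx
  have hpow : (2:ℝ) ^ n = 2 ^ m * 2 ^ (n - m) := by
    rw [← pow_add, Nat.add_sub_cancel' hmn]
  have h2 : ((2:ℝ) ^ (n - m)) ≠ 0 := by positivity
  rw [← Nat.floor_div_natCast]
  congr 1
  push_cast
  rw [hpow, ← mul_assoc, mul_div_cancel_right₀ _ h2]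



lemma lintegral_cs {α : Type*} [MeasurableSpace α] (μ : Measure α) (φ : α → ℝ≥0∞)
    (hφ : AEMeasurable φ μ) :
    (∫⁻ a, φ a ∂μ) ≤ (∫⁻ a, (φ a) ^ (2:ℝ) ∂μ) ^ (1/2:ℝ) * (μ Set.univ) ^ (1/2:ℝ) := by
  have hpq : Real.HolderConjugate 2 2 := Real.HolderConjugate.two_two
  have := ENNReal.lintegral_mul_le_Lp_mul_Lq μ hpq hφ (aemeasurable_const (b := (1:ℝ≥0∞)))
  simpa using this

lemma rpow_half_sq (x : ℝ≥0∞) : (x ^ (1/2:ℝ)) ^ 2 = x := by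
  rw [← ENNReal.rpow_natCast (x ^ (1/2:ℝ)) 2, ← ENNReal.rpow_mul]; norm_num

lemma sq_rpow_half (z : ℝ≥0∞) : (z ^ (2:ℕ)) ^ (1/2:ℝ) = z := by
  rw [← ENNReal.rpow_natCast z 2, ← ENNReal.rpow_mul]; norm_num

lemma rpow_two_eq_pow (x : ℝ≥0∞) : x ^ (2:ℝ) = x ^ (2:ℕ) := by
  rw [show ((2:ℝ)) = ((2:ℕ):ℝ) by norm_num, ENNReal.rpow_natCast]

/-- squared Cauchy–Schwarz for lintegral, with ℕ-powers. -/
lemma lintegral_sq_le {α : Type*} [MeasurableSpace α] (μ : Measure α) (φ : α → ℝ≥0∞)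
    (hφ : AEMeasurable φ μ) :
    (∫⁻ a, φ a ∂μ) ^ 2 ≤ (∫⁻ a, (φ a) ^ 2 ∂μ) * μ Set.univ := by
  have h := lintegral_cs μ φ hφ
  calc (∫⁻ a, φ a ∂μ) ^ 2
      ≤ ((∫⁻ a, (φ a) ^ (2:ℝ) ∂μ) ^ (1/2:ℝ) * (μ Set.univ) ^ (1/2:ℝ)) ^ 2 := by
        rw [pow_two, pow_two]; exact mul_le_mul' h h
    _ = (∫⁻ a, (φ a) ^ (2:ℝ) ∂μ) * μ Set.univ := by
        rw [mul_pow, rpow_half_sq, rpow_half_sq]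
    _ = (∫⁻ a, (φ a) ^ 2 ∂μ) * μ Set.univ := by
        congr 1
        exact lintegral_congr fun a => rpow_two_eq_pow (φ a)

/-- extract `x ≤ y` from `x^2 ≤ y^2` in `ℝ≥0∞`. -/
lemma ennreal_le_of_sq_le_sq {x y : ℝ≥0∞} (h : x ^ 2 ≤ y ^ 2) : x ≤ y := by
  calc x = (x ^ 2) ^ (1/2:ℝ) := (sq_rpow_half x).symm
    _ ≤ (y ^ 2) ^ (1/2:ℝ) := ENNReal.rpow_le_rpow h (by norm_num)
    _ = y := sq_rpow_half y

lemma sq_div_aux {t L d : ℝ} (ht : |t| ≤ L) (h0 : t = 0 → d = 0) :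
    d ^ 2 ≤ L ^ 2 * (d ^ 2 / t ^ 2) := by
  rcases eq_or_ne t 0 with rfl | htne
  · simp [h0 rfl]
  · have ht2 : 0 < t ^ 2 := by positivity
    have hL0 : 0 < L := lt_of_lt_of_le (abs_pos.2 htne) ht
    have h1 : t ^ 2 ≤ L ^ 2 := by nlinarith [abs_nonneg t, sq_abs t]
    have h3 : d ^ 2 / L ^ 2 ≤ d ^ 2 / t ^ 2 :=
      div_le_div_of_nonneg_left (sq_nonneg d) ht2 h1
    have h4 : L ^ 2 * (d ^ 2 / L ^ 2) = d ^ 2 := by field_simp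
    nlinarith [sq_nonneg L]

lemma ofReal_abs_sq (d : ℝ) : (ENNReal.ofReal |d|) ^ 2 = ENNReal.ofReal (d ^ 2) := by
  rw [← ENNReal.ofReal_pow (abs_nonneg d), sq_abs]


section BMO

variable (u : ℝ → ℝ)

/-- average of `u` over `dI s h n j`. -/
noncomputable def avg (n j : ℕ) : ℝ := (∫ y in dI s h n j, u y) / (h / 2 ^ n)

lemma dc_succ (n j : ℕ) : dc s h n (j + 1) = dc s h n j + h / 2 ^ n := by
  unfold dc
  have h2n : (0:ℝ) < 2 ^ n := by positivity
  push_cast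
  field_simp
  ring

lemma dist_le_of_mem_dI {n j : ℕ} {x y : ℝ} (hx : x ∈ dI s h n j) (hy : y ∈ dI s h n j) :
    |x - y| ≤ h / 2 ^ n := by
  have hs := dc_succ s h n j
  obtain ⟨hx1, hx2⟩ := hx
  obtain ⟨hy1, hy2⟩ := hy
  rw [abs_sub_le_iff]
  constructor <;> linarith

lemma integrableOn_dI (hloc : LocallyIntegrable u volume) (n j : ℕ) :
    IntegrableOn u (dI s h n j) volume :=
  (hloc.integrableOn_isCompact isCompact_Icc).mono_set Set.Ico_subset_Icc_self

lemma dI_subset_base (hh : 0 ≤ h) {n j : ℕ} (hj : j < 2 ^ n) :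
    dI s h n j ⊆ Set.Ico s (s + h) := by
  have h1 := dI_subset_of_le s h hh (Nat.zero_le n) j
  rw [Nat.sub_zero, Nat.div_eq_of_lt hj, dI_zero] at h1
  exact h1

lemma bmo (hu : Measurable u) (hloc : LocallyIntegrable u volume)
    (hh : 0 < h) {M : ℝ} (hM : 0 ≤ M)
    (HE : (∫⁻ x in Set.Ico s (s+h), ∫⁻ y in Set.Ico s (s+h),
        ENNReal.ofReal ((u x - u y)^2 / (x-y)^2)) ≤ ENNReal.ofReal (M^2))
    {n j : ℕ} (hj : j < 2^n) :
    (∫⁻ y in dI s h n j, ENNReal.ofReal |u y - avg s h u n j|)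
      ≤ ENNReal.ofReal (M * (h / 2^n)) := by
  set L : ℝ := h / 2^n with hLdef
  have hL : 0 < L := by positivity
  set I : Set ℝ := dI s h n j with hIdef
  set A : ℝ := avg s h u n j with hAdef
  have hImeas : MeasurableSet I := measurableSet_Ico
  have volI : volume I = ENNReal.ofReal L := volume_dI s h hh.le n j
  have hIJ : I ⊆ Set.Ico s (s+h) := dI_subset_base s h hh.le hj
  have hInt : IntegrableOn u I volume := integrableOn_dI s h u hloc n j
  have EI : (∫⁻ x in I, ∫⁻ y in I, ENNReal.ofReal ((u x - u y)^2/(x-y)^2))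
      ≤ ENNReal.ofReal (M^2) := by
    refine le_trans (lintegral_mono fun x => lintegral_mono_set hIJ) ?_
    exact le_trans (lintegral_mono_set hIJ) HE
  have DBL : (∫⁻ x in I, ∫⁻ y in I, ENNReal.ofReal ((u x - u y)^2))
      ≤ ENNReal.ofReal (L^2) * ENNReal.ofReal (M^2) := by
    have p1 : (∫⁻ x in I, ∫⁻ y in I, ENNReal.ofReal ((u x - u y)^2))
        ≤ ∫⁻ x in I, ∫⁻ y in I,
            ENNReal.ofReal (L^2) * ENNReal.ofReal ((u x - u y)^2/(x-y)^2) := by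
      refine setLIntegral_mono' hImeas fun x hx => ?_
      refine setLIntegral_mono' hImeas fun y hy => ?_
      rw [← ENNReal.ofReal_mul (by positivity)]
      refine ENNReal.ofReal_le_ofReal ?_
      refine sq_div_aux (dist_le_of_mem_dI s h hx hy) (fun h0 => ?_)
      have : x = y := by linarith [sub_eq_zero.1 h0]
      rw [this, sub_self]
    have p2 : (∫⁻ x in I, ∫⁻ y in I,
          ENNReal.ofReal (L^2) * ENNReal.ofReal ((u x - u y)^2/(x-y)^2))
        = ENNReal.ofReal (L^2) *
            ∫⁻ x in I, ∫⁻ y in I, ENNReal.ofReal ((u x - u y)^2/(x-y)^2) := by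
      rw [← lintegral_const_mul' _ _ ENNReal.ofReal_ne_top]
      refine lintegral_congr fun x => ?_
      rw [← lintegral_const_mul' _ _ ENNReal.ofReal_ne_top]
    exact p1.trans (p2.le.trans (mul_le_mul_right EI _))
  have hAx : ∀ x : ℝ, (∫ y in I, (u x - u y)) = L * (u x - A) := by
    intro x
    have hconst : IntegrableOn (fun _ : ℝ => u x) I volume := by
      refine integrableOn_const (ne_of_lt ?_)
      rw [volI]; exact ENNReal.ofReal_lt_top
    rw [integral_sub hconst hInt, setIntegral_const, measureReal_def, volI, ENNReal.toReal_ofReal hL.le,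
      hAdef]
    unfold avg
    rw [← hLdef]
    field_simp
    ring
  have SQx : ∀ x ∈ I, ENNReal.ofReal L * ENNReal.ofReal ((u x - A)^2)
      ≤ ∫⁻ y in I, ENNReal.ofReal ((u x - u y)^2) := by
    intro x hx
    have gInt : IntegrableOn (fun y => u x - u y) I volume := by
      refine Integrable.sub ?_ hInt
      refine integrableOn_const (ne_of_lt ?_)
      rw [volI]; exact ENNReal.ofReal_lt_top
    have gmeas : AEMeasurable (fun y => ENNReal.ofReal |u x - u y|) (volume.restrict I) :=
      ((measurable_const.sub hu).abs.ennreal_ofReal).aemeasurable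
    have c1 : ENNReal.ofReal |∫ y in I, (u x - u y)|
        ≤ ∫⁻ y in I, ENNReal.ofReal |u x - u y| := by
      refine le_trans (ENNReal.ofReal_le_ofReal (by simpa using norm_integral_le_integral_norm (μ := volume.restrict I) (fun y => u x - u y))) ?_
      rw [ofReal_integral_eq_lintegral_ofReal gInt.abs
        (Filter.Eventually.of_forall fun y => abs_nonneg _)]
    have c2 : (∫⁻ y in I, ENNReal.ofReal |u x - u y|)^2
        ≤ (∫⁻ y in I, ENNReal.ofReal ((u x - u y)^2)) * ENNReal.ofReal L := by
      have h2 := lintegral_sq_le (volume.restrict I)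
        (fun y => ENNReal.ofReal |u x - u y|) gmeas
      rw [Measure.restrict_apply_univ, volI] at h2
      refine h2.trans (le_of_eq ?_)
      congr 1
      exact lintegral_congr fun y => ofReal_abs_sq _
    have e1 : ENNReal.ofReal L * ENNReal.ofReal ((u x - A)^2) * ENNReal.ofReal L
        = (ENNReal.ofReal |∫ y in I, (u x - u y)|)^2 := by
      rw [ofReal_abs_sq, hAx x, ← ENNReal.ofReal_mul (by positivity),
        ← ENNReal.ofReal_mul (by positivity)]
      congr 1
      ring
    have chain : ENNReal.ofReal L * ENNReal.ofReal ((u x - A)^2) * ENNReal.ofReal L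
        ≤ (∫⁻ y in I, ENNReal.ofReal ((u x - u y)^2)) * ENNReal.ofReal L := by
      rw [e1]
      exact le_trans (by rw [pow_two, pow_two]; exact mul_le_mul' c1 c1) c2
    exact (ENNReal.mul_le_mul_iff_left ((ENNReal.ofReal_pos.2 hL).ne') ENNReal.ofReal_ne_top).1 chain
  have SQ : (∫⁻ x in I, ENNReal.ofReal ((u x - A)^2)) ≤ ENNReal.ofReal (M^2 * L) := by
    have t1 : ENNReal.ofReal L * (∫⁻ x in I, ENNReal.ofReal ((u x - A)^2))
        = ∫⁻ x in I, ENNReal.ofReal L * ENNReal.ofReal ((u x - A)^2) :=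
      (lintegral_const_mul' _ _ ENNReal.ofReal_ne_top).symm
    have t2 : (∫⁻ x in I, ENNReal.ofReal L * ENNReal.ofReal ((u x - A)^2))
        ≤ ∫⁻ x in I, ∫⁻ y in I, ENNReal.ofReal ((u x - u y)^2) :=
      setLIntegral_mono' hImeas SQx
    have t3 : ENNReal.ofReal L * (∫⁻ x in I, ENNReal.ofReal ((u x - A)^2))
        ≤ ENNReal.ofReal L * ENNReal.ofReal (M^2 * L) := by
      refine (t1.le.trans (t2.trans (DBL.trans (le_of_eq ?_))))
      rw [← ENNReal.ofReal_mul (by positivity), ← ENNReal.ofReal_mul hL.le]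
      congr 1
      ring
    exact (ENNReal.mul_le_mul_iff_right ((ENNReal.ofReal_pos.2 hL).ne') ENNReal.ofReal_ne_top).1 t3
  have fmeas : AEMeasurable (fun y => ENNReal.ofReal |u y - A|) (volume.restrict I) :=
    ((hu.sub measurable_const).abs.ennreal_ofReal).aemeasurable
  have final : (∫⁻ y in I, ENNReal.ofReal |u y - A|)^2 ≤ (ENNReal.ofReal (M * L))^2 := by
    have h2 := lintegral_sq_le (volume.restrict I) (fun y => ENNReal.ofReal |u y - A|) fmeas
    rw [Measure.restrict_apply_univ, volI] at h2
    refine h2.trans ?_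
    have e2 : (∫⁻ y in I, (ENNReal.ofReal |u y - A|)^2)
        = ∫⁻ y in I, ENNReal.ofReal ((u y - A)^2) :=
      lintegral_congr fun y => ofReal_abs_sq _
    calc (∫⁻ y in I, (ENNReal.ofReal |u y - A|)^2) * ENNReal.ofReal L
        = (∫⁻ y in I, ENNReal.ofReal ((u y - A)^2)) * ENNReal.ofReal L := by rw [e2]
      _ ≤ ENNReal.ofReal (M^2 * L) * ENNReal.ofReal L := mul_le_mul_left SQ _
      _ = (ENNReal.ofReal (M * L))^2 := by
          rw [← ENNReal.ofReal_mul (by positivity), ← ENNReal.ofReal_pow (by positivity)]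
          congr 1
          ring
  exact ennreal_le_of_sq_le_sq final

end BMO

section JNhelp

variable (u : ℝ → ℝ)

/-- oscillation lintegral relative to a constant. -/
noncomputable def osc (c : ℝ) (n j : ℕ) : ℝ≥0∞ :=
  ∫⁻ y in dI s h n j, ENNReal.ofReal |u y - c|

lemma integral_sub_const (hloc : LocallyIntegrable u volume) (hh : 0 < h)
    (c : ℝ) (n j : ℕ) :
    ∫ y in dI s h n j, (u y - c) = (h / 2 ^ n) * (avg s h u n j - c) := by
  have hL : (0:ℝ) < h / 2 ^ n := by positivity
  have hInt := integrableOn_dI s h u hloc n j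
  have hconst : IntegrableOn (fun _ : ℝ => c) (dI s h n j) volume := by
    refine integrableOn_const (ne_of_lt ?_)
    rw [volume_dI s h hh.le]; exact ENNReal.ofReal_lt_top
  rw [integral_sub hInt hconst, setIntegral_const, measureReal_def, volume_dI s h hh.le,
    ENNReal.toReal_ofReal hL.le]
  unfold avg
  field_simp
  have key : (2:ℝ) ^ n * (h / 2 ^ n) = h := by field_simp
  rw [smul_eq_mul, mul_sub, ← mul_assoc, key]; ring

lemma integral_abs_le_of_osc (hloc : LocallyIntegrable u volume) (hh : 0 < h)
    {c bnd : ℝ} (hbnd : 0 ≤ bnd) {n j : ℕ}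
    (hosc : osc s h u c n j ≤ ENNReal.ofReal (bnd * (h / 2 ^ n))) :
    ∫ y in dI s h n j, |u y - c| ≤ bnd * (h / 2 ^ n) := by
  have hInt : IntegrableOn (fun y => |u y - c|) (dI s h n j) volume := by
    have hInt := integrableOn_dI s h u hloc n j
    have hconst : IntegrableOn (fun _ : ℝ => c) (dI s h n j) volume := by
      refine integrableOn_const (ne_of_lt ?_)
      rw [volume_dI s h hh.le]; exact ENNReal.ofReal_lt_top
    exact (hInt.sub hconst).abs
  have h1 : ENNReal.ofReal (∫ y in dI s h n j, |u y - c|) ≤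
      ENNReal.ofReal (bnd * (h / 2 ^ n)) := by
    rw [ofReal_integral_eq_lintegral_ofReal hInt
      (Filter.Eventually.of_forall fun y => abs_nonneg _)]
    exact hosc
  have h2 : (0:ℝ) ≤ bnd * (h / 2 ^ n) := by positivity
  exact (ENNReal.ofReal_le_ofReal_iff h2).1 h1

/-- If the mean oscillation of `u` around `c` on a dyadic interval is at most `bnd`,
then the average differs from `c` by at most `bnd`. -/
lemma abs_avg_sub_le (hloc : LocallyIntegrable u volume) (hh : 0 < h)
    {c bnd : ℝ} (hbnd : 0 ≤ bnd) {n j : ℕ}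
    (hosc : osc s h u c n j ≤ ENNReal.ofReal (bnd * (h / 2 ^ n))) :
    |avg s h u n j - c| ≤ bnd := by
  have hL : (0:ℝ) < h / 2 ^ n := by positivity
  have h1 := integral_sub_const s h u hloc hh c n j
  have h2 := integral_abs_le_of_osc s h u hloc hh hbnd hosc
  have h3 : |∫ y in dI s h n j, (u y - c)| ≤ ∫ y in dI s h n j, |u y - c| := by
    simpa using norm_integral_le_integral_norm
      (μ := volume.restrict (dI s h n j)) (fun y => u y - c)
  rw [h1, abs_mul, abs_of_pos hL] at h3
  calc |avg s h u n j - c| = (h / 2 ^ n) * |avg s h u n j - c| / (h / 2 ^ n) := by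
        field_simp
    _ ≤ bnd * (h / 2 ^ n) / (h / 2 ^ n) := by
        exact div_le_div_of_nonneg_right (h3.trans h2) hL.le
    _ = bnd := by field_simp

end JNhelp

section JNdiff

open Filter Metric

variable (u : ℝ → ℝ)

lemma ae_dyadic_diff (hloc : LocallyIntegrable u volume) (hh : 0 < h) :
    ∀ᵐ x, x ∈ Set.Ico s (s + h) →
      Tendsto (fun n => (∫ y in dI s h n (jx s h x n), |u y - u x|) / (h / 2 ^ n))
        atTop (𝓝 0) := by
  filter_upwards [IsUnifLocDoublingMeasure.ae_tendsto_average_norm_sub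
    (μ := (volume : Measure ℝ)) hloc 1] with x hx hmem
  set w : ℕ → ℝ := fun n => dc s h n (jx s h x n) + h / 2 ^ (n + 1) with hw
  set δ : ℕ → ℝ := fun n => h / 2 ^ (n + 1) with hδdef
  have hδ : Tendsto δ atTop (𝓝[>] 0) := by
    apply tendsto_nhdsWithin_of_tendsto_nhds_of_eventually_within
    · have h1 : Tendsto (fun n : ℕ => (1/(2:ℝ)) ^ n) atTop (𝓝 0) :=
        tendsto_pow_atTop_nhds_zero_of_lt_one (by norm_num) (by norm_num)
      have h2 := h1.const_mul (h / 2)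
      rw [mul_zero] at h2
      refine h2.congr fun n => ?_
      show h / 2 * (1 / 2) ^ n = h / 2 ^ (n + 1)
      rw [div_pow, one_pow, pow_succ]
      ring
    · exact Filter.Eventually.of_forall fun n => Set.mem_Ioi.2 (by positivity)
  have hball : ∀ n : ℕ, closedBall (w n) (δ n)
      = Set.Icc (dc s h n (jx s h x n)) (dc s h n (jx s h x n + 1)) := by
    intro n
    have e1 : w n - δ n = dc s h n (jx s h x n) := by
      simp only [hw, hδdef]; ring
    have e2 : w n + δ n = dc s h n (jx s h x n) + h / 2 ^ n := by
      simp only [hw, hδdef]; rw [pow_succ]; ring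
    rw [Real.closedBall_eq_Icc, e1, e2, dc_succ s h n (jx s h x n)]
  have hmemB : ∀ n : ℕ, x ∈ closedBall (w n) (1 * δ n) := by
    intro n
    rw [one_mul, hball n]
    exact Set.Ico_subset_Icc_self (mem_dI_jx s h hh hmem n)
  have key := hx w δ hδ (Filter.Eventually.of_forall hmemB)
  refine key.congr fun n => ?_
  have hL : (0:ℝ) < h / 2 ^ n := by positivity
  have hvol : volume (Set.Icc (dc s h n (jx s h x n)) (dc s h n (jx s h x n + 1)))
      = ENNReal.ofReal (h / 2 ^ n) := by
    rw [Real.volume_Icc, dc_succ]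
    congr 1
    ring
  have hint : (∫ y in Set.Icc (dc s h n (jx s h x n)) (dc s h n (jx s h x n + 1)),
        ‖u y - u x‖) = ∫ y in dI s h n (jx s h x n), |u y - u x| := by
    simp only [Real.norm_eq_abs]
    exact (setIntegral_congr_set (MeasureTheory.Ico_ae_eq_Icc)).symm
  rw [hball n, setAverage_eq, measureReal_def, hvol, ENNReal.toReal_ofReal hL.le, smul_eq_mul, hint,
    inv_mul_eq_div]

lemma abs_le_of_all_good (hloc : LocallyIntegrable u volume) (hh : 0 < h)
    {x c bnd : ℝ} {m : ℕ} (hbnd : 0 ≤ bnd)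
    (htend : Tendsto (fun n => (∫ y in dI s h n (jx s h x n), |u y - u x|) / (h / 2 ^ n))
      atTop (𝓝 0))
    (hgood : ∀ n, m ≤ n → osc s h u c n (jx s h x n) ≤ ENNReal.ofReal (bnd * (h / 2 ^ n))) :
    |u x - c| ≤ bnd := by
  have main : ∀ n, m ≤ n →
      |u x - c| ≤ (∫ y in dI s h n (jx s h x n), |u y - u x|) / (h / 2 ^ n) + bnd := by
    intro n hn
    have hL : (0:ℝ) < h / 2 ^ n := by positivity
    set I : Set ℝ := dI s h n (jx s h x n) with hI
    have hvol : volume I = ENNReal.ofReal (h / 2 ^ n) := volume_dI s h hh.le _ _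
    have hIntu : IntegrableOn u I volume := integrableOn_dI s h u hloc _ _
    have hfin : volume I < ⊤ := by rw [hvol]; exact ENNReal.ofReal_lt_top
    have int1 : IntegrableOn (fun y => |u y - u x|) I volume :=
      (hIntu.sub (integrableOn_const hfin.ne)).abs
    have int2 : IntegrableOn (fun y => |u y - c|) I volume :=
      (hIntu.sub (integrableOn_const hfin.ne)).abs
    have p1 : |u x - c| * (h / 2 ^ n)
        ≤ (∫ y in I, |u y - u x|) + (∫ y in I, |u y - c|) := by
      have e : (∫ (_ : ℝ) in I, |u x - c|) = |u x - c| * (h / 2 ^ n) := by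
        rw [setIntegral_const, measureReal_def, hvol, ENNReal.toReal_ofReal hL.le, smul_eq_mul, mul_comm]
      rw [← e, ← integral_add int1 int2]
      refine setIntegral_mono_on (integrableOn_const hfin.ne) (int1.add int2)
        measurableSet_Ico fun y _ => ?_
      calc |u x - c| ≤ |u x - u y| + |u y - c| := abs_sub_le _ _ _
        _ = |u y - u x| + |u y - c| := by rw [abs_sub_comm]
    have p2 : (∫ y in I, |u y - c|) ≤ bnd * (h / 2 ^ n) :=
      integral_abs_le_of_osc s h u hloc hh hbnd (hgood n hn)
    calc |u x - c| = (|u x - c| * (h / 2 ^ n)) / (h / 2 ^ n) := by field_simp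
      _ ≤ ((∫ y in I, |u y - u x|) + bnd * (h / 2 ^ n)) / (h / 2 ^ n) :=
          div_le_div_of_nonneg_right (by linarith) hL.le
      _ = (∫ y in I, |u y - u x|) / (h / 2 ^ n) + bnd := by
          field_simp
  have hlim : Tendsto (fun n => (∫ y in dI s h n (jx s h x n), |u y - u x|) / (h / 2 ^ n) + bnd)
      atTop (𝓝 (0 + bnd)) := htend.add tendsto_const_nhds
  rw [zero_add] at hlim
  exact ge_of_tendsto hlim (Filter.eventually_atTop.2 ⟨m, main⟩)

end JNdiff

section JNmain

open Filter

variable (u : ℝ → ℝ)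

/-- Maximal bad dyadic subintervals of `(m,i)` (stopping intervals). -/
def Stop (b : ℝ) (m i : ℕ) : Set (ℕ × ℕ) :=
  {p | m < p.1 ∧ p.2 < 2 ^ p.1 ∧ p.2 / 2 ^ (p.1 - m) = i ∧
    ENNReal.ofReal (b * (h / 2 ^ p.1)) < osc s h u (avg s h u m i) p.1 p.2 ∧
    ∀ k, m ≤ k → k < p.1 →
      ¬ ENNReal.ofReal (b * (h / 2 ^ k)) <
          osc s h u (avg s h u m i) k (p.2 / 2 ^ (p.1 - k))}

lemma stop_subset (hh : 0 ≤ h) {b : ℝ} {m i : ℕ} {p : ℕ × ℕ}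
    (hp : p ∈ Stop s h u b m i) : dI s h p.1 p.2 ⊆ dI s h m i := by
  obtain ⟨hpm, -, hpanc, -, -⟩ := hp
  have := dI_subset_of_le s h hh hpm.le p.2
  rwa [hpanc] at this

lemma stop_disjoint_aux (hh : 0 ≤ h) {b : ℝ} {m i : ℕ} {p q : ℕ × ℕ}
    (hp : p ∈ Stop s h u b m i) (hq : q ∈ Stop s h u b m i) (hpq : p ≠ q)
    (hle : p.1 ≤ q.1) :
    Disjoint (dI s h p.1 p.2) (dI s h q.1 q.2) := by
  obtain ⟨hpm, hplt, hpanc, hpbad, hpmax⟩ := hp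
  obtain ⟨hqm, hqlt, hqanc, hqbad, hqmax⟩ := hq
  rcases eq_or_lt_of_le hle with heq | hlt
  · have hne : p.2 ≠ q.2 := fun h2 => hpq (Prod.ext heq h2)
    have hd := dI_disjoint s h (n := p.1) hh hne
    have he2 : dI s h q.1 q.2 = dI s h p.1 q.2 := by rw [heq]
    rw [he2]
    exact hd
  · by_contra hnd
    have hsub := dI_subset_of_le s h hh hlt.le q.2
    have hanc : q.2 / 2 ^ (q.1 - p.1) = p.2 := by
      by_contra hne
      have hd := dI_disjoint s h (n := p.1) hh hne
      exact hnd ((hd.mono_left hsub).symm)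
    exact (hqmax p.1 hpm.le hlt) (hanc ▸ hpbad)

lemma stop_disjoint (hh : 0 ≤ h) {b : ℝ} {m i : ℕ} {p q : ℕ × ℕ}
    (hp : p ∈ Stop s h u b m i) (hq : q ∈ Stop s h u b m i) (hpq : p ≠ q) :
    Disjoint (dI s h p.1 p.2) (dI s h q.1 q.2) := by
  rcases le_total p.1 q.1 with hle | hle
  · exact stop_disjoint_aux s h u hh hp hq hpq hle
  · exact (stop_disjoint_aux s h u hh hq hp (Ne.symm hpq) hle).symm

theorem jn (hu : Measurable u) (hloc : LocallyIntegrable u volume) (hh : 0 < h)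
    {M b : ℝ} (hM : 0 ≤ M) (hb2 : 2 * M ≤ b) (hb : 0 < b)
    (OSC : ∀ {n j : ℕ}, j < 2 ^ n →
      osc s h u (avg s h u n j) n j ≤ ENNReal.ofReal (M * (h / 2 ^ n))) :
    ∀ (N m i : ℕ), i < 2 ^ m →
      volume {x | x ∈ dI s h m i ∧ 3 * b * N < |u x - avg s h u m i|}
        ≤ 2⁻¹ ^ N * ENNReal.ofReal (h / 2 ^ m) := by
  intro N
  induction N with
  | zero =>
    intro m i hi
    simp only [pow_zero, one_mul]
    refine (measure_mono (fun x hx => hx.1)).trans ?_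
    rw [volume_dI s h hh.le]
  | succ N ih =>
    intro m i hi
    have hLpos : (0:ℝ) < h / 2 ^ m := by positivity
    set c : ℝ := avg s h u m i with hc
    set S : Set (ℕ × ℕ) := Stop s h u b m i with hSdef
    have hsub0 : dI s h m i ⊆ Set.Ico s (s + h) := dI_subset_base s h hh.le hi
    -- top interval is good
    have htop : osc s h u c m i ≤ ENNReal.ofReal (b * (h / 2 ^ m)) := by
      refine (OSC hi).trans (ENNReal.ofReal_le_ofReal ?_)
      nlinarith
    -- stopping intervals have controlled oscillation (via their good parents)
    have hoscp : ∀ p ∈ S, osc s h u c p.1 p.2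
        ≤ ENNReal.ofReal ((2 * b) * (h / 2 ^ p.1)) := by
      rintro p ⟨hpm, hplt, hpanc, hpbad, hpmax⟩
      have hp1 : p.1 - 1 + 1 = p.1 := by omega
      have hpar := hpmax (p.1 - 1) (by omega) (by omega)
      rw [not_lt] at hpar
      have hsubp : dI s h p.1 p.2 ⊆ dI s h (p.1 - 1) (p.2 / 2 ^ (p.1 - (p.1 - 1))) := by
        have := dI_succ_subset s h hh.le (p.1 - 1) p.2
        rw [hp1] at this
        have he : p.1 - (p.1 - 1) = 1 := by omega
        rw [he, pow_one]
        exact this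
      have hosc1 : osc s h u c p.1 p.2
          ≤ osc s h u c (p.1 - 1) (p.2 / 2 ^ (p.1 - (p.1 - 1))) := by
        unfold osc
        exact lintegral_mono_set hsubp
      refine (hosc1.trans hpar).trans (ENNReal.ofReal_le_ofReal (le_of_eq ?_))
      have h2p : (2:ℝ) ^ p.1 = 2 ^ (p.1 - 1) * 2 := by
        rw [← pow_succ]
        congr 1
        omega
      rw [h2p]
      field_simp
    have havgdiff : ∀ p ∈ S, |avg s h u p.1 p.2 - c| ≤ 2 * b := fun p hp =>
      abs_avg_sub_le s h u hloc hh (by linarith) (hoscp p hp)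
    -- the sum of the stopping lengths
    have hsum : ∑' (p : S), volume (dI s h p.1.1 p.1.2)
        ≤ 2⁻¹ * ENNReal.ofReal (h / 2 ^ m) := by
      have hAmeas : ∀ p : S, MeasurableSet (dI s h p.1.1 p.1.2) :=
        fun p => measurableSet_Ico
      have hAdisj : Pairwise (Function.onFun Disjoint
          (fun p : S => dI s h p.1.1 p.1.2)) := by
        intro p q hpq
        exact stop_disjoint s h u hh.le p.2 q.2 (Subtype.coe_injective.ne hpq)
      have key : ENNReal.ofReal b * ∑' (p : S), volume (dI s h p.1.1 p.1.2)
          ≤ ENNReal.ofReal b * (2⁻¹ * ENNReal.ofReal (h / 2 ^ m)) := by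
        calc ENNReal.ofReal b * ∑' (p : S), volume (dI s h p.1.1 p.1.2)
            = ∑' (p : S), ENNReal.ofReal b * volume (dI s h p.1.1 p.1.2) :=
              ENNReal.tsum_mul_left.symm
          _ = ∑' (p : S), ENNReal.ofReal (b * (h / 2 ^ p.1.1)) := by
              congr 1
              funext p
              rw [volume_dI s h hh.le, ← ENNReal.ofReal_mul hb.le]
          _ ≤ ∑' (p : S), osc s h u c p.1.1 p.1.2 := by
              refine ENNReal.tsum_le_tsum fun p => ?_
              exact (p.2.2.2.2.1).le
          _ = ∫⁻ x in ⋃ (p : S), dI s h p.1.1 p.1.2, ENNReal.ofReal |u x - c| := by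
              rw [lintegral_iUnion hAmeas hAdisj]
              rfl
          _ ≤ osc s h u c m i := by
              unfold osc
              refine lintegral_mono_set ?_
              exact Set.iUnion_subset fun p => stop_subset s h u hh.le p.2
          _ ≤ ENNReal.ofReal (M * (h / 2 ^ m)) := OSC hi
          _ ≤ ENNReal.ofReal b * (2⁻¹ * ENNReal.ofReal (h / 2 ^ m)) := by
              rw [show ((2:ℝ≥0∞))⁻¹ = ENNReal.ofReal 2⁻¹ by
                  rw [ENNReal.ofReal_inv_of_pos two_pos]; norm_num,
                ← ENNReal.ofReal_mul (by norm_num), ← ENNReal.ofReal_mul hb.le]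
              refine ENNReal.ofReal_le_ofReal ?_
              nlinarith
      exact (ENNReal.mul_le_mul_iff_right (ENNReal.ofReal_pos.2 hb).ne'
        ENNReal.ofReal_ne_top).1 key
    -- the null set where dyadic differentiation fails
    have hae := ae_dyadic_diff s h u hloc hh
    set N₀ : Set ℝ := {x | ¬ (x ∈ Set.Ico s (s + h) →
      Tendsto (fun n => (∫ y in dI s h n (jx s h x n), |u y - u x|) / (h / 2 ^ n))
        atTop (𝓝 0))} with hN₀
    have hN₀null : volume N₀ = 0 := ae_iff.1 hae
    -- covering of the superlevel set
    have hcover : {x | x ∈ dI s h m i ∧ 3 * b * (N + 1 : ℕ) < |u x - c|}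
        ⊆ N₀ ∪ ⋃ (p : S),
          {x | x ∈ dI s h p.1.1 p.1.2 ∧ 3 * b * N < |u x - avg s h u p.1.1 p.1.2|} := by
      rintro x ⟨hxJ, hxlvl⟩
      by_cases hx0 : x ∈ N₀
      · exact Set.mem_union_left _ hx0
      · right
        have hxI : x ∈ Set.Ico s (s + h) := hsub0 hxJ
        have htend := not_not.1 (fun hcon => hx0 hcon) hxI
        -- not all dyadic intervals around x are good
        have hjxm : jx s h x m = i := by
          by_contra hne
          exact Set.disjoint_left.1 (dI_disjoint s h hh.le hne)
            (mem_dI_jx s h hh hxI m) hxJ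
        have hnotall : ¬ ∀ n, m ≤ n →
            osc s h u c n (jx s h x n) ≤ ENNReal.ofReal (b * (h / 2 ^ n)) := by
          intro hall
          have := abs_le_of_all_good s h u hloc hh hb.le htend hall
          have hN1 : (1:ℝ) ≤ ((N:ℝ) + 1) := by
            have := Nat.cast_nonneg (α := ℝ) N
            linarith
          push_cast at hxlvl
          nlinarith
        push_neg at hnotall
        obtain ⟨n₁, hn₁m, hn₁bad⟩ := hnotall
        have hPex : ∃ n, m ≤ n ∧
            ENNReal.ofReal (b * (h / 2 ^ n)) < osc s h u c n (jx s h x n) :=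
          ⟨n₁, hn₁m, hn₁bad⟩
        classical
        obtain ⟨n₀, hspec, hmin⟩ : ∃ n₀, (m ≤ n₀ ∧
            ENNReal.ofReal (b * (h / 2 ^ n₀)) < osc s h u c n₀ (jx s h x n₀)) ∧
            ∀ k < n₀, ¬(m ≤ k ∧
              ENNReal.ofReal (b * (h / 2 ^ k)) < osc s h u c k (jx s h x k)) :=
          ⟨Nat.find hPex, Nat.find_spec hPex, fun k hk => Nat.find_min hPex hk⟩
        obtain ⟨hn₀m, hn₀bad⟩ := hspec
        have hmgood : ¬ (m ≤ m ∧
            ENNReal.ofReal (b * (h / 2 ^ m)) < osc s h u c m (jx s h x m)) := by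
          rw [hjxm]
          exact fun hcon => absurd htop (not_le.2 hcon.2)
        have hn₀gt : m < n₀ := by
          rcases Nat.lt_or_ge m n₀ with hlt | hge
          · exact hlt
          · exfalso
            exact hmgood ⟨le_refl m, (le_antisymm hge hn₀m) ▸ hn₀bad⟩
        set p : ℕ × ℕ := (n₀, jx s h x n₀) with hp
        have hpS : p ∈ S := by
          refine ⟨hn₀gt, jx_lt s h hh hxI n₀, ?_, hn₀bad, ?_⟩
          · rw [jx_div s h x hn₀m, hjxm]
          · intro k hkm hkn
            rw [jx_div s h x (le_of_lt hkn)]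
            intro hbadk
            exact hmin k hkn ⟨hkm, hbadk⟩
        refine Set.mem_iUnion.2 ⟨⟨p, hpS⟩, ?_⟩
        refine ⟨mem_dI_jx s h hh hxI n₀, ?_⟩
        have hd := havgdiff p hpS
        have htri : |u x - c| ≤ |u x - avg s h u p.1 p.2| + |avg s h u p.1 p.2 - c| := by
          calc |u x - c| = |(u x - avg s h u p.1 p.2) + (avg s h u p.1 p.2 - c)| := by
                ring_nf
            _ ≤ _ := abs_add_le _ _
        push_cast at hxlvl
        simp only [hp] at hd htri ⊢
        nlinarith
    -- measure computation
    calc volume {x | x ∈ dI s h m i ∧ 3 * b * (N + 1 : ℕ) < |u x - c|}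
        ≤ volume (N₀ ∪ ⋃ (p : S),
            {x | x ∈ dI s h p.1.1 p.1.2 ∧ 3 * b * N < |u x - avg s h u p.1.1 p.1.2|}) :=
          measure_mono hcover
      _ ≤ volume N₀ + volume (⋃ (p : S),
            {x | x ∈ dI s h p.1.1 p.1.2 ∧ 3 * b * N < |u x - avg s h u p.1.1 p.1.2|}) :=
          measure_union_le _ _
      _ ≤ 0 + ∑' (p : S), volume
            {x | x ∈ dI s h p.1.1 p.1.2 ∧ 3 * b * N < |u x - avg s h u p.1.1 p.1.2|} := by
          rw [hN₀null]
          exact add_le_add le_rfl (measure_iUnion_le _)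
      _ ≤ ∑' (p : S), 2⁻¹ ^ N * ENNReal.ofReal (h / 2 ^ p.1.1) := by
          rw [zero_add]
          exact ENNReal.tsum_le_tsum fun p => ih p.1.1 p.1.2 p.2.2.1
      _ = 2⁻¹ ^ N * ∑' (p : S), volume (dI s h p.1.1 p.1.2) := by
          rw [← ENNReal.tsum_mul_left]
          congr 1
          funext p
          rw [volume_dI s h hh.le]
      _ ≤ 2⁻¹ ^ N * (2⁻¹ * ENNReal.ofReal (h / 2 ^ m)) :=
          mul_le_mul_right hsum _
      _ = 2⁻¹ ^ (N + 1) * ENNReal.ofReal (h / 2 ^ m) := by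
          rw [pow_succ]
          ring

end JNmain

section ExpFinite

open Filter

variable (u : ℝ → ℝ)

lemma exp_finite (hu : Measurable u) (hloc : LocallyIntegrable u volume) (hh : 0 < h)
    (HE : (∫⁻ x in Set.Ico s (s + h), ∫⁻ y in Set.Ico s (s + h),
        ENNReal.ofReal ((u x - u y)^2 / (x - y)^2))
      ≤ ENNReal.ofReal ((Real.log 2 / 8)^2)) :
    (∫⁻ x in Set.Ico s (s + h), ENNReal.ofReal (Real.exp (u x))) < ⊤ := by
  have hlog : 0 < Real.log 2 := Real.log_pos one_lt_two
  set M : ℝ := Real.log 2 / 8 with hMdef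
  set b : ℝ := Real.log 2 / 4 with hbdef
  have hM : 0 ≤ M := by rw [hMdef]; positivity
  have hb : 0 < b := by rw [hbdef]; positivity
  have hexp3b : Real.exp (3 * b) < 2 := by
    have : 3 * b < Real.log 2 := by rw [hbdef]; linarith
    calc Real.exp (3 * b) < Real.exp (Real.log 2) := Real.exp_lt_exp.2 this
      _ = 2 := Real.exp_log two_pos
  have OSC : ∀ {n j : ℕ}, j < 2^n →
      osc s h u (avg s h u n j) n j ≤ ENNReal.ofReal (M * (h / 2^n)) :=
    fun hj => bmo s h u hu hloc hh hM HE hj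
  have JN := jn s h u hu hloc hh hM (le_of_eq (by rw [hMdef, hbdef]; ring)) hb OSC
  set A : ℝ := avg s h u 0 0 with hAdef
  have hg : Measurable (fun x => |u x - A|) := (hu.sub measurable_const).abs
  have hW : ∀ n : ℕ, volume {x | x ∈ Set.Ico s (s + h) ∧ 3*b*n < |u x - A|}
      ≤ 2⁻¹^n * ENNReal.ofReal h := by
    intro n
    have hJn := JN n 0 0 (by norm_num)
    rw [dI_zero s h] at hJn
    simpa using hJn
  have hvolJ : volume (Set.Ico s (s + h)) = ENNReal.ofReal h := by
    rw [Real.volume_Ico]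
    congr 1
    ring
  -- reduce to the oscillation
  have step1 : (∫⁻ x in Set.Ico s (s + h), ENNReal.ofReal (Real.exp (u x)))
      ≤ ENNReal.ofReal (Real.exp A) *
        ∫⁻ x in Set.Ico s (s + h), ENNReal.ofReal (Real.exp |u x - A|) := by
    rw [← lintegral_const_mul' _ _ ENNReal.ofReal_ne_top]
    refine lintegral_mono fun x => ?_
    rw [← ENNReal.ofReal_mul (Real.exp_nonneg _), ← Real.exp_add]
    refine ENNReal.ofReal_le_ofReal (Real.exp_le_exp.2 ?_)
    have := le_abs_self (u x - A)
    linarith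
  -- layers
  set V : ℕ → Set ℝ := fun n =>
    {x | x ∈ Set.Ico s (s + h) ∧ |u x - A| ≤ 3*b*(n+1) ∧ (3*b*n < |u x - A| ∨ n = 0)}
    with hVdef
  have hVmeas : ∀ n, MeasurableSet (V n) := by
    intro n
    have h1 : MeasurableSet {x : ℝ | |u x - A| ≤ 3*b*(n+1)} := hg measurableSet_Iic
    have h2 : MeasurableSet {x : ℝ | 3*b*(n:ℝ) < |u x - A|} := hg measurableSet_Ioi
    have hVeq : V n = Set.Ico s (s+h) ∩ ({x | |u x - A| ≤ 3*b*(n+1)} ∩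
        ({x | 3*b*(n:ℝ) < |u x - A|} ∪ {x : ℝ | n = 0})) := by
      ext x
      simp only [hVdef, Set.mem_setOf_eq, Set.mem_inter_iff, Set.mem_union]
      try tauto
    rw [hVeq]
    exact measurableSet_Ico.inter (h1.inter (h2.union (MeasurableSet.const _)))
  have hcoverV : Set.Ico s (s + h) ⊆ ⋃ n, V n := by
    intro x hx
    have hex : ∃ n : ℕ, |u x - A| ≤ 3*b*(n+1) := by
      obtain ⟨n, hn⟩ := exists_nat_ge (|u x - A| / (3*b))
      refine ⟨n, ?_⟩
      have h3b : (0:ℝ) < 3*b := by linarith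
      rw [div_le_iff₀ h3b] at hn
      nlinarith
    classical
    obtain ⟨n₀, hspec, hmin⟩ : ∃ n₀ : ℕ, (|u x - A| ≤ 3*b*((n₀:ℝ)+1)) ∧
        ∀ k : ℕ, k < n₀ → ¬(|u x - A| ≤ 3*b*((k:ℝ)+1)) :=
      ⟨Nat.find hex, Nat.find_spec hex, fun k hk => Nat.find_min hex hk⟩
    refine Set.mem_iUnion.2 ⟨n₀, hx, hspec, ?_⟩
    rcases Nat.eq_zero_or_pos n₀ with h0 | hpos
    · exact Or.inr h0
    · left
      have hlast := hmin (n₀ - 1) (by omega)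
      rw [not_le] at hlast
      have hcast : ((n₀ - 1 : ℕ) : ℝ) = (n₀ : ℝ) - 1 := by
        rw [Nat.cast_sub hpos]
        norm_num
      rw [hcast] at hlast
      nlinarith
  have hVbound : ∀ n : ℕ, (∫⁻ x in V n, ENNReal.ofReal (Real.exp |u x - A|))
      ≤ ENNReal.ofReal (Real.exp (3*b) * h) *
          (ENNReal.ofReal (Real.exp (3*b) / 2))^n := by
    intro n
    have hb1 : (∫⁻ x in V n, ENNReal.ofReal (Real.exp |u x - A|))
        ≤ ENNReal.ofReal (Real.exp (3*b*(n+1))) * volume (V n) := by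
      calc (∫⁻ x in V n, ENNReal.ofReal (Real.exp |u x - A|))
          ≤ ∫⁻ _ in V n, ENNReal.ofReal (Real.exp (3*b*(n+1))) := by
            refine setLIntegral_mono' (hVmeas n) fun x hx => ?_
            exact ENNReal.ofReal_le_ofReal (Real.exp_le_exp.2 hx.2.1)
        _ = ENNReal.ofReal (Real.exp (3*b*(n+1))) * volume (V n) := by
            rw [setLIntegral_const]
    have hb2 : volume (V n) ≤ 2⁻¹^n * ENNReal.ofReal h := by
      rcases Nat.eq_zero_or_pos n with h0 | hpos
      · subst h0
        simp only [pow_zero, one_mul]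
        refine (measure_mono (fun x hx => hx.1)).trans_eq hvolJ
      · refine (measure_mono ?_).trans (hW n)
        rintro x ⟨hx1, hx2, hx3⟩
        exact ⟨hx1, hx3.resolve_right (by omega)⟩
    refine hb1.trans ?_
    have h2inv : (2⁻¹ : ℝ≥0∞) = ENNReal.ofReal 2⁻¹ := by
      rw [ENNReal.ofReal_inv_of_pos two_pos]
      norm_num
    calc ENNReal.ofReal (Real.exp (3*b*(n+1))) * volume (V n)
        ≤ ENNReal.ofReal (Real.exp (3*b*(n+1))) * (2⁻¹^n * ENNReal.ofReal h) :=
          mul_le_mul_right hb2 _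
      _ = ENNReal.ofReal (Real.exp (3*b) * h) *
          (ENNReal.ofReal (Real.exp (3*b) / 2))^n := by
          rw [h2inv, ← ENNReal.ofReal_pow (by norm_num),
            ← ENNReal.ofReal_pow (by positivity),
            ← ENNReal.ofReal_mul (by positivity),
            ← ENNReal.ofReal_mul (by positivity),
            ← ENNReal.ofReal_mul (by positivity)]
          congr 1
          rw [show 3*b*((n:ℝ)+1) = (n:ℝ)*(3*b) + 3*b by ring, Real.exp_add,
            Real.exp_nat_mul, div_pow, inv_pow]
          ring
  set r : ℝ≥0∞ := ENNReal.ofReal (Real.exp (3*b) / 2) with hrdef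
  have hr : r < 1 := by
    rw [hrdef, ← ENNReal.ofReal_one]
    refine (ENNReal.ofReal_lt_ofReal_iff one_pos).2 ?_
    linarith
  have hsumfin : (∑' n : ℕ, r^n) < ⊤ := by
    rw [ENNReal.tsum_geometric]
    exact ENNReal.inv_lt_top.2 (tsub_pos_of_lt hr)
  have step2 : (∫⁻ x in Set.Ico s (s + h), ENNReal.ofReal (Real.exp |u x - A|))
      ≤ ENNReal.ofReal (Real.exp (3*b) * h) * ∑' n : ℕ, r^n := by
    calc (∫⁻ x in Set.Ico s (s + h), ENNReal.ofReal (Real.exp |u x - A|))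
        ≤ ∫⁻ x in ⋃ n, V n, ENNReal.ofReal (Real.exp |u x - A|) :=
          lintegral_mono_set hcoverV
      _ ≤ ∑' n : ℕ, ∫⁻ x in V n, ENNReal.ofReal (Real.exp |u x - A|) :=
          lintegral_iUnion_le _ _
      _ ≤ ∑' n : ℕ, ENNReal.ofReal (Real.exp (3*b) * h) * r^n :=
          ENNReal.tsum_le_tsum fun n => hVbound n
      _ = ENNReal.ofReal (Real.exp (3*b) * h) * ∑' n : ℕ, r^n :=
          ENNReal.tsum_mul_left
  refine lt_of_le_of_lt (step1.trans (mul_le_mul_right step2 _)) ?_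
  refine ENNReal.mul_lt_top ENNReal.ofReal_lt_top ?_
  exact ENNReal.mul_lt_top ENNReal.ofReal_lt_top hsumfin

end ExpFinite

end HHalfJN

/-- If `u : ℝ → ℝ` is measurable, locally integrable, with finite `H^{1/2}(ℝ)` seminorm,
then `e^u` is locally integrable: it is integrable on every bounded interval. -/
theorem exp_of_hHalf_locally_integrable
    (u : ℝ → ℝ) (hmeas : Measurable u) (hloc : LocallyIntegrable u volume)
    (hfin : hHalfSeminormSq u < ⊤) (a b : ℝ) :
    IntegrableOn (fun x => Real.exp (u x)) (Set.Icc a b) volume := by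
  classical
  set G : ℝ → ℝ≥0∞ := fun x => ∫⁻ y, ENNReal.ofReal ((u x - u y) ^ 2 / (x - y) ^ 2)
    with hGdef
  have hGfin : (∫⁻ x, G x) ≠ ⊤ := by
    intro htop
    unfold hHalfSeminormSq at hfin
    rw [show (∫⁻ x, ∫⁻ y, ENNReal.ofReal ((u x - u y) ^ 2 / (x - y) ^ 2)) = ∫⁻ x, G x
      from rfl, htop, ENNReal.mul_top] at hfin
    · exact lt_irrefl _ hfin
    · have hπ : (0:ℝ) < Real.pi := Real.pi_pos
      have : (0:ℝ) < 1 / (2 * Real.pi ^ 2) := by positivity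
      exact (ENNReal.ofReal_pos.2 this).ne'
  have hε0 : (ENNReal.ofReal ((Real.log 2 / 8) ^ 2)) ≠ 0 := by
    have hlog : 0 < Real.log 2 := Real.log_pos one_lt_two
    exact (ENNReal.ofReal_pos.2 (by positivity)).ne'
  obtain ⟨δ, δpos, hδ⟩ := exists_pos_setLIntegral_lt_of_measure_lt (μ := volume)
    (f := G) hGfin hε0
  -- choose a fine partition scale
  have hδ1 : (0:ℝ≥0∞) < min δ 1 := lt_min δpos zero_lt_one
  have hδ1top : min δ 1 ≠ ⊤ := (lt_of_le_of_lt (min_le_right _ _) ENNReal.one_lt_top).ne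
  set dr : ℝ := (min δ 1).toReal with hdr
  have hdrpos : 0 < dr := ENNReal.toReal_pos hδ1.ne' hδ1top
  set len : ℝ := max (b - a) 0 + 1 with hlen
  have hlenpos : 0 < len := by
    have := le_max_right (b - a) 0
    rw [hlen]; linarith
  obtain ⟨N, hN⟩ := exists_nat_gt (len / dr)
  have hNpos : 0 < (N:ℝ) := lt_of_le_of_lt (by positivity) hN
  have hN0 : (N:ℝ) ≠ 0 := hNpos.ne'
  set l : ℝ := len / N with hldef
  have hlpos : 0 < l := by rw [hldef]; positivity
  have hNl : (N:ℝ) * l = len := by rw [hldef]; field_simp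
  have hlsmall : ENNReal.ofReal l < δ := by
    have h1 : l < dr := by
      rw [hldef, div_lt_iff₀ hNpos]
      rw [div_lt_iff₀ hdrpos] at hN
      nlinarith
    calc ENNReal.ofReal l < ENNReal.ofReal dr := ENNReal.ofReal_lt_ofReal_iff hdrpos |>.2 h1
      _ = min δ 1 := ENNReal.ofReal_toReal hδ1top
      _ ≤ δ := min_le_left _ _
  -- each piece has finite exponential integral
  have hpiece : ∀ k : ℕ, (∫⁻ x in Set.Ico (a + k * l) ((a + k * l) + l),
      ENNReal.ofReal (Real.exp (u x))) < ⊤ := by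
    intro k
    refine HHalfJN.exp_finite (a + k * l) l u hmeas hloc hlpos ?_
    have hvol : volume (Set.Ico (a + k * l) ((a + k * l) + l)) = ENNReal.ofReal l := by
      rw [Real.volume_Ico]; congr 1; ring
    refine le_of_lt (lt_of_le_of_lt ?_ (hδ _ (hvol ▸ hlsmall)))
    refine lintegral_mono fun x => ?_
    exact setLIntegral_le_lintegral _ _
  -- covering of Icc a b
  have hcov : Set.Icc a b ⊆ ⋃ (k : Fin N), Set.Ico (a + k * l) ((a + k * l) + l) := by
    intro x hx
    obtain ⟨hx1, hx2⟩ := hx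
    set θ : ℝ := (x - a) / l with hθ
    have hθ0 : 0 ≤ θ := by
      rw [hθ]
      exact div_nonneg (by linarith) hlpos.le
    have hk1 : (⌊θ⌋₊ : ℝ) ≤ θ := Nat.floor_le hθ0
    have hk2 : θ < ⌊θ⌋₊ + 1 := Nat.lt_floor_add_one _
    have hxa : x = a + θ * l := by rw [hθ]; field_simp; ring
    have hθN : θ < N := by
      rw [hθ, div_lt_iff₀ hlpos, hNl]
      have h1 := le_max_left (b - a) 0
      rw [hlen]
      linarith
    have hkN : ⌊θ⌋₊ < N := by
      rw [← Nat.cast_lt (α := ℝ)]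
      exact lt_of_le_of_lt hk1 hθN
    refine Set.mem_iUnion.2 ⟨⟨⌊θ⌋₊, hkN⟩, ?_⟩
    constructor
    · show a + (⌊θ⌋₊ : ℝ) * l ≤ x
      rw [hxa]
      nlinarith
    · show x < a + (⌊θ⌋₊ : ℝ) * l + l
      rw [hxa]
      nlinarith
  -- finiteness of the lintegral over Icc a b
  have hfinIcc : (∫⁻ x in Set.Icc a b, ENNReal.ofReal (Real.exp (u x))) < ⊤ := by
    calc (∫⁻ x in Set.Icc a b, ENNReal.ofReal (Real.exp (u x)))
        ≤ ∫⁻ x in ⋃ (k : Fin N), Set.Ico (a + k * l) ((a + k * l) + l),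
            ENNReal.ofReal (Real.exp (u x)) := lintegral_mono_set hcov
      _ ≤ ∑' (k : Fin N), ∫⁻ x in Set.Ico (a + k * l) ((a + k * l) + l),
            ENNReal.ofReal (Real.exp (u x)) := lintegral_iUnion_le _ _
      _ < ⊤ := by
          rw [tsum_fintype]
          exact ENNReal.sum_lt_top.2 fun k _ => hpiece k
  -- conclude integrability
  constructor
  · exact ((Real.measurable_exp.comp hmeas).aestronglyMeasurable)
  · rw [hasFiniteIntegral_iff_ofReal (Filter.Eventually.of_forall fun x => Real.exp_nonneg _)]
    exact hfinIcc
end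

section
/- Let u : ℝ → ℝ be Lebesgue measurable and locally integrable with finite H^{1/2}(ℝ) seminorm. Then there exist δ > 0 and a constant C ≥ 1 such that for every bounded interval I with 0 < |I| ≤ δ, exp(u_I) ≤ (1/|I|)∫_I e^{u(x)} dx ≤ C · exp(u_I). -/
open MeasureTheory
open scoped ENNReal

open MeasureTheory Set Filter Metric
open scoped ENNReal

namespace ExpAvg

variable (u : ℝ → ℝ) (a L : ℝ)


variable (u : ℝ → ℝ) (a L : ℝ)

/-- dyadic subintervals of `Ioc a (a+L)` -/
def D (n i : ℕ) : Set ℝ := Set.Ioc (a + i * (L / 2 ^ n)) (a + (i + 1) * (L / 2 ^ n))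

lemma measurableSet_D (n i : ℕ) : MeasurableSet (D a L n i) := measurableSet_Ioc

lemma volume_D (n i : ℕ) : volume (D a L n i) = ENNReal.ofReal (L / 2 ^ n) := by
  rw [D, Real.volume_Ioc]
  congr 1
  ring

lemma D_zero : D a L 0 0 = Set.Ioc a (a + L) := by
  simp [D]

lemma D_subset_base (hL : 0 < L) {n i : ℕ} (hi : i + 1 ≤ 2 ^ n) :
    D a L n i ⊆ Set.Ioc a (a + L) := by
  have h2 : (0:ℝ) < 2 ^ n := by positivity
  have hpos : (0:ℝ) < L / 2 ^ n := div_pos hL h2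
  have hcancel : (2:ℝ) ^ n * (L / 2 ^ n) = L := by field_simp
  apply Set.Ioc_subset_Ioc
  · nlinarith [mul_nonneg (Nat.cast_nonneg (α := ℝ) i) hpos.le]
  · have hle : ((i:ℝ) + 1) ≤ 2 ^ n := by exact_mod_cast hi
    nlinarith [mul_le_mul_of_nonneg_right hle hpos.le]

lemma D_child (hL : 0 < L) (n j : ℕ) : D a L (n + 1) j ⊆ D a L n (j / 2) := by
  have h2 : (0:ℝ) < 2 ^ n := by positivity
  have hpos : (0:ℝ) < L / 2 ^ (n+1) := by positivity
  have hj1' : 2 * ((j/2 : ℕ):ℝ) ≤ (j:ℝ) := by exact_mod_cast (by omega : 2 * (j / 2) ≤ j)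
  have hj2' : (j:ℝ) + 1 ≤ 2 * ((j/2 : ℕ):ℝ) + 2 := by
    exact_mod_cast (by omega : j + 1 ≤ 2 * (j / 2) + 2)
  have hhalf : (L / 2 ^ n) = 2 * (L / 2 ^ (n+1)) := by
    rw [pow_succ]; field_simp
  apply Set.Ioc_subset_Ioc
  · rw [hhalf]
    nlinarith [mul_le_mul_of_nonneg_right hj1' hpos.le]
  · rw [hhalf]
    nlinarith [mul_le_mul_of_nonneg_right hj2' hpos.le]

lemma D_descend (hL : 0 < L) (n k j : ℕ) : D a L (n + k) j ⊆ D a L n (j / 2 ^ k) := by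
  induction k generalizing j with
  | zero => simp
  | succ k ih =>
    have h1 : D a L (n + (k+1)) j ⊆ D a L (n + k) (j / 2) := D_child a L hL (n + k) j
    refine h1.trans ?_
    have := ih (j / 2)
    rwa [Nat.div_div_eq_div_mul, (by ring : 2 * 2 ^ k = 2 ^ (k+1))] at this

lemma D_unique (hL : 0 < L) {n i j : ℕ} {x : ℝ} (hi : x ∈ D a L n i) (hj : x ∈ D a L n j) :
    i = j := by
  by_contra hne
  have h2 : (0:ℝ) < 2 ^ n := by positivity
  have hpos : (0:ℝ) < L / 2 ^ n := div_pos hL h2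
  rcases lt_or_gt_of_ne hne with h | h
  · have : (i:ℝ) + 1 ≤ j := by exact_mod_cast h
    obtain ⟨h1, h2'⟩ := hi
    obtain ⟨h3, h4⟩ := hj
    nlinarith [mul_le_mul_of_nonneg_right this hpos.le]
  · have : (j:ℝ) + 1 ≤ i := by exact_mod_cast h
    obtain ⟨h1, h2'⟩ := hi
    obtain ⟨h3, h4⟩ := hj
    nlinarith [mul_le_mul_of_nonneg_right this hpos.le]

/-- index of the level-`n` dyadic interval containing `x` -/
noncomputable def idx (n : ℕ) (x : ℝ) : ℕ := ⌈(x - a) * 2 ^ n / L⌉₊ - 1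

lemma idx_spec (hL : 0 < L) {x : ℝ} (hx : x ∈ Set.Ioc a (a + L)) (n : ℕ) :
    x ∈ D a L n (idx a L n x) ∧ idx a L n x + 1 ≤ 2 ^ n := by
  have h2 : (0:ℝ) < 2 ^ n := by positivity
  set r : ℝ := (x - a) * 2 ^ n / L with hr
  have hr0 : 0 < r := by
    apply div_pos (mul_pos (by linarith [hx.1]) h2) hL
  have hrle : r ≤ 2 ^ n := by
    rw [hr, div_le_iff₀ hL]
    nlinarith [hx.2]
  have hk1 : 1 ≤ ⌈r⌉₊ := Nat.one_le_ceil_iff.2 hr0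
  have hkle : ⌈r⌉₊ ≤ 2 ^ n := Nat.ceil_le.2 (by exact_mod_cast hrle)
  have hidx : idx a L n x = ⌈r⌉₊ - 1 := rfl
  have hcast : ((idx a L n x : ℕ):ℝ) = (⌈r⌉₊ : ℝ) - 1 := by
    rw [hidx]
    push_cast [Nat.cast_sub hk1]
    ring
  have hub : r ≤ (⌈r⌉₊ : ℝ) := Nat.le_ceil r
  have hlb : (⌈r⌉₊ : ℝ) < r + 1 := Nat.ceil_lt_add_one hr0.le
  have hxa : x - a = r * (L / 2 ^ n) := by
    rw [hr]; field_simp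
  constructor
  · constructor
    · rw [hcast]
      have hpos : (0:ℝ) < L / 2 ^ n := div_pos hL h2
      nlinarith [mul_lt_mul_of_pos_right hlb hpos]
    · rw [hcast]
      have hpos : (0:ℝ) < L / 2 ^ n := div_pos hL h2
      nlinarith [mul_le_mul_of_nonneg_right hub hpos.le]
  · rw [hidx]; omega

lemma idx_anc (hL : 0 < L) {x : ℝ} (hx : x ∈ Set.Ioc a (a + L)) {n' n : ℕ} (h : n' ≤ n) :
    idx a L n' x = idx a L n x / 2 ^ (n - n') := by
  obtain ⟨k, rfl⟩ := Nat.exists_eq_add_of_le h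
  have h1 := (idx_spec a L hL hx (n' + k)).1
  have h2 := D_descend a L hL n' k (idx a L (n' + k) x) h1
  have h3 := (idx_spec a L hL hx n').1
  rw [D_unique a L hL h3 h2, Nat.add_sub_cancel_left]



-- helper: Jensen for squares
lemma sq_avg_le {s : Set ℝ} (f : ℝ → ℝ)
    (hf : IntegrableOn f s) (hf2 : IntegrableOn (fun x => f x ^ 2) s)
    (hfin : volume s ≠ ⊤) :
    (∫ x in s, f x) ^ 2 ≤ (∫ x in s, f x ^ 2) * (volume s).toReal := by
  set V := (volume s).toReal with hV
  have hV0 : 0 ≤ V := ENNReal.toReal_nonneg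
  rcases eq_or_lt_of_le hV0 with hV0' | hVpos
  · have hμ : volume s = 0 := by
      have := ENNReal.toReal_eq_zero_iff (volume s)
      rw [← hV0'] at hV
      tauto
    rw [Measure.restrict_eq_zero.2 hμ]
    simp [← hV0']
  · set m := (∫ x in s, f x) / V with hm
    have h0 : 0 ≤ ∫ x in s, (f x - m) ^ 2 :=
      integral_nonneg (fun x => sq_nonneg _)
    have hconst : IntegrableOn (fun _ : ℝ => m ^ 2) s := by
      exact integrableOn_const hfin
    have hmul : IntegrableOn (fun x => (2 * m) * f x) s := hf.const_mul _
    have hexp : ∫ x in s, (f x - m) ^ 2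
        = (∫ x in s, f x ^ 2) - (2 * m) * (∫ x in s, f x) + m ^ 2 * V := by
      have : (fun x => (f x - m) ^ 2) = fun x => (f x ^ 2 - (2 * m) * f x) + m ^ 2 := by
        funext x; ring
      have h1 : IntegrableOn (fun x => f x ^ 2 - 2 * m * f x) s := hf2.sub hmul
      rw [this, integral_add h1 hconst, integral_sub hf2 hmul,
        MeasureTheory.integral_const_mul, setIntegral_const, smul_eq_mul, measureReal_def, hV]
      ring
    have hmV : m * V = ∫ x in s, f x := by
      rw [hm]; field_simp
    nlinarith [h0, hexp, hmV]


/-- average of u over dyadic interval -/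
noncomputable def c (n i : ℕ) : ℝ := (∫ x in D a L n i, u x) / (L / 2 ^ n)

def P (m n i : ℕ) : Prop := (m : ℝ) / 2 < |c u a L n i - c u a L 0 0|

def Stop (m : ℕ) : Set (ℕ × ℕ) :=
  {p | p.2 + 1 ≤ 2 ^ p.1 ∧ P u a L m p.1 p.2 ∧
    ∀ k, 0 < k → k ≤ p.1 → ¬ P u a L m (p.1 - k) (p.2 / 2 ^ k)}

def X (m : ℕ) : Set ℝ := ⋃ p ∈ Stop u a L m, D a L p.1 p.2


section Stopping

variable {u : ℝ → ℝ} {a L : ℝ}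

lemma volume_D_ne_top (n i : ℕ) : volume (D a L n i) ≠ ⊤ := by
  rw [volume_D]; exact ENNReal.ofReal_ne_top

lemma volume_D_toReal (hL : 0 < L) (n i : ℕ) :
    (volume (D a L n i)).toReal = L / 2 ^ n := by
  rw [volume_D]
  exact ENNReal.toReal_ofReal (by positivity)

lemma integrableOn_D (hL : 0 < L)
    (hu1 : IntegrableOn u (Set.Ioc a (a + L))) {n i : ℕ} (hi : i + 1 ≤ 2 ^ n) :
    IntegrableOn u (D a L n i) :=
  hu1.mono_set (D_subset_base a L hL hi)

lemma integrableOn_D_sq (hL : 0 < L)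
    (hu2 : IntegrableOn (fun x => u x ^ 2) (Set.Ioc a (a + L))) {n i : ℕ}
    (hi : i + 1 ≤ 2 ^ n) :
    IntegrableOn (fun x => u x ^ 2) (D a L n i) :=
  hu2.mono_set (D_subset_base a L hL hi)

lemma integrableOn_D_sub_sq (hL : 0 < L)
    (hu1 : IntegrableOn u (Set.Ioc a (a + L)))
    (hu2 : IntegrableOn (fun x => u x ^ 2) (Set.Ioc a (a + L))) {n i : ℕ}
    (hi : i + 1 ≤ 2 ^ n) (r : ℝ) :
    IntegrableOn (fun x => (u x - r) ^ 2) (D a L n i) := by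
  have heq : (fun x => (u x - r) ^ 2) = fun x => (u x ^ 2 - (2 * r) * u x) + r ^ 2 := by
    funext x; ring
  rw [heq]
  have h1 : IntegrableOn (fun x => u x ^ 2 - (2 * r) * u x) (D a L n i) :=
    (integrableOn_D_sq hL hu2 hi).sub ((integrableOn_D hL hu1 hi).const_mul _)
  apply h1.add
  exact integrableOn_const (volume_D_ne_top n i)

lemma sq_diff_avg (hL : 0 < L)
    (hu1 : IntegrableOn u (Set.Ioc a (a + L)))
    (hu2 : IntegrableOn (fun x => u x ^ 2) (Set.Ioc a (a + L))) {n i : ℕ}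
    (hi : i + 1 ≤ 2 ^ n) (r : ℝ) :
    (c u a L n i - r) ^ 2 * (L / 2 ^ n) ≤ ∫ x in D a L n i, (u x - r) ^ 2 := by
  have hV : (volume (D a L n i)).toReal = L / 2 ^ n := volume_D_toReal hL n i
  have hVpos : (0:ℝ) < L / 2 ^ n := by positivity
  have key := sq_avg_le (fun x => u x - r)
    ((integrableOn_D hL hu1 hi).sub (integrableOn_const (volume_D_ne_top n i)))
    (integrableOn_D_sub_sq hL hu1 hu2 hi r) (volume_D_ne_top n i)
  rw [hV] at key
  have hsub : ∫ x in D a L n i, (u x - r)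
      = (c u a L n i - r) * (L / 2 ^ n) := by
    rw [integral_sub (integrableOn_D hL hu1 hi) (integrableOn_const (volume_D_ne_top n i)), setIntegral_const, smul_eq_mul, measureReal_def, hV]
    have : c u a L n i * (L / 2 ^ n) = ∫ x in D a L n i, u x := by
      rw [c]; field_simp
    nlinarith [this]
  rw [hsub] at key
  nlinarith [key, hVpos]

/-- step bound between parent and child averages -/
lemma step_bound (hL : 0 < L)
    (hu1 : IntegrableOn u (Set.Ioc a (a + L)))
    (hu2 : IntegrableOn (fun x => u x ^ 2) (Set.Ioc a (a + L)))
    (hosc : ∀ n i, i + 1 ≤ 2 ^ n →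
      ∫ x in D a L n i, (u x - c u a L n i) ^ 2 ≤ 1 / 64 * (L / 2 ^ n))
    {n i : ℕ} (hi : i + 1 ≤ 2 ^ (n + 1)) :
    |c u a L (n + 1) i - c u a L n (i / 2)| ≤ 3 / 16 := by
  have hpar : i / 2 + 1 ≤ 2 ^ n := by
    have : (2:ℕ) ^ (n+1) = 2 * 2 ^ n := by ring
    omega
  have h1 : (c u a L (n+1) i - c u a L n (i/2)) ^ 2 * (L / 2 ^ (n+1))
      ≤ ∫ x in D a L (n+1) i, (u x - c u a L n (i/2)) ^ 2 :=
    sq_diff_avg hL hu1 hu2 hi _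
  have h2 : ∫ x in D a L (n+1) i, (u x - c u a L n (i/2)) ^ 2
      ≤ ∫ x in D a L n (i/2), (u x - c u a L n (i/2)) ^ 2 := by
    apply setIntegral_mono_set (integrableOn_D_sub_sq hL hu1 hu2 hpar _)
    · exact Filter.Eventually.of_forall (fun x => sq_nonneg _)
    · exact HasSubset.Subset.eventuallyLE (D_child a L hL n i)
  have h3 := hosc n (i/2) hpar
  have hpow : (L / 2 ^ n) = 2 * (L / 2 ^ (n+1)) := by
    rw [pow_succ]; field_simp
  have hVpos : (0:ℝ) < L / 2 ^ (n+1) := by positivity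
  have hsq : (c u a L (n+1) i - c u a L n (i/2)) ^ 2 ≤ 1 / 32 := by
    rw [hpow] at h3
    have := h1.trans (h2.trans h3)
    nlinarith [this, hVpos]
  have h316 : (0:ℝ) ≤ 3/16 := by norm_num
  rw [abs_le]
  constructor <;> nlinarith [hsq]

lemma stop_abs_le (hL : 0 < L)
    (hu1 : IntegrableOn u (Set.Ioc a (a + L)))
    (hu2 : IntegrableOn (fun x => u x ^ 2) (Set.Ioc a (a + L)))
    (hosc : ∀ n i, i + 1 ≤ 2 ^ n →
      ∫ x in D a L n i, (u x - c u a L n i) ^ 2 ≤ 1 / 64 * (L / 2 ^ n))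
    {m : ℕ} {p : ℕ × ℕ} (hp : p ∈ Stop u a L m) :
    |c u a L p.1 p.2 - c u a L 0 0| ≤ (m : ℝ) / 2 + 3 / 16 := by
  obtain ⟨hvalid, hP, hmin⟩ := hp
  match hn : p.1, hi : p.2 with
  | 0, i =>
    exfalso
    have : i = 0 := by rw [hn] at hvalid; omega
    rw [hn, hi] at hP
    rw [this] at hP
    unfold P at hP
    simp at hP
    have : (0:ℝ) ≤ (m:ℝ)/2 := by positivity
    linarith [hP]
  | (n+1), i =>
    have hnotP : ¬ P u a L m n (i / 2) := by
      have := hmin 1 (by norm_num) (by rw [hn]; omega)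
      rwa [hn, hi, pow_one] at this
    unfold P at hnotP
    push_neg at hnotP
    have hstep : |c u a L (n+1) i - c u a L n (i/2)| ≤ 3/16 :=
      step_bound hL hu1 hu2 hosc (by rw [hn, hi] at hvalid; exact hvalid)
    calc |c u a L (n+1) i - c u a L 0 0|
        ≤ |c u a L (n+1) i - c u a L n (i/2)| + |c u a L n (i/2) - c u a L 0 0| := by
          have := abs_sub_le (c u a L (n+1) i) (c u a L n (i/2)) (c u a L 0 0)
          linarith
      _ ≤ 3/16 + (m:ℝ)/2 := by linarith [hstep, hnotP]
      _ = (m:ℝ)/2 + 3/16 := by ring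

end Stopping

section StopStructure

variable {u : ℝ → ℝ} {a L : ℝ}

lemma stop_eq_of_mem (hL : 0 < L) {m : ℕ} {p q : ℕ × ℕ} {x : ℝ}
    (hp : p ∈ Stop u a L m) (hq : q ∈ Stop u a L m) (hle : p.1 ≤ q.1)
    (hxp : x ∈ D a L p.1 p.2) (hxq : x ∈ D a L q.1 q.2) : p = q := by
  have hxq' : x ∈ D a L (p.1 + (q.1 - p.1)) q.2 := by
    rwa [Nat.add_sub_cancel' hle]
  have hanc : x ∈ D a L p.1 (q.2 / 2 ^ (q.1 - p.1)) :=
    D_descend a L hL p.1 (q.1 - p.1) q.2 hxq'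
  have hidx : p.2 = q.2 / 2 ^ (q.1 - p.1) := D_unique a L hL hxp hanc
  rcases Nat.eq_or_lt_of_le hle with heq | hlt
  · have h0 : q.1 - p.1 = 0 := by omega
    rw [h0, pow_zero, Nat.div_one] at hidx
    exact Prod.ext heq hidx
  · exfalso
    have hmin := hq.2.2 (q.1 - p.1) (by omega) (by omega)
    have : q.1 - (q.1 - p.1) = p.1 := by omega
    rw [this] at hmin
    exact hmin (hidx ▸ hp.2.1)

lemma stop_pairwiseDisjoint (hL : 0 < L) (m : ℕ) :
    (Stop u a L m).PairwiseDisjoint (fun p => D a L p.1 p.2) := by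
  intro p hp q hq hne
  rw [Function.onFun, Set.disjoint_left]
  intro x hxp hxq
  rcases le_total p.1 q.1 with h | h
  · exact hne (stop_eq_of_mem hL hp hq h hxp hxq)
  · exact hne (stop_eq_of_mem hL hq hp h hxq hxp).symm

lemma mem_X_of_P (hL : 0 < L) {m : ℕ} {x : ℝ} (hx : x ∈ Set.Ioc a (a + L))
    (h : ∃ n, P u a L m n (idx a L n x)) : x ∈ X u a L m := by
  classical
  set N := Nat.find h with hNdef
  have hN : P u a L m N (idx a L N x) := Nat.find_spec h
  have hmem : (N, idx a L N x) ∈ Stop u a L m := by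
    refine ⟨(idx_spec a L hL hx N).2, hN, ?_⟩
    intro k hk0 hkN
    have hidx : idx a L (N - k) x = idx a L N x / 2 ^ k := by
      have h2 := idx_anc a L hL hx (show N - k ≤ N by omega)
      rwa [Nat.sub_sub_self hkN] at h2
    rw [← hidx]
    exact Nat.find_min h (show N - k < N by omega)
  exact Set.mem_biUnion hmem (idx_spec a L hL hx N).1

lemma stop_anc (hL : 0 < L) {m : ℕ} {q : ℕ × ℕ} (hq : q ∈ Stop u a L (m + 1)) :
    ∃ p ∈ Stop u a L m, D a L q.1 q.2 ⊆ D a L p.1 p.2 := by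
  classical
  have hPq : P u a L m q.1 q.2 := by
    have h1 := hq.2.1
    unfold P at h1 ⊢
    have : ((m:ℝ)) / 2 < ((m + 1 : ℕ) : ℝ) / 2 := by push_cast; linarith
    linarith
  have hex : ∃ n', n' ≤ q.1 ∧ P u a L m n' (q.2 / 2 ^ (q.1 - n')) :=
    ⟨q.1, le_refl _, by simpa using hPq⟩
  set N := Nat.find hex with hNdef
  obtain ⟨hNle, hNP⟩ : N ≤ q.1 ∧ P u a L m N (q.2 / 2 ^ (q.1 - N)) := Nat.find_spec hex
  have hval : q.2 / 2 ^ (q.1 - N) + 1 ≤ 2 ^ N := by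
    have hval0 := hq.1
    have hlt : q.2 < 2 ^ N * 2 ^ (q.1 - N) := by
      rw [← pow_add]
      have he : N + (q.1 - N) = q.1 := by omega
      rw [he]; omega
    have := (Nat.div_lt_iff_lt_mul (show 0 < 2 ^ (q.1 - N) by positivity)).2 hlt
    omega
  have hmin : ∀ k, 0 < k → k ≤ N → ¬ P u a L m (N - k) (q.2 / 2 ^ (q.1 - N) / 2 ^ k) := by
    intro k hk0 hkN
    have hdiv : q.2 / 2 ^ (q.1 - N) / 2 ^ k = q.2 / 2 ^ (q.1 - (N - k)) := by
      rw [Nat.div_div_eq_div_mul, ← pow_add]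
      congr 2
      omega
    rw [hdiv]
    have hm2 := Nat.find_min hex (show N - k < N by omega)
    intro hPc
    exact hm2 ⟨by omega, hPc⟩
  refine ⟨(N, q.2 / 2 ^ (q.1 - N)), ⟨hval, hNP, hmin⟩, ?_⟩
  have he : q.1 = N + (q.1 - N) := by omega
  intro x hx
  rw [he] at hx
  exact D_descend a L hL N (q.1 - N) q.2 hx

end StopStructure

section MeasureBound

variable {u : ℝ → ℝ} {a L : ℝ}

/-- the sub-stopping intervals occupy at most half the measure -/
lemma fiber_sum (hL : 0 < L)
    (hu1 : IntegrableOn u (Set.Ioc a (a + L)))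
    (hu2 : IntegrableOn (fun x => u x ^ 2) (Set.Ioc a (a + L)))
    (hosc : ∀ n i, i + 1 ≤ 2 ^ n →
      ∫ x in D a L n i, (u x - c u a L n i) ^ 2 ≤ 1 / 64 * (L / 2 ^ n))
    {m : ℕ} {p : ℕ × ℕ} (hp : p ∈ Stop u a L m) :
    ∑' q : {q : ℕ × ℕ // q ∈ Stop u a L (m + 1) ∧ D a L q.1 q.2 ⊆ D a L p.1 p.2},
      volume (D a L q.1.1 q.1.2) ≤ ENNReal.ofReal (1 / 2) * volume (D a L p.1 p.2) := by
  set g : ℝ → ℝ≥0∞ := fun x => ENNReal.ofReal ((u x - c u a L p.1 p.2) ^ 2) with hg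
  -- per-element bound
  have hper : ∀ q : {q : ℕ × ℕ // q ∈ Stop u a L (m + 1) ∧ D a L q.1 q.2 ⊆ D a L p.1 p.2},
      ENNReal.ofReal (25 / 256) * volume (D a L q.1.1 q.1.2)
        ≤ ∫⁻ x in D a L q.1.1 q.1.2, g x := by
    rintro ⟨q, hq, hsub⟩
    have hcq : ((m + 1 : ℕ) : ℝ) / 2 < |c u a L q.1 q.2 - c u a L 0 0| := hq.2.1
    have hcp : |c u a L p.1 p.2 - c u a L 0 0| ≤ (m : ℝ) / 2 + 3 / 16 :=
      stop_abs_le hL hu1 hu2 hosc hp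
    have hdiff : (5: ℝ) / 16 ≤ |c u a L q.1 q.2 - c u a L p.1 p.2| := by
      have htri := abs_sub_abs_le_abs_sub (c u a L q.1 q.2 - c u a L 0 0)
        (c u a L p.1 p.2 - c u a L 0 0)
      have : ((m + 1 : ℕ) : ℝ) = (m : ℝ) + 1 := by push_cast; ring
      rw [this] at hcq
      have heq : (c u a L q.1 q.2 - c u a L 0 0) - (c u a L p.1 p.2 - c u a L 0 0)
          = c u a L q.1 q.2 - c u a L p.1 p.2 := by ring
      rw [heq] at htri
      linarith
    have hsq : (25 : ℝ) / 256 ≤ (c u a L q.1 q.2 - c u a L p.1 p.2) ^ 2 := by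
      have := sq_abs (c u a L q.1 q.2 - c u a L p.1 p.2)
      nlinarith [hdiff]
    have hVq : (0:ℝ) < L / 2 ^ q.1 := by positivity
    have hkey : (25 : ℝ) / 256 * (L / 2 ^ q.1)
        ≤ ∫ x in D a L q.1 q.2, (u x - c u a L p.1 p.2) ^ 2 := by
      have h1 := sq_diff_avg hL hu1 hu2 hq.1 (c u a L p.1 p.2)
      nlinarith [h1, hVq]
    have hint : IntegrableOn (fun x => (u x - c u a L p.1 p.2) ^ 2) (D a L q.1 q.2) :=
      integrableOn_D_sub_sq hL hu1 hu2 hq.1 _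
    have heqr : ENNReal.ofReal (∫ x in D a L q.1 q.2, (u x - c u a L p.1 p.2) ^ 2)
        = ∫⁻ x in D a L q.1 q.2, g x :=
      ofReal_integral_eq_lintegral_ofReal hint
        (Filter.Eventually.of_forall (fun x => sq_nonneg _))
    calc ENNReal.ofReal (25 / 256) * volume (D a L q.1 q.2)
        = ENNReal.ofReal (25 / 256 * (L / 2 ^ q.1)) := by
          rw [volume_D, ENNReal.ofReal_mul (by norm_num)]
      _ ≤ ENNReal.ofReal (∫ x in D a L q.1 q.2, (u x - c u a L p.1 p.2) ^ 2) :=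
          ENNReal.ofReal_le_ofReal hkey
      _ = ∫⁻ x in D a L q.1 q.2, g x := heqr
  -- sum the per-element bounds, and group into D p
  have hsum : ∑' q : {q : ℕ × ℕ // q ∈ Stop u a L (m + 1) ∧ D a L q.1 q.2 ⊆ D a L p.1 p.2},
      ∫⁻ x in D a L q.1.1 q.1.2, g x ≤ ∫⁻ x in D a L p.1 p.2, g x := by
    have hdisj : Pairwise (Function.onFun Disjoint
        (fun q : {q : ℕ × ℕ // q ∈ Stop u a L (m + 1) ∧ D a L q.1 q.2 ⊆ D a L p.1 p.2} =>
          D a L q.1.1 q.1.2)) := by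
      intro q1 q2 hne
      exact stop_pairwiseDisjoint hL (m + 1) q1.2.1 q2.2.1
        (fun h => hne (Subtype.ext h))
    rw [← lintegral_iUnion (fun q => measurableSet_D a L _ _) hdisj g]
    apply lintegral_mono_set
    exact Set.iUnion_subset (fun q => q.2.2)
  have hosc' : ∫⁻ x in D a L p.1 p.2, g x ≤ ENNReal.ofReal (1 / 64 * (L / 2 ^ p.1)) := by
    rw [← ofReal_integral_eq_lintegral_ofReal
      (integrableOn_D_sub_sq hL hu1 hu2 hp.1 _)
      (Filter.Eventually.of_forall (fun x => sq_nonneg _))]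
    exact ENNReal.ofReal_le_ofReal (hosc p.1 p.2 hp.1)
  have hmain : ENNReal.ofReal (25 / 256) *
      (∑' q : {q : ℕ × ℕ // q ∈ Stop u a L (m + 1) ∧ D a L q.1 q.2 ⊆ D a L p.1 p.2},
        volume (D a L q.1.1 q.1.2)) ≤ ENNReal.ofReal (1 / 64 * (L / 2 ^ p.1)) := by
    rw [← ENNReal.tsum_mul_left]
    exact le_trans (ENNReal.tsum_le_tsum hper) (hsum.trans hosc')
  have hfinal : ENNReal.ofReal (1 / 64 * (L / 2 ^ p.1))
      ≤ ENNReal.ofReal (25 / 256) * (ENNReal.ofReal (1 / 2) * volume (D a L p.1 p.2)) := by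
    rw [volume_D, ← ENNReal.ofReal_mul (by norm_num), ← ENNReal.ofReal_mul (by norm_num)]
    apply ENNReal.ofReal_le_ofReal
    have : (0:ℝ) < L / 2 ^ p.1 := by positivity
    nlinarith [this]
  have h2 := hmain.trans hfinal
  rwa [ENNReal.mul_le_mul_iff_right (by norm_num) ENNReal.ofReal_ne_top] at h2

lemma X_subset (hL : 0 < L) (m : ℕ) : X u a L m ⊆ Set.Ioc a (a + L) := by
  apply Set.iUnion₂_subset
  intro p hp
  exact D_subset_base a L hL hp.1

lemma measurableSet_X (m : ℕ) : MeasurableSet (X u a L m) :=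
  MeasurableSet.biUnion (Set.to_countable _) (fun p _ => measurableSet_D a L _ _)

lemma X_measure_step (hL : 0 < L)
    (hu1 : IntegrableOn u (Set.Ioc a (a + L)))
    (hu2 : IntegrableOn (fun x => u x ^ 2) (Set.Ioc a (a + L)))
    (hosc : ∀ n i, i + 1 ≤ 2 ^ n →
      ∫ x in D a L n i, (u x - c u a L n i) ^ 2 ≤ 1 / 64 * (L / 2 ^ n)) (m : ℕ) :
    volume (X u a L (m + 1)) ≤ ENNReal.ofReal (1 / 2) * volume (X u a L m) := by
  have hcover : X u a L (m + 1) ⊆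
      ⋃ p ∈ Stop u a L m, ⋃ q ∈ {q : ℕ × ℕ | q ∈ Stop u a L (m + 1)
        ∧ D a L q.1 q.2 ⊆ D a L p.1 p.2}, D a L q.1 q.2 := by
    intro x hx
    obtain ⟨s, ⟨q, rfl⟩, hs2⟩ := hx
    simp only [Set.mem_iUnion, exists_prop] at hs2
    obtain ⟨hq, hxq⟩ := hs2
    obtain ⟨p, hp, hsub⟩ := stop_anc hL hq
    exact Set.mem_biUnion hp (Set.mem_biUnion (⟨hq, hsub⟩ :
      q ∈ {q : ℕ × ℕ | q ∈ Stop u a L (m + 1) ∧ D a L q.1 q.2 ⊆ D a L p.1 p.2}) hxq)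
  calc volume (X u a L (m + 1))
      ≤ ∑' p : Stop u a L m, volume (⋃ q ∈ {q : ℕ × ℕ | q ∈ Stop u a L (m + 1)
          ∧ D a L q.1 q.2 ⊆ D a L p.1.1 p.1.2}, D a L q.1 q.2) := by
        refine le_trans (measure_mono hcover) ?_
        exact measure_biUnion_le volume (Set.to_countable _) _
    _ ≤ ∑' p : Stop u a L m, ENNReal.ofReal (1 / 2) * volume (D a L p.1.1 p.1.2) := by
        apply ENNReal.tsum_le_tsum
        intro p
        refine le_trans (measure_biUnion_le volume (Set.to_countable _) _) ?_
        exact fiber_sum hL hu1 hu2 hosc p.2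
    _ = ENNReal.ofReal (1 / 2) * volume (X u a L m) := by
        rw [ENNReal.tsum_mul_left]
        congr 1
        rw [X, measure_biUnion (Set.to_countable _) (stop_pairwiseDisjoint hL m)
          (fun p _ => measurableSet_D a L _ _)]

lemma X_measure (hL : 0 < L)
    (hu1 : IntegrableOn u (Set.Ioc a (a + L)))
    (hu2 : IntegrableOn (fun x => u x ^ 2) (Set.Ioc a (a + L)))
    (hosc : ∀ n i, i + 1 ≤ 2 ^ n →
      ∫ x in D a L n i, (u x - c u a L n i) ^ 2 ≤ 1 / 64 * (L / 2 ^ n)) (m : ℕ) :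
    volume (X u a L m) ≤ ENNReal.ofReal (1 / 2) ^ m * ENNReal.ofReal L := by
  induction m with
  | zero =>
    have h1 : volume (X u a L 0) ≤ volume (Set.Ioc a (a + L)) := measure_mono (X_subset hL 0)
    rw [Real.volume_Ioc, add_sub_cancel_left] at h1
    simpa using h1
  | succ m ih =>
    calc volume (X u a L (m + 1)) ≤ ENNReal.ofReal (1 / 2) * volume (X u a L m) :=
          X_measure_step hL hu1 hu2 hosc m
      _ ≤ ENNReal.ofReal (1 / 2) * (ENNReal.ofReal (1 / 2) ^ m * ENNReal.ofReal L) :=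
          mul_le_mul_right ih _
      _ = ENNReal.ofReal (1 / 2) ^ (m + 1) * ENNReal.ofReal L := by ring

end MeasureBound

section Differentiation

variable {u : ℝ → ℝ} {a L : ℝ}

lemma avg_tendsto (hL : 0 < L) (hloc : LocallyIntegrable u volume) :
    ∀ᵐ x ∂volume, x ∈ Set.Ioc a (a + L) →
      Filter.Tendsto (fun n => c u a L n (idx a L n x)) atTop (nhds (u x)) := by
  filter_upwards [IsUnifLocDoublingMeasure.ae_tendsto_average
    (μ := (volume : Measure ℝ)) hloc 1] with x hx hxI
  have hδlim : Filter.Tendsto (fun n : ℕ => L / 2 ^ (n + 1)) atTop (nhdsWithin 0 (Set.Ioi 0)) := by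
    apply tendsto_nhdsWithin_iff.2
    constructor
    · have h1 : Filter.Tendsto (fun n : ℕ => (L / 2) * (1 / 2 : ℝ) ^ n) atTop (nhds 0) := by
        have := tendsto_pow_atTop_nhds_zero_of_lt_one (r := (1/2 : ℝ)) (by norm_num) (by norm_num)
        simpa using this.const_mul (L / 2)
      refine h1.congr (fun n => ?_)
      rw [div_pow, one_pow, pow_succ, div_mul_div_comm]
      ring_nf
    · exact Filter.Eventually.of_forall (fun n => Set.mem_Ioi.2 (by positivity))
  have hhalf : ∀ n : ℕ, L / 2 ^ (n + 1) = (L / 2 ^ n) / 2 := by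
    intro n
    rw [pow_succ, ← div_div]
  have hxmem : ∀ᶠ n : ℕ in atTop, x ∈ Metric.closedBall
      (a + ((idx a L n x : ℝ) + 1 / 2) * (L / 2 ^ n)) (1 * (L / 2 ^ (n + 1))) := by
    apply Filter.Eventually.of_forall
    intro n
    have hmem := (idx_spec a L hL hxI n).1
    simp only [D, Set.mem_Ioc] at hmem
    rw [one_mul, Real.closedBall_eq_Icc, Set.mem_Icc, hhalf n]
    constructor
    · nlinarith [hmem.1]
    · nlinarith [hmem.2]
  have key := hx (fun n : ℕ => a + ((idx a L n x : ℝ) + 1 / 2) * (L / 2 ^ n))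
    (fun n : ℕ => L / 2 ^ (n + 1)) hδlim hxmem
  refine key.congr (fun n => ?_)
  have hball : Metric.closedBall (a + ((idx a L n x : ℝ) + 1 / 2) * (L / 2 ^ n))
      (L / 2 ^ (n + 1)) = Set.Icc (a + (idx a L n x : ℝ) * (L / 2 ^ n))
        (a + ((idx a L n x : ℝ) + 1) * (L / 2 ^ n)) := by
    rw [Real.closedBall_eq_Icc, hhalf n]
    congr 1 <;> ring
  rw [hball, setAverage_eq, MeasureTheory.integral_Icc_eq_integral_Ioc]
  have hvol : volume (Set.Icc (a + (idx a L n x : ℝ) * (L / 2 ^ n))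
      (a + ((idx a L n x : ℝ) + 1) * (L / 2 ^ n))) = ENNReal.ofReal (L / 2 ^ n) := by
    rw [Real.volume_Icc]
    congr 1
    ring
  rw [measureReal_def, hvol, ENNReal.toReal_ofReal (by positivity : (0:ℝ) ≤ L / 2 ^ n), smul_eq_mul]
  show (L / 2 ^ n)⁻¹ * _ = c u a L n (idx a L n x)
  rw [c, D]
  exact (div_eq_inv_mul _ _).symm

lemma dist_bound (hL : 0 < L) (hloc : LocallyIntegrable u volume)
    (hu1 : IntegrableOn u (Set.Ioc a (a + L)))
    (hu2 : IntegrableOn (fun x => u x ^ 2) (Set.Ioc a (a + L)))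
    (hosc : ∀ n i, i + 1 ≤ 2 ^ n →
      ∫ x in D a L n i, (u x - c u a L n i) ^ 2 ≤ 1 / 64 * (L / 2 ^ n)) (m : ℕ) :
    volume {x | x ∈ Set.Ioc a (a + L) ∧ (m : ℝ) / 2 + 3 / 16 < |u x - c u a L 0 0|}
      ≤ ENNReal.ofReal (1 / 2) ^ m * ENNReal.ofReal L := by
  set A := {x | x ∈ Set.Ioc a (a + L) ∧ (m : ℝ) / 2 + 3 / 16 < |u x - c u a L 0 0|} with hA
  have hgood : ∀ x ∈ A, Filter.Tendsto (fun n => c u a L n (idx a L n x)) atTop (nhds (u x))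
      → x ∈ X u a L m := by
    intro x hx ht
    by_contra hX
    have hall : ∀ n, |c u a L n (idx a L n x) - c u a L 0 0| ≤ (m : ℝ) / 2 := by
      intro n
      by_contra h
      push_neg at h
      exact hX (mem_X_of_P hL hx.1 ⟨n, h⟩)
    have hlim : |u x - c u a L 0 0| ≤ (m : ℝ) / 2 := by
      have ht2 : Filter.Tendsto (fun n => |c u a L n (idx a L n x) - c u a L 0 0|)
          atTop (nhds (|u x - c u a L 0 0|)) := ((ht.sub tendsto_const_nhds).abs)
      exact le_of_tendsto ht2 (Filter.Eventually.of_forall hall)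
    linarith [hx.2]
  have hnull : volume (A \ X u a L m) = 0 := by
    have hae := avg_tendsto (a := a) hL hloc
    rw [← MeasureTheory.ae_restrict_iff' measurableSet_Ioc] at hae
    have hbad : volume.restrict (Set.Ioc a (a + L))
        {x | ¬ Filter.Tendsto (fun n => c u a L n (idx a L n x)) atTop (nhds (u x))} = 0 := by
      rw [MeasureTheory.ae_iff] at hae
      exact hae
    have hsub2 : A \ X u a L m ⊆
        {x | ¬ Filter.Tendsto (fun n => c u a L n (idx a L n x)) atTop (nhds (u x))} := by
      rintro x ⟨hxA, hxX⟩ hts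
      exact hxX (hgood x hxA hts)
    have h3 : volume.restrict (Set.Ioc a (a + L)) (A \ X u a L m) = 0 :=
      measure_mono_null hsub2 hbad
    rw [Measure.restrict_apply' measurableSet_Ioc] at h3
    have h4 : (A \ X u a L m) ∩ Set.Ioc a (a + L) = A \ X u a L m := by
      apply Set.inter_eq_self_of_subset_left
      intro x hx
      exact hx.1.1
    rwa [h4] at h3
  calc volume A ≤ volume (X u a L m ∪ (A \ X u a L m)) := by
        apply measure_mono
        intro x hx
        by_cases hX : x ∈ X u a L m
        · exact Set.mem_union_left _ hX
        · exact Set.mem_union_right _ ⟨hx, hX⟩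
    _ ≤ volume (X u a L m) + volume (A \ X u a L m) := measure_union_le _ _
    _ = volume (X u a L m) := by rw [hnull, add_zero]
    _ ≤ ENNReal.ofReal (1 / 2) ^ m * ENNReal.ofReal L := X_measure hL hu1 hu2 hosc m

end Differentiation

section KeyLemma

variable {u : ℝ → ℝ} {a L : ℝ}

lemma key_lintegral (hu : Measurable u) (hL : 0 < L) (hloc : LocallyIntegrable u volume)
    (hu1 : IntegrableOn u (Set.Ioc a (a + L)))
    (hu2 : IntegrableOn (fun x => u x ^ 2) (Set.Ioc a (a + L)))
    (hosc : ∀ n i, i + 1 ≤ 2 ^ n →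
      ∫ x in D a L n i, (u x - c u a L n i) ^ 2 ≤ 1 / 64 * (L / 2 ^ n)) :
    ∫⁻ x in Set.Ioc a (a + L), ENNReal.ofReal (Real.exp (u x - c u a L 0 0))
      ≤ ENNReal.ofReal (20 * L) := by
  classical
  set c0 := c u a L 0 0 with hc0
  set A : ℕ → Set ℝ := fun m =>
    {x | x ∈ Set.Ioc a (a + L) ∧ (m : ℝ) / 2 + 3 / 16 < |u x - c0|} with hA
  have hAmeas : ∀ m, MeasurableSet (A m) := by
    intro m
    apply MeasurableSet.inter measurableSet_Ioc
    exact measurableSet_lt measurable_const ((hu.sub measurable_const).abs)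
  have hAm : ∀ m, volume (A m) ≤ ENNReal.ofReal ((1 / 2) ^ m * L) := by
    intro m
    have := dist_bound hL hloc hu1 hu2 hosc m
    rwa [← ENNReal.ofReal_pow (by norm_num), ← ENNReal.ofReal_mul (by positivity)] at this
  set f : ℝ → ℝ≥0∞ := fun x => ENNReal.ofReal (Real.exp (u x - c0)) with hf
  -- decomposition of the interval
  have hdecomp : Set.Ioc a (a + L) ⊆
      ((Set.Ioc a (a + L) \ A 0) ∪ ⋃ m, (A m \ A (m + 1))) ∪ ⋂ m, A m := by
    intro x hx
    by_cases h0 : x ∈ A 0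
    · by_cases hall : ∀ m, x ∈ A m
      · exact Set.mem_union_right _ (Set.mem_iInter.2 hall)
      · push_neg at hall
        have hex : ∃ m, x ∉ A m := hall
        have hN : x ∉ A (Nat.find hex) := Nat.find_spec hex
        have hN0 : Nat.find hex ≠ 0 := fun h => hN (by rw [h]; exact h0)
        obtain ⟨M, hM⟩ : ∃ M, Nat.find hex = M + 1 := ⟨Nat.find hex - 1, by omega⟩
        have hxM : x ∈ A M := not_not.1 (Nat.find_min hex (show M < Nat.find hex by omega))
        have hN' : x ∉ A (M + 1) := by rw [← hM]; exact hN
        exact Set.mem_union_left _ (Set.mem_union_right _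
          (Set.mem_iUnion.2 ⟨M, ⟨hxM, hN'⟩⟩))
    · exact Set.mem_union_left _ (Set.mem_union_left _ ⟨hx, h0⟩)
  -- the intersection is null
  have hcap : volume (⋂ m, A m) = 0 := by
    have hle : ∀ m : ℕ, volume (⋂ k, A k) ≤ ENNReal.ofReal ((1 / 2) ^ m * L) := fun m =>
      (measure_mono (Set.iInter_subset _ m)).trans (hAm m)
    have htend : Filter.Tendsto (fun m : ℕ => ENNReal.ofReal ((1 / 2) ^ m * L)) atTop
        (nhds (ENNReal.ofReal 0)) := by
      apply ENNReal.tendsto_ofReal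
      have := (tendsto_pow_atTop_nhds_zero_of_lt_one
        (show (0:ℝ) ≤ 1/2 by norm_num) (by norm_num)).mul_const L
      simpa using this
    have := ge_of_tendsto' (by simpa using htend) hle
    simpa using this
  -- numeric facts
  have hexpsq : Real.exp (1/2) * Real.exp (1/2) = Real.exp 1 := by
    rw [← Real.exp_add]; norm_num
  have hehalf : Real.exp (1/2) ≤ 33/20 := by
    nlinarith [Real.exp_one_lt_d9, Real.exp_pos (1/2)]
  have hee : Real.exp (11/16) ≤ 2.72 := by
    have h1 : Real.exp (11/16) ≤ Real.exp 1 := Real.exp_le_exp.2 (by norm_num)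
    nlinarith [Real.exp_one_lt_d9]
  -- piece 1 : small part
  have hpiece1 : ∫⁻ x in Set.Ioc a (a + L) \ A 0, f x ≤ ENNReal.ofReal (2.72 * L) := by
    have hb : ∀ x ∈ Set.Ioc a (a + L) \ A 0, f x ≤ ENNReal.ofReal (Real.exp (3/16)) := by
      rintro x ⟨hxI, hxA⟩
      apply ENNReal.ofReal_le_ofReal
      apply Real.exp_le_exp.2
      have : ¬ ((0:ℝ)/2 + 3/16 < |u x - c0|) := fun hcon => hxA ⟨hxI, by simpa using hcon⟩
      push_neg at this
      calc u x - c0 ≤ |u x - c0| := le_abs_self _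
        _ ≤ 3/16 := by linarith [this]
    calc ∫⁻ x in Set.Ioc a (a + L) \ A 0, f x
        ≤ ∫⁻ _x in Set.Ioc a (a + L) \ A 0, ENNReal.ofReal (Real.exp (3/16)) :=
          setLIntegral_mono' (measurableSet_Ioc.diff (hAmeas 0)) hb
      _ = ENNReal.ofReal (Real.exp (3/16)) * volume (Set.Ioc a (a + L) \ A 0) :=
          setLIntegral_const _ _
      _ ≤ ENNReal.ofReal (Real.exp (3/16)) * ENNReal.ofReal L := by
          apply mul_le_mul_right
          calc volume (Set.Ioc a (a + L) \ A 0) ≤ volume (Set.Ioc a (a + L)) :=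
                measure_mono Set.diff_subset
            _ = ENNReal.ofReal L := by rw [Real.volume_Ioc, add_sub_cancel_left]
      _ ≤ ENNReal.ofReal (2.72 * L) := by
          rw [← ENNReal.ofReal_mul (Real.exp_pos _).le]
          apply ENNReal.ofReal_le_ofReal
          have h3 : Real.exp (3/16) ≤ 2.72 := by
            have := Real.exp_le_exp.2 (show (3:ℝ)/16 ≤ 11/16 by norm_num)
            linarith [hee]
          nlinarith [hL.le, Real.exp_pos (3/16)]
  -- piece 2 : layered parts
  have hpiece2 : ∫⁻ x in ⋃ m, (A m \ A (m + 1)), f x ≤ ENNReal.ofReal (16 * L) := by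
    have hterm : ∀ m : ℕ, ∫⁻ x in A m \ A (m + 1), f x
        ≤ ENNReal.ofReal (2.72 * L) * ENNReal.ofReal (33/40) ^ m := by
      intro m
      have hb : ∀ x ∈ A m \ A (m + 1), f x
          ≤ ENNReal.ofReal (Real.exp (((m:ℝ) + 1) / 2 + 3/16)) := by
        rintro x ⟨hxA, hxA1⟩
        apply ENNReal.ofReal_le_ofReal
        apply Real.exp_le_exp.2
        have : ¬ (((m + 1 : ℕ) : ℝ) / 2 + 3/16 < |u x - c0|) := fun hcon =>
          hxA1 ⟨hxA.1, hcon⟩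
        push_neg at this
        have h2 : ((m + 1 : ℕ) : ℝ) = (m : ℝ) + 1 := by push_cast; ring
        calc u x - c0 ≤ |u x - c0| := le_abs_self _
          _ ≤ ((m:ℝ) + 1) / 2 + 3/16 := by rw [h2] at this; linarith [this]
      have hexpbound : Real.exp (((m:ℝ) + 1) / 2 + 3/16) * ((1/2)^m * L)
          ≤ 2.72 * L * (33/40)^m := by
        have he1 : Real.exp (((m:ℝ) + 1) / 2 + 3/16)
            = Real.exp (11/16) * Real.exp (1/2) ^ m := by
          rw [← Real.exp_nat_mul, ← Real.exp_add]
          congr 1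
          ring
        have he2 : Real.exp (1/2) ^ m ≤ (33/20 : ℝ)^m :=
          pow_le_pow_left₀ (Real.exp_pos _).le hehalf m
        have he3 : Real.exp (((m:ℝ) + 1) / 2 + 3/16) ≤ 2.72 * (33/20)^m := by
          rw [he1]
          have hp : (0:ℝ) ≤ (33/20 : ℝ)^m := by positivity
          nlinarith [Real.exp_pos (1/2), pow_pos (Real.exp_pos (1/2)) m, hee, he2]
        have hnn : (0:ℝ) ≤ (1/2:ℝ)^m * L := by positivity
        calc Real.exp (((m:ℝ) + 1) / 2 + 3/16) * ((1/2)^m * L)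
            ≤ (2.72 * (33/20)^m) * ((1/2)^m * L) :=
              mul_le_mul_of_nonneg_right he3 hnn
          _ = 2.72 * L * ((33/20) * (1/2):ℝ)^m := by rw [mul_pow]; ring
          _ = 2.72 * L * (33/40)^m := by norm_num
      calc ∫⁻ x in A m \ A (m + 1), f x
          ≤ ∫⁻ _x in A m \ A (m + 1), ENNReal.ofReal (Real.exp (((m:ℝ) + 1) / 2 + 3/16)) :=
            setLIntegral_mono' ((hAmeas m).diff (hAmeas (m+1))) hb
        _ = ENNReal.ofReal (Real.exp (((m:ℝ) + 1) / 2 + 3/16)) * volume (A m \ A (m + 1)) :=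
            setLIntegral_const _ _
        _ ≤ ENNReal.ofReal (Real.exp (((m:ℝ) + 1) / 2 + 3/16)) * ENNReal.ofReal ((1/2)^m * L) :=
            mul_le_mul_right ((measure_mono Set.diff_subset).trans (hAm m)) _
        _ = ENNReal.ofReal (Real.exp (((m:ℝ) + 1) / 2 + 3/16) * ((1/2)^m * L)) := by
            rw [← ENNReal.ofReal_mul (Real.exp_pos _).le]
        _ ≤ ENNReal.ofReal (2.72 * L * (33/40)^m) := ENNReal.ofReal_le_ofReal hexpbound
        _ = ENNReal.ofReal (2.72 * L) * ENNReal.ofReal (33/40) ^ m := by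
            rw [ENNReal.ofReal_mul (by nlinarith [hL.le]), ENNReal.ofReal_pow (by norm_num)]
    calc ∫⁻ x in ⋃ m, (A m \ A (m + 1)), f x
        ≤ ∑' m : ℕ, ∫⁻ x in A m \ A (m + 1), f x := lintegral_iUnion_le _ _
      _ ≤ ∑' m : ℕ, ENNReal.ofReal (2.72 * L) * ENNReal.ofReal (33/40) ^ m :=
          ENNReal.tsum_le_tsum hterm
      _ = ENNReal.ofReal (2.72 * L) * (1 - ENNReal.ofReal (33/40))⁻¹ := by
          rw [ENNReal.tsum_mul_left, ENNReal.tsum_geometric]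
      _ = ENNReal.ofReal (2.72 * L) * ENNReal.ofReal (40/7) := by
          congr 1
          rw [← ENNReal.ofReal_one, ← ENNReal.ofReal_sub _ (by norm_num : (0:ℝ) ≤ 33/40)]
          norm_num
          rw [← ENNReal.ofReal_inv_of_pos (by norm_num : (0:ℝ) < 7/40)]
          norm_num
      _ ≤ ENNReal.ofReal (16 * L) := by
          rw [← ENNReal.ofReal_mul (by nlinarith [hL.le])]
          apply ENNReal.ofReal_le_ofReal
          nlinarith [hL.le]
  -- assemble
  calc ∫⁻ x in Set.Ioc a (a + L), f x
      ≤ ∫⁻ x in ((Set.Ioc a (a + L) \ A 0) ∪ ⋃ m, (A m \ A (m + 1))) ∪ ⋂ m, A m, f x :=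
        lintegral_mono_set hdecomp
    _ ≤ (∫⁻ x in (Set.Ioc a (a + L) \ A 0) ∪ ⋃ m, (A m \ A (m + 1)), f x)
          + ∫⁻ x in ⋂ m, A m, f x := lintegral_union_le _ _ _
    _ = ∫⁻ x in (Set.Ioc a (a + L) \ A 0) ∪ ⋃ m, (A m \ A (m + 1)), f x := by
        rw [setLIntegral_measure_zero _ _ hcap, add_zero]
    _ ≤ (∫⁻ x in Set.Ioc a (a + L) \ A 0, f x) + ∫⁻ x in ⋃ m, (A m \ A (m + 1)), f x :=
        lintegral_union_le _ _ _
    _ ≤ ENNReal.ofReal (2.72 * L) + ENNReal.ofReal (16 * L) := add_le_add hpiece1 hpiece2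
    _ ≤ ENNReal.ofReal (20 * L) := by
        rw [← ENNReal.ofReal_add (by nlinarith [hL.le]) (by nlinarith [hL.le])]
        apply ENNReal.ofReal_le_ofReal
        nlinarith [hL.le]

end KeyLemma

section Consequences

variable {u : ℝ → ℝ} {a L : ℝ}

lemma c00_eq (hL : 0 < L) :
    c u a L 0 0 = (1 / L) * ∫ x in Set.Ioc a (a + L), u x := by
  rw [c, D_zero]
  simp [div_eq_inv_mul]

lemma interval_bounds (hu : Measurable u) (hL : 0 < L) (hloc : LocallyIntegrable u volume)
    (hu1 : IntegrableOn u (Set.Ioc a (a + L)))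
    (hu2 : IntegrableOn (fun x => u x ^ 2) (Set.Ioc a (a + L)))
    (hosc : ∀ n i, i + 1 ≤ 2 ^ n →
      ∫ x in D a L n i, (u x - c u a L n i) ^ 2 ≤ 1 / 64 * (L / 2 ^ n)) :
    Real.exp ((1 / L) * ∫ x in Set.Ioc a (a + L), u x)
        ≤ (1 / L) * ∫ x in Set.Ioc a (a + L), Real.exp (u x) ∧
    (1 / L) * ∫ x in Set.Ioc a (a + L), Real.exp (u x)
        ≤ 20 * Real.exp ((1 / L) * ∫ x in Set.Ioc a (a + L), u x) := by
  set c0 := c u a L 0 0 with hc0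
  have hc0' : c0 = (1 / L) * ∫ x in Set.Ioc a (a + L), u x := c00_eq hL
  have hkey := key_lintegral hu hL hloc hu1 hu2 hosc
  -- lintegral of exp u
  have hsplit : ∀ x : ℝ, Real.exp (u x) = Real.exp c0 * Real.exp (u x - c0) := by
    intro x
    rw [← Real.exp_add]
    congr 1
    ring
  have hlin : ∫⁻ x in Set.Ioc a (a + L), ENNReal.ofReal (Real.exp (u x))
      = ENNReal.ofReal (Real.exp c0)
        * ∫⁻ x in Set.Ioc a (a + L), ENNReal.ofReal (Real.exp (u x - c0)) := by
    rw [← lintegral_const_mul _ (by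
      exact (Real.measurable_exp.comp (hu.sub measurable_const)).ennreal_ofReal)]
    congr 1
    funext x
    rw [hsplit x, ENNReal.ofReal_mul (Real.exp_pos _).le]
  have hfin2 : ∫⁻ x in Set.Ioc a (a + L), ENNReal.ofReal (Real.exp (u x)) 
      ≤ ENNReal.ofReal (Real.exp c0) * ENNReal.ofReal (20 * L) := by
    rw [hlin]
    exact mul_le_mul_right hkey _
  -- integrability of exp ∘ u on the interval
  have hintexp : IntegrableOn (fun x => Real.exp (u x)) (Set.Ioc a (a + L)) := by
    constructor
    · exact (Real.measurable_exp.comp hu).aestronglyMeasurable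
    · rw [hasFiniteIntegral_iff_ofReal (Filter.Eventually.of_forall
        (fun x => (Real.exp_pos _).le))]
      exact lt_of_le_of_lt hfin2 (by
        rw [← ENNReal.ofReal_mul (Real.exp_pos _).le]
        exact ENNReal.ofReal_lt_top)
  have hintlin : IntegrableOn
      (fun x => Real.exp c0 * (1 + (u x - c0))) (Set.Ioc a (a + L)) := by
    apply Integrable.const_mul
    have h2 : IntegrableOn (fun _ : ℝ => 1 - c0) (Set.Ioc a (a + L)) :=
      integrableOn_const (by rw [Real.volume_Ioc]; exact ENNReal.ofReal_ne_top)
    exact (h2.add hu1).congr (Filter.Eventually.of_forall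
      (fun x => by simp only [Pi.add_apply]; ring))
  have hIoc_vol : (volume (Set.Ioc a (a + L))).toReal = L := by
    rw [Real.volume_Ioc, add_sub_cancel_left, ENNReal.toReal_ofReal hL.le]
  have hintu : (∫ x in Set.Ioc a (a + L), u x) = c0 * L := by
    rw [hc0']
    field_simp
  -- lower bound by Jensen (supporting line)
  have hlower : Real.exp c0 * L ≤ ∫ x in Set.Ioc a (a + L), Real.exp (u x) := by
    have hmono : ∫ x in Set.Ioc a (a + L), Real.exp c0 * (1 + (u x - c0))
        ≤ ∫ x in Set.Ioc a (a + L), Real.exp (u x) := by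
      apply integral_mono hintlin hintexp
      intro x
      dsimp only
      have h1 := Real.add_one_le_exp (u x - c0)
      have h2 : Real.exp (u x - c0) * Real.exp c0 = Real.exp (u x) := by
        rw [← Real.exp_add]; congr 1; ring
      have h3 := mul_le_mul_of_nonneg_left h1 (Real.exp_pos c0).le
      calc Real.exp c0 * (1 + (u x - c0)) = Real.exp c0 * (u x - c0 + 1) := by ring
        _ ≤ Real.exp c0 * Real.exp (u x - c0) := h3
        _ = Real.exp (u x) := by rw [mul_comm]; exact h2
    have hcomp : ∫ x in Set.Ioc a (a + L), Real.exp c0 * (1 + (u x - c0))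
        = Real.exp c0 * L := by
      rw [MeasureTheory.integral_const_mul]
      have : ∫ x in Set.Ioc a (a + L), (1 + (u x - c0))
          = (1 - c0) * L + c0 * L := by
        have h2 : IntegrableOn (fun _ : ℝ => 1 - c0) (Set.Ioc a (a + L)) :=
          integrableOn_const (by rw [Real.volume_Ioc]; exact ENNReal.ofReal_ne_top)
        have heq : ∀ x, 1 + (u x - c0) = (1 - c0) + u x := by intro x; ring
        rw [show (fun x => 1 + (u x - c0)) = fun x => (1 - c0) + u x from funext heq]
        rw [integral_add h2 hu1, setIntegral_const, smul_eq_mul, measureReal_def, hIoc_vol, hintu]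
        ring
      rw [this]
      ring_nf
    rw [← hcomp]
    exact hmono
  -- upper bound
  have hupper : ∫ x in Set.Ioc a (a + L), Real.exp (u x) ≤ Real.exp c0 * (20 * L) := by
    have h1 : ∫ x in Set.Ioc a (a + L), Real.exp (u x)
        = (∫⁻ x in Set.Ioc a (a + L), ENNReal.ofReal (Real.exp (u x))).toReal := by
      apply integral_eq_lintegral_of_nonneg_ae
      · exact Filter.Eventually.of_forall (fun x => (Real.exp_pos _).le)
      · exact (Real.measurable_exp.comp hu).aestronglyMeasurable
    rw [h1]
    calc (∫⁻ x in Set.Ioc a (a + L), ENNReal.ofReal (Real.exp (u x))).toReal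
        ≤ (ENNReal.ofReal (Real.exp c0) * ENNReal.ofReal (20 * L)).toReal := by
          apply ENNReal.toReal_mono _ hfin2
          rw [← ENNReal.ofReal_mul (Real.exp_pos _).le]
          exact ENNReal.ofReal_ne_top
      _ = Real.exp c0 * (20 * L) := by
          rw [← ENNReal.ofReal_mul (Real.exp_pos _).le,
            ENNReal.toReal_ofReal (by positivity)]
  constructor
  · rw [← hc0']
    have h3 : (1/L) * (Real.exp c0 * L)
        ≤ (1/L) * ∫ x in Set.Ioc a (a + L), Real.exp (u x) :=
      mul_le_mul_of_nonneg_left hlower (by positivity)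
    have h4 : (1/L) * (Real.exp c0 * L) = Real.exp c0 := by field_simp
    linarith
  · rw [← hc0']
    have h3 : (1/L) * ∫ x in Set.Ioc a (a + L), Real.exp (u x)
        ≤ (1/L) * (Real.exp c0 * (20 * L)) :=
      mul_le_mul_of_nonneg_left hupper (by positivity)
    have h4 : (1/L) * (Real.exp c0 * (20 * L)) = 20 * Real.exp c0 := by
      field_simp
    linarith

end Consequences

section Oscillation

variable {u : ℝ → ℝ}

lemma kernel_sq_bound (hu : Measurable u) {p q : ℝ} (hpq : p < q)
    (hker : ∫⁻ x in Set.Ioc p q, ∫⁻ y in Set.Ioc p q,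
        ENNReal.ofReal ((u x - u y) ^ 2 / (x - y) ^ 2) ≤ ENNReal.ofReal (1 / 32)) :
    ∫⁻ x in Set.Ioc p q, ∫⁻ y in Set.Ioc p q, ENNReal.ofReal ((u x - u y) ^ 2)
      ≤ ENNReal.ofReal ((q - p) ^ 2 * (1 / 32)) := by
  have hM : 0 < q - p := by linarith
  have hFym : ∀ x : ℝ, Measurable (fun y => ENNReal.ofReal ((u x - u y) ^ 2 / (x - y) ^ 2)) := by
    intro x
    apply Measurable.ennreal_ofReal
    exact ((measurable_const.sub hu).pow_const 2).div
      ((measurable_const.sub measurable_id).pow_const 2)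
  have hstep : ∀ x ∈ Set.Ioc p q, ∫⁻ y in Set.Ioc p q, ENNReal.ofReal ((u x - u y) ^ 2)
      ≤ ENNReal.ofReal ((q - p) ^ 2) *
        ∫⁻ y in Set.Ioc p q, ENNReal.ofReal ((u x - u y) ^ 2 / (x - y) ^ 2) := by
    intro x hx
    rw [← lintegral_const_mul _ (hFym x)]
    apply setLIntegral_mono' measurableSet_Ioc
    intro y hy
    rw [← ENNReal.ofReal_mul (by positivity)]
    apply ENNReal.ofReal_le_ofReal
    rcases eq_or_ne x y with rfl | hne
    · simp
    · have hxy : (0:ℝ) < (x - y) ^ 2 := by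
        have : x - y ≠ 0 := sub_ne_zero.2 hne
        positivity
      have habs : (x - y) ^ 2 ≤ (q - p) ^ 2 := by
        nlinarith [hx.1, hx.2, hy.1, hy.2]
      have hcancel : (u x - u y) ^ 2 / (x - y) ^ 2 * (x - y) ^ 2 = (u x - u y) ^ 2 :=
        div_mul_cancel₀ _ (ne_of_gt hxy)
      nlinarith [div_nonneg (sq_nonneg (u x - u y)) hxy.le, hcancel, habs]
  calc ∫⁻ x in Set.Ioc p q, ∫⁻ y in Set.Ioc p q, ENNReal.ofReal ((u x - u y) ^ 2)
      ≤ ∫⁻ x in Set.Ioc p q, ENNReal.ofReal ((q - p) ^ 2) *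
          ∫⁻ y in Set.Ioc p q, ENNReal.ofReal ((u x - u y) ^ 2 / (x - y) ^ 2) :=
        setLIntegral_mono' measurableSet_Ioc hstep
    _ = ENNReal.ofReal ((q - p) ^ 2) * ∫⁻ x in Set.Ioc p q,
          ∫⁻ y in Set.Ioc p q, ENNReal.ofReal ((u x - u y) ^ 2 / (x - y) ^ 2) := by
        apply lintegral_const_mul
        apply Measurable.lintegral_prod_right
        apply Measurable.ennreal_ofReal
        exact (((hu.comp measurable_fst).sub (hu.comp measurable_snd)).pow_const 2).div
          (((measurable_fst.sub measurable_snd)).pow_const 2)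
    _ ≤ ENNReal.ofReal ((q - p) ^ 2) * ENNReal.ofReal (1 / 32) := mul_le_mul_right hker _
    _ = ENNReal.ofReal ((q - p) ^ 2 * (1 / 32)) := by
        rw [← ENNReal.ofReal_mul (by positivity)]

lemma osc_from_kernel (hu : Measurable u) {p q : ℝ} (hpq : p < q)
    (hu1 : IntegrableOn u (Set.Ioc p q))
    (hu2 : IntegrableOn (fun x => u x ^ 2) (Set.Ioc p q))
    (hker : ∫⁻ x in Set.Ioc p q, ∫⁻ y in Set.Ioc p q,
        ENNReal.ofReal ((u x - u y) ^ 2 / (x - y) ^ 2) ≤ ENNReal.ofReal (1 / 32)) :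
    ∫ x in Set.Ioc p q, (u x - (∫ y in Set.Ioc p q, u y) / (q - p)) ^ 2
      ≤ 1 / 64 * (q - p) := by
  have hM : 0 < q - p := by linarith
  set m := (∫ y in Set.Ioc p q, u y) / (q - p) with hm
  have hvol : (volume (Set.Ioc p q)).toReal = q - p := by
    rw [Real.volume_Ioc, ENNReal.toReal_ofReal hM.le]
  have hvolfin : volume (Set.Ioc p q) ≠ ⊤ := by
    rw [Real.volume_Ioc]; exact ENNReal.ofReal_ne_top
  have hconst : ∀ r : ℝ, IntegrableOn (fun _ : ℝ => r) (Set.Ioc p q) :=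
    fun r => integrableOn_const hvolfin
  have humm : IntegrableOn (fun y => u y - m) (Set.Ioc p q) := hu1.sub (hconst m)
  have hsubsq : IntegrableOn (fun y => (u y - m) ^ 2) (Set.Ioc p q) := by
    have heq : (fun y => (u y - m) ^ 2) = fun y => (u y ^ 2 - (2 * m) * u y) + m ^ 2 := by
      funext y; ring
    rw [heq]
    exact (hu2.sub (hu1.const_mul _)).add (hconst _)
  set V := ∫ x in Set.Ioc p q, (u x - m) ^ 2 with hV
  have hVnn : 0 ≤ V := integral_nonneg (fun x => sq_nonneg _)
  have hzero : ∫ y in Set.Ioc p q, (u y - m) = 0 := by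
    rw [integral_sub hu1 (hconst m), setIntegral_const, smul_eq_mul, measureReal_def, hvol, hm]
    field_simp
    ring
  have hinner : ∀ x : ℝ, ∫ y in Set.Ioc p q, (u x - u y) ^ 2
      = (q - p) * (u x - m) ^ 2 + V := by
    intro x
    have heq : (fun y => (u x - u y) ^ 2)
        = fun y => ((u x - m) ^ 2 - (2 * (u x - m)) * (u y - m)) + (u y - m) ^ 2 := by
      funext y; ring
    rw [heq]
    have hcross : IntegrableOn (fun y => (2 * (u x - m)) * (u y - m)) (Set.Ioc p q) :=
      humm.const_mul _
    have h1 : IntegrableOn (fun y => (u x - m) ^ 2 - (2 * (u x - m)) * (u y - m))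
        (Set.Ioc p q) := (hconst _).sub hcross
    rw [integral_add h1 hsubsq, integral_sub (hconst _) hcross, setIntegral_const,
      MeasureTheory.integral_const_mul, hzero, smul_eq_mul, measureReal_def, hvol]
    ring
  have houter : ∫ x in Set.Ioc p q, ((q - p) * (u x - m) ^ 2 + V)
      = 2 * (q - p) * V := by
    rw [integral_add (hsubsq.const_mul _) (hconst V), MeasureTheory.integral_const_mul,
      setIntegral_const, smul_eq_mul, measureReal_def, hvol]
    ring
  -- connect to the lintegral bound
  set g : ℝ → ℝ≥0∞ := fun x => ∫⁻ y in Set.Ioc p q, ENNReal.ofReal ((u x - u y) ^ 2) with hg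
  have hgmeas : Measurable g := by
    apply Measurable.lintegral_prod_right
    apply Measurable.ennreal_ofReal
    exact ((hu.comp measurable_fst).sub (hu.comp measurable_snd)).pow_const 2
  have hgbound := kernel_sq_bound hu hpq hker
  have hgfin : ∫⁻ x in Set.Ioc p q, g x ≠ ⊤ :=
    (lt_of_le_of_lt hgbound ENNReal.ofReal_lt_top).ne
  have hae : ∀ᵐ x ∂(volume.restrict (Set.Ioc p q)), g x < ⊤ := ae_lt_top hgmeas hgfin
  have hxeq : ∀ x : ℝ, (∫ y in Set.Ioc p q, (u x - u y) ^ 2) = (g x).toReal := by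
    intro x
    rw [hg]
    apply integral_eq_lintegral_of_nonneg_ae
    · exact Filter.Eventually.of_forall (fun y => sq_nonneg _)
    · exact ((measurable_const.sub hu).pow_const 2).aestronglyMeasurable
  have hVeq : 2 * (q - p) * V = (∫⁻ x in Set.Ioc p q, g x).toReal := by
    rw [← houter, ← integral_toReal hgmeas.aemeasurable hae]
    apply integral_congr_ae
    apply Filter.Eventually.of_forall
    intro x
    dsimp only
    rw [← hxeq x, hinner x]
  have hfinal : 2 * (q - p) * V ≤ (q - p) ^ 2 * (1 / 32) := by
    rw [hVeq]
    calc (∫⁻ x in Set.Ioc p q, g x).toReal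
        ≤ (ENNReal.ofReal ((q - p) ^ 2 * (1 / 32))).toReal :=
          ENNReal.toReal_mono ENNReal.ofReal_ne_top hgbound
      _ = (q - p) ^ 2 * (1 / 32) := ENNReal.toReal_ofReal (by positivity)
  rw [← hV] at *
  nlinarith [hfinal, hM]

lemma sq_integrable (hu : Measurable u) {p q : ℝ} (hpq : p < q)
    (hker : ∫⁻ x in Set.Ioc p q, ∫⁻ y in Set.Ioc p q,
        ENNReal.ofReal ((u x - u y) ^ 2 / (x - y) ^ 2) ≤ ENNReal.ofReal (1 / 32)) :
    IntegrableOn (fun x => u x ^ 2) (Set.Ioc p q) := by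
  have hM : 0 < q - p := by linarith
  have hgbound := kernel_sq_bound hu hpq hker
  set g : ℝ → ℝ≥0∞ := fun x => ∫⁻ y in Set.Ioc p q, ENNReal.ofReal ((u x - u y) ^ 2) with hg
  have hgmeas : Measurable g := by
    apply Measurable.lintegral_prod_right
    apply Measurable.ennreal_ofReal
    exact ((hu.comp measurable_fst).sub (hu.comp measurable_snd)).pow_const 2
  have hgfin : ∫⁻ x in Set.Ioc p q, g x ≠ ⊤ :=
    (lt_of_le_of_lt hgbound ENNReal.ofReal_lt_top).ne
  have hae : ∀ᵐ x ∂(volume.restrict (Set.Ioc p q)), g x < ⊤ := ae_lt_top hgmeas hgfin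
  have hne : (volume.restrict (Set.Ioc p q)) ≠ 0 := by
    rw [← Measure.measure_univ_ne_zero, Measure.restrict_apply_univ, Real.volume_Ioc]
    simp only [ne_eq, ENNReal.ofReal_eq_zero, not_le]
    linarith
  haveI : (ae (volume.restrict (Set.Ioc p q))).NeBot := ae_neBot.2 hne
  obtain ⟨x0, hx0⟩ := hae.exists
  -- pointwise bound
  have hpt : ∀ y : ℝ, ENNReal.ofReal (u y ^ 2)
      ≤ 2 * ENNReal.ofReal ((u x0 - u y) ^ 2) + 2 * ENNReal.ofReal (u x0 ^ 2) := by
    intro y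
    have h1 : u y ^ 2 ≤ 2 * (u x0 - u y) ^ 2 + 2 * u x0 ^ 2 := by nlinarith [sq_nonneg (2 * u x0 - u y)]
    calc ENNReal.ofReal (u y ^ 2)
        ≤ ENNReal.ofReal (2 * (u x0 - u y) ^ 2 + 2 * u x0 ^ 2) := ENNReal.ofReal_le_ofReal h1
      _ ≤ 2 * ENNReal.ofReal ((u x0 - u y) ^ 2) + 2 * ENNReal.ofReal (u x0 ^ 2) := by
          rw [ENNReal.ofReal_add (by positivity) (by positivity)]
          apply add_le_add
          · rw [ENNReal.ofReal_mul (by norm_num)]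
            simp [ENNReal.ofReal_ofNat]
          · rw [ENNReal.ofReal_mul (by norm_num)]
            simp [ENNReal.ofReal_ofNat]
  have hbound : ∫⁻ y in Set.Ioc p q, ENNReal.ofReal (u y ^ 2) ≠ ⊤ := by
    have h2 : ∫⁻ y in Set.Ioc p q, ENNReal.ofReal (u y ^ 2)
        ≤ ∫⁻ y in Set.Ioc p q,
          (2 * ENNReal.ofReal ((u x0 - u y) ^ 2) + 2 * ENNReal.ofReal (u x0 ^ 2)) :=
      lintegral_mono (fun y => hpt y)
    have h3 : ∫⁻ y in Set.Ioc p q,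
        (2 * ENNReal.ofReal ((u x0 - u y) ^ 2) + 2 * ENNReal.ofReal (u x0 ^ 2))
        = 2 * g x0 + (2 * ENNReal.ofReal (u x0 ^ 2)) * volume (Set.Ioc p q) := by
      rw [lintegral_add_left (by
        exact (((measurable_const.sub hu).pow_const 2).ennreal_ofReal).const_mul 2)]
      rw [lintegral_const_mul (f := fun y => ENNReal.ofReal ((u x0 - u y) ^ 2)) _ (((measurable_const.sub hu).pow_const 2).ennreal_ofReal)]
      rw [setLIntegral_const]
    refine ne_top_of_le_ne_top ?_ (h2.trans_eq h3)
    apply ENNReal.add_ne_top.2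
    constructor
    · exact ENNReal.mul_ne_top (by norm_num) hx0.ne
    · apply ENNReal.mul_ne_top
      · exact ENNReal.mul_ne_top (by norm_num) ENNReal.ofReal_ne_top
      · rw [Real.volume_Ioc]; exact ENNReal.ofReal_ne_top
  constructor
  · exact (hu.pow_const 2).aestronglyMeasurable
  · rw [hasFiniteIntegral_iff_ofReal (Filter.Eventually.of_forall (fun y => sq_nonneg _))]
    exact lt_top_iff_ne_top.2 hbound

end Oscillation

section Strip

variable {u : ℝ → ℝ}

lemma exists_delta (hu : Measurable u)
    (hfin : (∫⁻ x, ∫⁻ y, ENNReal.ofReal ((u x - u y) ^ 2 / (x - y) ^ 2)) ≠ ⊤) :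
    ∃ δ : ℝ, 0 < δ ∧ ∀ p q : ℝ, p < q → q - p ≤ δ →
      ∫⁻ x in Set.Ioc p q, ∫⁻ y in Set.Ioc p q,
        ENNReal.ofReal ((u x - u y) ^ 2 / (x - y) ^ 2) ≤ ENNReal.ofReal (1 / 32) := by
  classical
  set F : ℝ → ℝ → ℝ≥0∞ := fun x y => ENNReal.ofReal ((u x - u y) ^ 2 / (x - y) ^ 2) with hF
  have hFum : Measurable (Function.uncurry F) := by
    apply Measurable.ennreal_ofReal
    exact (((hu.comp measurable_fst).sub (hu.comp measurable_snd)).pow_const 2).div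
      ((measurable_fst.sub measurable_snd).pow_const 2)
  set G : ℕ → ℝ → ℝ → ℝ≥0∞ :=
    fun n x y => if |x - y| ≤ 1 / (n + 1) then F x y else 0 with hG
  have hGum : ∀ n, Measurable (Function.uncurry (G n)) := by
    intro n
    have hset : MeasurableSet {z : ℝ × ℝ | |z.1 - z.2| ≤ 1 / (n + 1)} :=
      measurableSet_le (measurable_fst.sub measurable_snd).abs measurable_const
    exact Measurable.ite hset hFum measurable_const
  have hGle : ∀ n x y, G n x y ≤ F x y := by
    intro n x y
    rw [hG]
    dsimp only
    split
    · exact le_refl _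
    · exact zero_le
  have hFdiag : ∀ x : ℝ, F x x = 0 := by
    intro x
    rw [hF]
    simp
  have hGptw : ∀ x y : ℝ, Filter.Tendsto (fun n => G n x y) atTop (nhds 0) := by
    intro x y
    rcases eq_or_ne x y with rfl | hne
    · have : ∀ n, G n x x = 0 := by
        intro n
        rw [hG]
        dsimp only
        rw [hFdiag x]
        split <;> rfl
      simpa [this] using
        (tendsto_const_nhds : Filter.Tendsto (fun _ : ℕ => (0:ℝ≥0∞)) atTop (nhds 0))
    · have hd : 0 < |x - y| := abs_pos.2 (sub_ne_zero.2 hne)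
      obtain ⟨N, hN⟩ := exists_nat_one_div_lt hd
      apply Filter.Tendsto.congr' _ (tendsto_const_nhds (x := (0 : ℝ≥0∞)))
      rw [Filter.EventuallyEq, Filter.eventually_atTop]
      refine ⟨N, fun n hn => ?_⟩
      rw [hG]
      dsimp only
      rw [if_neg]
      push_neg
      calc (1:ℝ) / (n + 1) ≤ 1 / (N + 1) := by
            apply div_le_div_of_nonneg_left (by norm_num) (by positivity)
            exact_mod_cast by omega
        _ < |x - y| := hN
  set f : ℝ → ℝ≥0∞ := fun x => ∫⁻ y, F x y with hf
  have hfmeas : Measurable f := hFum.lintegral_prod_right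
  have hfinn : ∫⁻ x, f x ≠ ⊤ := hfin
  have haef : ∀ᵐ x ∂(volume : Measure ℝ), f x < ⊤ := ae_lt_top hfmeas hfinn
  have hinner_meas : ∀ n, Measurable (fun x => ∫⁻ y, G n x y) :=
    fun n => (hGum n).lintegral_prod_right
  have hptw : ∀ᵐ x ∂(volume : Measure ℝ),
      Filter.Tendsto (fun n => ∫⁻ y, G n x y) atTop (nhds 0) := by
    filter_upwards [haef] with x hx
    have h0 : (0 : ℝ≥0∞) = ∫⁻ _y : ℝ, (0:ℝ≥0∞) := by simp
    rw [h0]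
    apply tendsto_lintegral_of_dominated_convergence (fun y => F x y)
    · intro n
      exact (hGum n).comp measurable_prodMk_left
    · intro n
      exact Filter.Eventually.of_forall (fun y => hGle n x y)
    · exact hx.ne
    · exact Filter.Eventually.of_forall (fun y => hGptw x y)
  have houter : Filter.Tendsto (fun n => ∫⁻ x, ∫⁻ y, G n x y) atTop (nhds 0) := by
    have h0 : (0 : ℝ≥0∞) = ∫⁻ _x : ℝ, (0:ℝ≥0∞) := by simp
    rw [h0]
    apply tendsto_lintegral_of_dominated_convergence f hinner_meas
    · intro n
      exact Filter.Eventually.of_forall (fun x => lintegral_mono (fun y => hGle n x y))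
    · exact hfinn
    · exact hptw
  have hev : ∀ᶠ n : ℕ in atTop, (∫⁻ x, ∫⁻ y, G n x y) < ENNReal.ofReal (1 / 32) :=
    houter.eventually_lt_const (by simp [ENNReal.ofReal_pos])
  obtain ⟨n, hn⟩ := hev.exists
  refine ⟨1 / (n + 1), by positivity, ?_⟩
  intro p q hpq hlen
  have hstep : ∀ x ∈ Set.Ioc p q, ∫⁻ y in Set.Ioc p q, F x y ≤ ∫⁻ y, G n x y := by
    intro x hx
    rw [← lintegral_indicator measurableSet_Ioc]
    apply lintegral_mono
    intro y
    rw [Set.indicator_apply]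
    split_ifs with hy
    · have habs : |x - y| ≤ 1 / (n + 1) := by
        simp only [Set.mem_Ioc] at hx hy
        rw [abs_le]
        constructor <;> nlinarith [hlen, hx.1, hx.2, hy.1, hy.2]
      rw [hG]
      dsimp only
      rw [if_pos habs]
    · exact zero_le
  calc ∫⁻ x in Set.Ioc p q, ∫⁻ y in Set.Ioc p q, F x y
      ≤ ∫⁻ x in Set.Ioc p q, ∫⁻ y, G n x y := setLIntegral_mono' measurableSet_Ioc hstep
    _ ≤ ∫⁻ x, ∫⁻ y, G n x y := setLIntegral_le_lintegral _ _
    _ ≤ ENNReal.ofReal (1 / 32) := hn.le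

end Strip

end ExpAvg

/-- If `u : ℝ → ℝ` is measurable, locally integrable, with finite `H^{1/2}(ℝ)` seminorm,
then there are `δ > 0` and `C ≥ 1` such that on every interval `I` with `0 < |I| ≤ δ`,
`exp(u_I) ≤ (1/|I|)∫_I e^u dx ≤ C exp(u_I)`. -/
theorem exp_average_comparison_of_hHalf
    (u : ℝ → ℝ) (hmeas : Measurable u) (hloc : LocallyIntegrable u volume)
    (hfin : hHalfSeminormSq u < ⊤) :
    ∃ δ > (0:ℝ), ∃ C : ℝ, 1 ≤ C ∧ ∀ a b : ℝ, a < b → b - a ≤ δ →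
      (Real.exp ((1 / (b - a)) * ∫ x in Set.Ioc a b, u x)
          ≤ (1 / (b - a)) * ∫ x in Set.Ioc a b, Real.exp (u x)) ∧
      ((1 / (b - a)) * ∫ x in Set.Ioc a b, Real.exp (u x)
          ≤ C * Real.exp ((1 / (b - a)) * ∫ x in Set.Ioc a b, u x)) := by
  classical
  have hT : (∫⁻ x, ∫⁻ y, ENNReal.ofReal ((u x - u y) ^ 2 / (x - y) ^ 2)) ≠ ⊤ := by
    intro hT
    rw [hHalfSeminormSq, hT, ENNReal.mul_top] at hfin
    · exact absurd hfin (lt_irrefl _)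
    · simp only [ne_eq, ENNReal.ofReal_eq_zero, not_le]
      have := Real.pi_pos
      positivity
  obtain ⟨δ, hδ, hstrip⟩ := ExpAvg.exists_delta hmeas hT
  refine ⟨δ, hδ, 20, by norm_num, ?_⟩
  intro a b hab hlen
  have hL : 0 < b - a := by linarith
  have hb : a + (b - a) = b := by ring
  have hu1 : IntegrableOn u (Set.Ioc a b) :=
    (hloc.integrableOn_isCompact isCompact_Icc).mono_set Set.Ioc_subset_Icc_self
  have hu2 : IntegrableOn (fun x => u x ^ 2) (Set.Ioc a b) :=
    ExpAvg.sq_integrable hmeas hab (hstrip a b hab hlen)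
  have hu1' : IntegrableOn u (Set.Ioc a (a + (b - a))) := by rw [hb]; exact hu1
  have hu2' : IntegrableOn (fun x => u x ^ 2) (Set.Ioc a (a + (b - a))) := by
    rw [hb]; exact hu2
  have hosc : ∀ n i, i + 1 ≤ 2 ^ n →
      ∫ x in ExpAvg.D a (b - a) n i, (u x - ExpAvg.c u a (b - a) n i) ^ 2
        ≤ 1 / 64 * ((b - a) / 2 ^ n) := by
    intro n i hi
    have h2 : (0:ℝ) < 2 ^ n := by positivity
    have hpos : (0:ℝ) < (b - a) / 2 ^ n := by positivity
    set p' := a + (i : ℝ) * ((b - a) / 2 ^ n) with hp'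
    set q' := a + ((i : ℝ) + 1) * ((b - a) / 2 ^ n) with hq'
    have hpq : p' < q' := by
      rw [hp', hq']
      nlinarith [hpos]
    have hqp : q' - p' = (b - a) / 2 ^ n := by rw [hp', hq']; ring
    have hone : (1:ℝ) ≤ 2 ^ n := one_le_pow₀ (by norm_num)
    have hlen' : q' - p' ≤ δ := by
      rw [hqp]
      have h3 : (b - a) / 2 ^ n ≤ b - a := by
        rw [div_le_iff₀ h2]
        nlinarith [hL, hone]
      linarith [hlen]
    have hker := hstrip p' q' hpq hlen'
    have hDset : ExpAvg.D a (b - a) n i = Set.Ioc p' q' := rfl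
    have hsub : Set.Ioc p' q' ⊆ Set.Ioc a b := by
      rw [← hDset]
      exact (ExpAvg.D_subset_base a (b - a) hL hi).trans (by rw [hb])
    have hres := ExpAvg.osc_from_kernel hmeas hpq (hu1.mono_set hsub)
      (hu2.mono_set hsub) hker
    rw [hqp] at hres
    have hceq : ExpAvg.c u a (b - a) n i
        = (∫ y in Set.Ioc p' q', u y) / ((b - a) / 2 ^ n) := rfl
    rw [hDset, hceq]
    exact hres
  have hKey := ExpAvg.interval_bounds hmeas hL hloc hu1' hu2' hosc
  rw [hb] at hKey
  exact hKey
end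

section
/- Let a, b, c, d ∈ ℝ with ad − bc > 0 and let m(x) = (ax + b)/(cx + d), a Möbius transformation preserving ℝ. Then for every Lebesgue measurable u : ℝ → ℝ, the H^{1/2}(ℝ) seminorm is invariant under precomposition with m: ∫_ℝ∫_ℝ (u(m(x)) − u(m(y)))²/(x − y)² dx dy = ∫_ℝ∫_ℝ (u(x) − u(y))²/(x − y)² dx dy, as an identity in [0,∞] (the integrals taken over the points where m is defined; if c ≠ 0 the single point x = −d/c is removed, which does not affect the integrals). -/
open MeasureTheory Set
open scoped ENNReal

private lemma mobius_subst {a b c d : ℝ} (h : 0 < a * d - b * c) (g : ℝ → ℝ≥0∞) :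
    ∫⁻ x, ENNReal.ofReal ((a * d - b * c) / (c * x + d) ^ 2)
        * g ((a * x + b) / (c * x + d)) = ∫⁻ x, g x := by
  have hΔ0 : a * d - b * c ≠ 0 := ne_of_gt h
  set s : Set ℝ := {x | c * x + d ≠ 0} with hs
  set t : Set ℝ := {y | a - c * y ≠ 0} with ht
  have hsm : MeasurableSet s :=
    ((continuous_const.mul continuous_id).add continuous_const).measurable
      (measurableSet_singleton (0:ℝ)).compl
  have htm : MeasurableSet t :=
    (continuous_const.sub (continuous_const.mul continuous_id)).measurable
      (measurableSet_singleton (0:ℝ)).compl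
  have hsc : volume sᶜ = 0 := by
    apply Set.Subsingleton.measure_zero _ volume
    intro x hx y hy
    simp only [hs, mem_compl_iff, mem_setOf_eq, not_not] at hx hy
    rcases eq_or_ne c 0 with hc | hc
    · subst hc; simp at hx; simp [hx] at h
    · have : c * (x - y) = 0 := by linarith [hx, hy]
      rcases mul_eq_zero.1 this with h' | h'
      · exact absurd h' hc
      · linarith [sub_eq_zero.1 h']
  have htc : volume tᶜ = 0 := by
    apply Set.Subsingleton.measure_zero _ volume
    intro x hx y hy
    simp only [ht, mem_compl_iff, mem_setOf_eq, not_not] at hx hy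
    rcases eq_or_ne c 0 with hc | hc
    · subst hc; simp at hx; simp [hx] at h
    · have : c * (x - y) = 0 := by linarith [hx, hy]
      rcases mul_eq_zero.1 this with h' | h'
      · exact absurd h' hc
      · linarith [sub_eq_zero.1 h']
  have himg : (fun x => (a * x + b) / (c * x + d)) '' s = t := by
    ext y
    constructor
    · rintro ⟨x, hx, rfl⟩
      have hx' : c * x + d ≠ 0 := hx
      have : a - c * ((a * x + b) / (c * x + d)) = (a * d - b * c) / (c * x + d) := by
        field_simp; ring
      simp only [ht, mem_setOf_eq, this]
      exact div_ne_zero hΔ0 hx'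
    · intro hy
      have hy' : a - c * y ≠ 0 := hy
      refine ⟨(d * y - b) / (a - c * y), ?_, ?_⟩
      · have hden : c * ((d * y - b) / (a - c * y)) + d = (a * d - b * c) / (a - c * y) := by
          field_simp; ring
        simp only [hs, mem_setOf_eq, hden]
        exact div_ne_zero hΔ0 hy'
      · have hden : c * ((d * y - b) / (a - c * y)) + d = (a * d - b * c) / (a - c * y) := by
          field_simp; ring
        have hnum : a * ((d * y - b) / (a - c * y)) + b = (a * d - b * c) * y / (a - c * y) := by
          rw [eq_div_iff hy', add_mul, mul_assoc, div_mul_cancel₀ _ hy']; ring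
        simp only [hnum, hden]
        rw [div_div_div_eq]
        field_simp
  have hinj : InjOn (fun x => (a * x + b) / (c * x + d)) s := by
    intro x hx y hy hxy
    have hx' : c * x + d ≠ 0 := hx
    have hy' : c * y + d ≠ 0 := hy
    simp only at hxy
    rw [div_eq_div_iff hx' hy'] at hxy
    have : (a * d - b * c) * (x - y) = 0 := by linear_combination hxy
    rcases mul_eq_zero.1 this with h' | h'
    · exact absurd h' hΔ0
    · linarith [sub_eq_zero.1 h']
  have hderiv : ∀ x ∈ s, HasFDerivWithinAt (fun x => (a * x + b) / (c * x + d))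
      ((1 : ℝ →L[ℝ] ℝ).smulRight ((a * d - b * c) / (c * x + d) ^ 2)) s x := by
    intro x hx
    have hx' : c * x + d ≠ 0 := hx
    have h1 : HasDerivAt (fun x : ℝ => a * x + b) a x := by
      simpa using ((hasDerivAt_id x).const_mul a).add_const b
    have h2 : HasDerivAt (fun x : ℝ => c * x + d) c x := by
      simpa using ((hasDerivAt_id x).const_mul c).add_const d
    have h3 := h1.div h2 hx'
    have heq : (a * (c * x + d) - (a * x + b) * c) / (c * x + d) ^ 2
        = (a * d - b * c) / (c * x + d) ^ 2 := by ring_nf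
    rw [heq] at h3
    exact h3.hasDerivWithinAt.hasFDerivWithinAt
  have habs : ∀ x : ℝ, |(a * d - b * c) / (c * x + d) ^ 2| = (a * d - b * c) / (c * x + d) ^ 2 :=
    fun x => abs_of_nonneg (div_nonneg h.le (sq_nonneg _))
  calc ∫⁻ x, ENNReal.ofReal ((a * d - b * c) / (c * x + d) ^ 2)
        * g ((a * x + b) / (c * x + d))
      = ∫⁻ x in s, ENNReal.ofReal ((a * d - b * c) / (c * x + d) ^ 2)
        * g ((a * x + b) / (c * x + d)) := by
        rw [← lintegral_add_compl _ hsm, setLIntegral_measure_zero _ _ hsc, add_zero]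
    _ = ∫⁻ x in s, ENNReal.ofReal
          |((1 : ℝ →L[ℝ] ℝ).smulRight ((a * d - b * c) / (c * x + d) ^ 2)).det|
        * g ((a * x + b) / (c * x + d)) := by
        simp only [ContinuousLinearMap.smulRight_one_eq_toSpanSingleton, ContinuousLinearMap.det_toSpanSingleton, habs]
    _ = ∫⁻ x in (fun x => (a * x + b) / (c * x + d)) '' s, g x :=
        (lintegral_image_eq_lintegral_abs_det_fderiv_mul volume hsm hderiv hinj g).symm
    _ = ∫⁻ x in t, g x := by rw [himg]
    _ = ∫⁻ x, g x := by
        conv_rhs => rw [← lintegral_add_compl g htm]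
        rw [setLIntegral_measure_zero _ _ htc, add_zero]

/-- **Möbius invariance of the `H^{1/2}(ℝ)` seminorm.**  If `m(x) = (ax+b)/(cx+d)` with
`ad − bc > 0`, then for every measurable `u : ℝ → ℝ`,
`∫∫ (u(m(x)) − u(m(y)))²/(x−y)² dx dy = ∫∫ (u(x) − u(y))²/(x−y)² dx dy` in `[0,∞]`. -/
theorem hHalf_seminorm_mobius_invariant
    (a b c d : ℝ) (h : 0 < a * d - b * c) (u : ℝ → ℝ) (hu : Measurable u) :
    (∫⁻ x, ∫⁻ y, ENNReal.ofReal
        ((u ((a * x + b) / (c * x + d)) - u ((a * y + b) / (c * y + d))) ^ 2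
          / (x - y) ^ 2))
      = ∫⁻ x, ∫⁻ y, ENNReal.ofReal ((u x - u y) ^ 2 / (x - y) ^ 2) := by
  have hΔ0 : a * d - b * c ≠ 0 := ne_of_gt h
  have hsnull : volume {x : ℝ | c * x + d = 0} = 0 := by
    apply Set.Subsingleton.measure_zero _ volume
    intro x hx y hy
    simp only [mem_setOf_eq] at hx hy
    rcases eq_or_ne c 0 with hc | hc
    · subst hc; simp at hx; simp [hx] at h
    · have : c * (x - y) = 0 := by linarith
      rcases mul_eq_zero.1 this with h' | h'
      · exact absurd h' hc
      · linarith [sub_eq_zero.1 h']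
  have hae : ∀ᵐ x : ℝ, c * x + d ≠ 0 := by
    rw [ae_iff]; simpa using hsnull
  -- pointwise identity
  have hpt : ∀ x y : ℝ, c * x + d ≠ 0 → c * y + d ≠ 0 →
      (u ((a * x + b) / (c * x + d)) - u ((a * y + b) / (c * y + d))) ^ 2 / (x - y) ^ 2
      = ((a * d - b * c) / (c * x + d) ^ 2) * (((a * d - b * c) / (c * y + d) ^ 2) *
        ((u ((a * x + b) / (c * x + d)) - u ((a * y + b) / (c * y + d))) ^ 2
          / ((a * x + b) / (c * x + d) - (a * y + b) / (c * y + d)) ^ 2)) := by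
    intro x y hx hy
    rcases eq_or_ne x y with rfl | hxy
    · simp
    · have hm : (a * x + b) / (c * x + d) - (a * y + b) / (c * y + d)
          = (a * d - b * c) * (x - y) / ((c * x + d) * (c * y + d)) := by
        rw [div_sub_div _ _ hx hy]; ring
      rw [hm]
      have hxy' : x - y ≠ 0 := sub_ne_zero.2 hxy
      have hx2 : x * c + d ≠ 0 := by rwa [mul_comm] at hx
      field_simp
  -- key inner integral identity
  have key : ∀ x : ℝ, c * x + d ≠ 0 →
      (∫⁻ y, ENNReal.ofReal
        ((u ((a * x + b) / (c * x + d)) - u ((a * y + b) / (c * y + d))) ^ 2 / (x - y) ^ 2))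
      = ENNReal.ofReal ((a * d - b * c) / (c * x + d) ^ 2) *
        ∫⁻ y, ENNReal.ofReal
          ((u ((a * x + b) / (c * x + d)) - u y) ^ 2 / ((a * x + b) / (c * x + d) - y) ^ 2) := by
    intro x hx
    have step1 : (∫⁻ y, ENNReal.ofReal
        ((u ((a * x + b) / (c * x + d)) - u ((a * y + b) / (c * y + d))) ^ 2 / (x - y) ^ 2))
        = ∫⁻ y, ENNReal.ofReal ((a * d - b * c) / (c * x + d) ^ 2) *
            (ENNReal.ofReal ((a * d - b * c) / (c * y + d) ^ 2) *
              ENNReal.ofReal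
                ((u ((a * x + b) / (c * x + d)) - u ((a * y + b) / (c * y + d))) ^ 2
                  / ((a * x + b) / (c * x + d) - (a * y + b) / (c * y + d)) ^ 2)) := by
      apply lintegral_congr_ae
      filter_upwards [hae] with y hy
      rw [hpt x y hx hy, ENNReal.ofReal_mul (div_nonneg h.le (sq_nonneg _)),
        ENNReal.ofReal_mul (div_nonneg h.le (sq_nonneg _))]
    rw [step1, lintegral_const_mul' _ _ ENNReal.ofReal_ne_top]
    congr 1
    exact mobius_subst h (fun z => ENNReal.ofReal
      ((u ((a * x + b) / (c * x + d)) - u z) ^ 2 / ((a * x + b) / (c * x + d) - z) ^ 2))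
  have step2 : (∫⁻ x, ∫⁻ y, ENNReal.ofReal
        ((u ((a * x + b) / (c * x + d)) - u ((a * y + b) / (c * y + d))) ^ 2 / (x - y) ^ 2))
      = ∫⁻ x, ENNReal.ofReal ((a * d - b * c) / (c * x + d) ^ 2) *
          (fun t => ∫⁻ y, ENNReal.ofReal ((u t - u y) ^ 2 / (t - y) ^ 2))
            ((a * x + b) / (c * x + d)) := by
    apply lintegral_congr_ae
    filter_upwards [hae] with x hx
    exact key x hx
  rw [step2]
  exact mobius_subst h (fun t => ∫⁻ y, ENNReal.ofReal ((u t - u y) ^ 2 / (t - y) ^ 2))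
end
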